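/- arXiv:2601.11056 — 9 statements merged into one kernel-verified Lean document; each statement's English description precedes it below -/
import Mathlib

section
/- Let E be a Banach space, X a Banach lattice, and T : E → X a nonzero bounded linear operator. (i) If (Y, U, V) is a Class C factorization of T, then V(B_Y) is a closed, bounded, convex, solid subset of X that contains c·T(B_E) for some c > 0. (ii) Conversely, for every closed, bounded, convex, solid subset B of X satisfying c·T(B_E) ⊆ B for some c > 0, there exists a Class C factorization (Y, U, V) of T with V(B_Y) = B. (iii) If (Y₁, U₁, V₁) and (Y₂, U₂, V₂) are Class C factorizations of T with V₁(B_{Y₁}) = V₂(B_{Y₂}), then there exists a surjective lattice isometry ι : Y₁ → Y₂ with U₂ = ι∘U₁ and V₁ = V₂∘ι. -/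
/-- Bundled Banach lattice: a complete normed lattice (solid norm, order-compatible
vector space structure over `ℝ`). -/
structure BanachLat where
  carrier : Type
  [nag : NormedAddCommGroup carrier]
  [lat : Lattice carrier]
  [oam : IsOrderedAddMonoid carrier]
  [hsn : HasSolidNorm carrier]
  [nsp : NormedSpace ℝ carrier]
  [osm : PosSMulStrictMono ℝ carrier]
  [cs : CompleteSpace carrier]

attribute [instance] BanachLat.nag BanachLat.lat BanachLat.oam BanachLat.hsn BanachLat.nsp BanachLat.osm BanachLat.cs

instance : CoeSort BanachLat Type := ⟨BanachLat.carrier⟩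

noncomputable section

/-- A map between lattices is a lattice homomorphism if it preserves binary suprema. -/
def IsLatHom {X Y : Type*} [Lattice X] [Lattice Y] (f : X → Y) : Prop :=
  ∀ a b : X, f (a ⊔ b) = f a ⊔ f b

/-- A map is interval preserving if it maps order intervals `[0, x]` onto `[0, f x]`. -/
def IsIntervalPreserving {X Y : Type*} [Lattice X] [Zero X] [Lattice Y] [Zero Y]
    (f : X → Y) : Prop :=
  ∀ x : X, 0 ≤ x → f '' Set.Icc 0 x = Set.Icc 0 (f x)

/-- An operator `V : Y → X` between Banach lattices is of Class 𝒞 if it is an injective,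
interval preserving lattice homomorphism whose image of the closed unit ball is closed. -/
def IsClassC {Y X : Type*} [NormedAddCommGroup Y] [Lattice Y] [IsOrderedAddMonoid Y] [HasSolidNorm Y] [NormedSpace ℝ Y]
    [NormedAddCommGroup X] [Lattice X] [IsOrderedAddMonoid X] [HasSolidNorm X] [NormedSpace ℝ X] (V : Y →L[ℝ] X) : Prop :=
  Function.Injective ⇑V ∧ IsLatHom ⇑V ∧ IsIntervalPreserving ⇑V ∧
    IsClosed (⇑V '' Metric.closedBall 0 1)

/-- A subset of a Banach lattice is solid if `|u| ≤ |v|` and `v ∈ s` imply `u ∈ s`. -/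
def IsSolid {X : Type*} [Lattice X] [AddCommGroup X] (s : Set X) : Prop :=
  ∀ ⦃u v : X⦄, |u| ≤ |v| → v ∈ s → u ∈ s

/-!
For (i), `V(B_Y)` is the image of the closed, convex, solid unit ball under an interval
preserving lattice homomorphism, so it is solid, and it contains `(‖U‖ + 1)⁻¹ • T(B_E)`.

For (ii), the ideal `I_B = ⋃_{r > 0} r • B` generated by `B`, normed by the gauge of `B`, is a
normed lattice whose closed unit ball is `B` (because `B` is closed). Its inclusion into `X` is
an interval preserving lattice embedding, completeness of `I_B` follows from `B` being closed in
the complete space `X`, and `c • T(B_E) ⊆ B` makes `T` factor through `I_B`.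

For (iii), injective operators with the same image of the unit ball have the same range, and
the induced linear bijection `Y₁ ≃ Y₂` is isometric because the norm of `y` is the gauge of
`V(B_Y)` at `V y`.
-/

open Metric Set Pointwise Filter Topology

section LatticeModule

variable {X : Type*} [Lattice X] [AddCommGroup X] [IsOrderedAddMonoid X] [Module ℝ X]
  [PosSMulStrictMono ℝ X]

theorem abs_smul_eq_abs_smul_abs (c : ℝ) (x : X) : |c • x| = |c| • |x| := by
  have of_pos : ∀ c : ℝ, 0 < c → ∀ x : X, |c • x| = c • |x| := fun c hc x => by
    rw [abs, abs, ← smul_neg]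
    exact ((OrderIso.smulRight (β := X) hc).map_sup x (-x)).symm
  rcases lt_trichotomy c 0 with hc | rfl | hc
  · rw [← neg_smul_neg, of_pos _ (neg_pos.2 hc), abs_neg, abs_of_neg hc]
  · simp
  · rw [of_pos c hc, abs_of_pos hc]

theorem IsSolid.balanced {B : Set X} (hB : IsSolid B) : Balanced ℝ B := by
  rintro a ha _ ⟨x, hx, rfl⟩
  refine hB ?_ hx
  rw [abs_smul_eq_abs_smul_abs]
  exact smul_le_of_le_one_left (abs_nonneg x) (by simpa using ha)

theorem IsSolid.smul {B : Set X} (hB : IsSolid B) {c : ℝ} (hc : c ≠ 0) : IsSolid (c • B) := by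
  intro u v huv hv
  rw [mem_smul_set_iff_inv_smul_mem₀ hc] at hv ⊢
  refine hB ?_ hv
  rw [abs_smul_eq_abs_smul_abs, abs_smul_eq_abs_smul_abs]
  exact smul_le_smul_of_nonneg_left huv (abs_nonneg _)

end LatticeModule

theorem IsLatHom.map_abs {X Y : Type*} [Lattice X] [AddGroup X] [Lattice Y] [AddGroup Y]
    {f : Y →+ X} (hf : IsLatHom f) (y : Y) : f |y| = |f y| := by
  rw [abs, abs, hf, map_neg]

section LatticeHom

variable {X Y : Type*} [Lattice X] [AddCommGroup X] [IsOrderedAddMonoid X]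
  [Lattice Y] [AddCommGroup Y] [IsOrderedAddMonoid Y]

theorem abs_sub_le_of_mem_Icc {a b w : Y} (ha : a ∈ Icc 0 w) (hb : b ∈ Icc 0 w) :
    |a - b| ≤ w := by
  rw [abs_le', neg_sub]
  exact ⟨(sub_le_self a hb.1).trans ha.2, (sub_le_self b ha.1).trans hb.2⟩

theorem IsSolid.image {f : Y →+ X} (hlat : IsLatHom f) (hip : IsIntervalPreserving f)
    {s : Set Y} (hs : IsSolid s) : IsSolid (f '' s) := by
  rintro u _ huy ⟨y, hy, rfl⟩
  rw [← hlat.map_abs] at huy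
  have hparts : u⁺ ≤ |u| ∧ u⁻ ≤ |u| := by
    rw [← posPart_add_negPart u]
    exact ⟨le_add_of_nonneg_right (negPart_nonneg u), le_add_of_nonneg_left (posPart_nonneg u)⟩
  have hpos : u⁺ ∈ f '' Icc 0 |y| :=
    hip _ (abs_nonneg y) ▸ ⟨posPart_nonneg u, hparts.1.trans huy⟩
  have hneg : u⁻ ∈ f '' Icc 0 |y| :=
    hip _ (abs_nonneg y) ▸ ⟨negPart_nonneg u, hparts.2.trans huy⟩
  obtain ⟨a, ha, hfa⟩ := hpos
  obtain ⟨b, hb, hfb⟩ := hneg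
  exact ⟨a - b, hs (abs_sub_le_of_mem_Icc ha hb) hy,
    by rw [map_sub, hfa, hfb, posPart_sub_negPart]⟩

end LatticeHom

theorem isSolid_closedBall {Y : Type*} [NormedAddCommGroup Y] [Lattice Y] [HasSolidNorm Y]
    (r : ℝ) : IsSolid (closedBall (0 : Y) r) := fun _ _ h hv => by
  rw [mem_closedBall_zero_iff] at hv ⊢
  exact (norm_le_norm_of_abs_le_abs h).trans hv

section Gauge

variable {E : Type*} [AddCommGroup E] [Module ℝ E] {s : Set E}

theorem gauge_le_gauge_of_forall_mem_smul (hs : Absorbent ℝ s) {x y : E}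
    (h : ∀ r : ℝ, 0 < r → y ∈ r • s → x ∈ r • s) : gauge s x ≤ gauge s y :=
  csInf_le_csInf ⟨0, fun _ hr => hr.1.le⟩ hs.gauge_set_nonempty fun r hr => ⟨hr.1, h r hr.1 hr.2⟩

theorem gauge_le_one_iff_mem_of_isClosed [TopologicalSpace E] [ContinuousSMul ℝ E]
    (hc : Convex ℝ s) (h₀ : (0 : E) ∈ s) (hs : Absorbent ℝ s) (hcl : IsClosed s) {x : E} :
    gauge s x ≤ 1 ↔ x ∈ s := by
  refine ⟨fun hx => ?_, gauge_le_one_of_mem⟩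
  have hmem : ∀ r > (1 : ℝ), r⁻¹ • x ∈ s := fun r hr => by
    have := (setOfPred_gauge_le_eq hc h₀ hs zero_le_one).le hx
    simp only [mem_iInter] at this
    exact (mem_smul_set_iff_inv_smul_mem₀ (by positivity) _ _).1 (this r hr)
  have hlim : Tendsto (fun r : ℝ => r⁻¹ • x) (𝓝[>] 1) (𝓝 x) := by
    have : ContinuousAt (fun r : ℝ => r⁻¹ • x) 1 :=
      (continuousAt_inv₀ one_ne_zero).smul continuousAt_const
    simpa using this.tendsto.mono_left nhdsWithin_le_nhds
  exact hcl.mem_of_tendsto hlim (eventually_nhdsWithin_of_forall hmem)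

end Gauge

section ImageOfBall

variable {Y X F : Type*} [NormedAddCommGroup Y] [NormedSpace ℝ Y]
  [NormedAddCommGroup X] [NormedSpace ℝ X] [FunLike F Y X] [LinearMapClass F ℝ Y X]

theorem image_closedBall_eq_smul (V : F) {r : ℝ} (hr : 0 ≤ r) :
    V '' closedBall 0 r = r • V '' closedBall 0 1 := by
  rw [← image_smul_set, _root_.smul_closedBall _ _ zero_le_one, smul_zero,
    Real.norm_of_nonneg hr, mul_one]

theorem gauge_image_of_injective {V : F} (hV : Function.Injective V) (s : Set Y) (y : Y) :
    gauge (V '' s) (V y) = gauge s y := by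
  simp only [gauge_def, ← image_smul_set, hV.mem_set_image]

theorem gauge_image_closedBall {V : F} (hV : Function.Injective V) (y : Y) :
    gauge (V '' closedBall 0 1) (V y) = ‖y‖ := by
  rw [gauge_image_of_injective hV, gauge_closedBall zero_le_one, div_one]

theorem range_subset_of_image_closedBall_subset {Y₂ F₂ : Type*} [NormedAddCommGroup Y₂]
    [NormedSpace ℝ Y₂] [FunLike F₂ Y₂ X] [LinearMapClass F₂ ℝ Y₂ X] (V₁ : F) (V₂ : F₂)
    (h : V₁ '' closedBall 0 1 ⊆ V₂ '' closedBall 0 1) : range V₁ ⊆ range V₂ := by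
  rintro _ ⟨y, rfl⟩
  have hy : y ∈ closedBall (0 : Y) ‖y‖ := mem_closedBall_zero_iff.2 le_rfl
  obtain ⟨z, -, hz⟩ := ((image_closedBall_eq_smul V₁ (norm_nonneg y)).trans_subset
    ((smul_set_mono h).trans (image_closedBall_eq_smul V₂ (norm_nonneg y)).symm.subset))
    (mem_image_of_mem V₁ hy)
  exact ⟨z, hz⟩

end ImageOfBall

theorem completeSpace_of_isClosed_image_closedBall {Y X : Type*} [NormedAddCommGroup Y]
    [NormedSpace ℝ Y] [NormedAddCommGroup X] [NormedSpace ℝ X] [CompleteSpace X] (V : Y →L[ℝ] X)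
    (hV : Function.Injective V) (hcl : IsClosed (V '' closedBall 0 1)) : CompleteSpace Y := by
  refine Metric.complete_of_cauchySeq_tendsto fun u hu => ?_
  obtain ⟨x, hx⟩ := cauchySeq_tendsto_of_complete (V.uniformContinuous.comp_cauchySeq hu)
  have eventually_near : ∀ ε > 0, ∃ N, ∀ n ≥ N, V (u n) - x ∈ V '' closedBall 0 ε := by
    intro ε hε
    have hclε : IsClosed (V '' closedBall 0 ε) := by
      rw [image_closedBall_eq_smul V hε.le]
      exact hcl.smul_of_ne_zero hε.ne'
    obtain ⟨N, hN⟩ := Metric.cauchySeq_iff.1 hu ε hε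
    refine ⟨N, fun n hn => hclε.mem_of_tendsto (tendsto_const_nhds.sub hx) ?_⟩
    filter_upwards [eventually_ge_atTop N] with m hm
    exact ⟨u n - u m, mem_closedBall_zero_iff.2 (dist_eq_norm (u n) (u m) ▸ (hN n hn m hm).le),
      map_sub V _ _⟩
  obtain ⟨N, hN⟩ := eventually_near 1 one_pos
  obtain ⟨w, -, hw⟩ := hN N le_rfl
  refine ⟨u N - w, Metric.tendsto_atTop.2 fun ε hε => ?_⟩
  obtain ⟨M, hM⟩ := eventually_near (ε / 2) (half_pos hε)
  refine ⟨M, fun n hn => ?_⟩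
  obtain ⟨v, hv, hVv⟩ := hM n hn
  have : v = u n - (u N - w) := hV (by rw [hVv, map_sub, map_sub, hw, sub_sub_cancel])
  rw [dist_eq_norm, ← this]
  exact (mem_closedBall_zero_iff.1 hv).trans_lt (half_lt_self hε)

theorem exists_linearIsometryEquiv_of_image_closedBall_eq {Y₁ Y₂ X : Type*}
    [NormedAddCommGroup Y₁] [NormedSpace ℝ Y₁] [NormedAddCommGroup Y₂] [NormedSpace ℝ Y₂]
    [NormedAddCommGroup X] [NormedSpace ℝ X] {V₁ : Y₁ →ₗ[ℝ] X} {V₂ : Y₂ →ₗ[ℝ] X}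
    (hV₁ : Function.Injective V₁) (hV₂ : Function.Injective V₂)
    (h : V₁ '' closedBall 0 1 = V₂ '' closedBall 0 1) :
    ∃ ι : Y₁ ≃ₗᵢ[ℝ] Y₂, ∀ y, V₂ (ι y) = V₁ y := by
  have hrange : LinearMap.range V₁ = LinearMap.range V₂ := SetLike.coe_injective <|
    (range_subset_of_image_closedBall_subset V₁ V₂ h.subset).antisymm
      (range_subset_of_image_closedBall_subset V₂ V₁ h.symm.subset)
  let e : Y₁ ≃ₗ[ℝ] Y₂ := (LinearEquiv.ofInjective V₁ hV₁).trans
    ((LinearEquiv.ofEq _ _ hrange).trans (LinearEquiv.ofInjective V₂ hV₂).symm)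
  have he : ∀ y, V₂ (e y) = V₁ y := fun y =>
    congrArg Subtype.val ((LinearEquiv.ofInjective V₂ hV₂).apply_symm_apply
      (LinearEquiv.ofEq _ _ hrange (LinearEquiv.ofInjective V₁ hV₁ y)))
  refine ⟨{ toLinearEquiv := e, norm_map' := fun y => ?_ }, he⟩
  rw [← gauge_image_closedBall hV₂, ← gauge_image_closedBall hV₁, h]
  exact congrArg _ (he y)

section Operators

variable {E Y X : Type*} [NormedAddCommGroup E] [NormedSpace ℝ E]
  [NormedAddCommGroup Y] [NormedSpace ℝ Y] [NormedAddCommGroup X] [NormedSpace ℝ X]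

theorem smul_apply_mem_image_closedBall (U : E →L[ℝ] Y) (V : Y →L[ℝ] X) {e : E}
    (he : e ∈ closedBall 0 1) : (‖U‖ + 1)⁻¹ • V (U e) ∈ V '' closedBall 0 1 := by
  refine ⟨(‖U‖ + 1)⁻¹ • U e, mem_closedBall_zero_iff.2 ?_, map_smul V _ _⟩
  rw [norm_smul, Real.norm_of_nonneg (by positivity), inv_mul_le_one₀ (by positivity)]
  calc ‖U e‖ ≤ ‖U‖ * ‖e‖ := U.le_opNorm e
    _ ≤ ‖U‖ * 1 := by gcongr; exact mem_closedBall_zero_iff.1 he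
    _ ≤ ‖U‖ + 1 := by linarith

theorem apply_mem_smul_of_forall_mem_closedBall (T : E →L[ℝ] X) {B : Set X} {c : ℝ} (hc : 0 < c)
    (hcT : ∀ e ∈ closedBall (0 : E) 1, c • T e ∈ B) {e : E} (he : e ≠ 0) :
    T e ∈ (c⁻¹ * ‖e‖) • B := by
  have he' : 0 < ‖e‖ := norm_pos_iff.2 he
  rw [mem_smul_set_iff_inv_smul_mem₀ (by positivity)]
  convert hcT (‖e‖⁻¹ • e) (by simp [norm_smul, he'.ne']) using 1
  rw [map_smul, smul_smul, mul_inv, inv_inv]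

end Operators

section ClassC

variable {X : Type} [NormedAddCommGroup X] [Lattice X] [IsOrderedAddMonoid X] [HasSolidNorm X]
  [NormedSpace ℝ X]
  {Y₁ : Type} [NormedAddCommGroup Y₁] [Lattice Y₁] [IsOrderedAddMonoid Y₁] [HasSolidNorm Y₁]
  [NormedSpace ℝ Y₁]
  {Y₂ : Type} [NormedAddCommGroup Y₂] [Lattice Y₂] [IsOrderedAddMonoid Y₂] [HasSolidNorm Y₂]
  [NormedSpace ℝ Y₂]

theorem IsClassC.isSolid_image_closedBall {V : Y₁ →L[ℝ] X} (hV : IsClassC V) :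
    IsSolid (V '' closedBall 0 1) :=
  (isSolid_closedBall 1).image (f := V.toLinearMap.toAddMonoidHom) hV.2.1 hV.2.2.1

theorem IsClassC.exists_isLatHom_isometry_of_image_closedBall_eq {V₁ : Y₁ →L[ℝ] X}
    {V₂ : Y₂ →L[ℝ] X} (h₁ : IsClassC V₁) (h₂ : IsClassC V₂)
    (h : V₁ '' closedBall 0 1 = V₂ '' closedBall 0 1) :
    ∃ ι : Y₁ ≃ₗᵢ[ℝ] Y₂, IsLatHom ι ∧ ∀ y, V₂ (ι y) = V₁ y := by
  obtain ⟨ι, hι⟩ : ∃ ι : Y₁ ≃ₗᵢ[ℝ] Y₂, ∀ y, V₂ (ι y) = V₁ y :=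
    exists_linearIsometryEquiv_of_image_closedBall_eq
      (V₁ := (V₁ : Y₁ →ₗ[ℝ] X)) (V₂ := (V₂ : Y₂ →ₗ[ℝ] X)) h₁.1 h₂.1 h
  refine ⟨ι, fun a b => h₂.1 ?_, hι⟩
  rw [h₂.2.1, hι, hι, hι, h₁.2.1]

end ClassC

structure IsClosedBoundedConvexSolid {X : Type*} [NormedAddCommGroup X] [Lattice X]
    [NormedSpace ℝ X] (B : Set X) : Prop where
  isClosed : IsClosed B
  isBounded : Bornology.IsBounded B
  convex : Convex ℝ B
  isSolid : IsSolid B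
  zero_mem : (0 : X) ∈ B

namespace IsClosedBoundedConvexSolid

variable {X : Type} [NormedAddCommGroup X] [Lattice X] [IsOrderedAddMonoid X] [NormedSpace ℝ X]
  [PosSMulStrictMono ℝ X] {B : Set X}

section Ideal

variable (hB : IsClosedBoundedConvexSolid B)

def ideal : Submodule ℝ X where
  carrier := {x | ∃ r : ℝ, 0 < r ∧ x ∈ r • B}
  zero_mem' := ⟨1, one_pos, zero_mem_smul_set hB.zero_mem⟩
  add_mem' := by
    rintro x y ⟨r, hr, hx⟩ ⟨s, hs, hy⟩
    exact ⟨r + s, add_pos hr hs, hB.convex.add_smul hr.le hs.le ▸ add_mem_add hx hy⟩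
  smul_mem' := by
    rintro c x ⟨r, hr, hx⟩
    -- the radius `|c| * r` itself would not be positive when `c = 0`
    have hle : ‖c * r‖ ≤ ‖|c| * r + 1‖ := by
      rw [Real.norm_eq_abs, Real.norm_of_nonneg (by positivity), abs_mul, abs_of_pos hr]
      exact le_add_of_nonneg_right zero_le_one
    refine ⟨|c| * r + 1, by positivity, hB.isSolid.balanced.smul_mono hle ?_⟩
    rw [← smul_smul]
    exact smul_mem_smul_set hx

def idealBall : Set hB.ideal := hB.ideal.subtype ⁻¹' B

include hB

theorem mem_ideal_of_mem {x : X} (hx : x ∈ B) : x ∈ hB.ideal :=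
  ⟨1, one_pos, by rwa [one_smul]⟩

theorem mem_ideal_of_abs_le {u v : X} (huv : |u| ≤ |v|) (hv : v ∈ hB.ideal) : u ∈ hB.ideal := by
  obtain ⟨r, hr, hv⟩ := hv
  exact ⟨r, hr, hB.isSolid.smul hr.ne' huv hv⟩

theorem abs_mem_ideal {x : X} (hx : x ∈ hB.ideal) : |x| ∈ hB.ideal :=
  hB.mem_ideal_of_abs_le (abs_abs x).le hx

theorem sup_mem_ideal {x y : X} (hx : x ∈ hB.ideal) (hy : y ∈ hB.ideal) : x ⊔ y ∈ hB.ideal := by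
  rw [sup_eq_half_smul_add_add_abs_sub' ℝ]
  exact hB.ideal.smul_mem _ (add_mem (add_mem hx hy) (hB.abs_mem_ideal (sub_mem hy hx)))

theorem inf_mem_ideal {x y : X} (hx : x ∈ hB.ideal) (hy : y ∈ hB.ideal) : x ⊓ y ∈ hB.ideal := by
  rw [inf_eq_half_smul_add_sub_abs_sub' ℝ]
  exact hB.ideal.smul_mem _ (sub_mem (add_mem hx hy) (hB.abs_mem_ideal (sub_mem hy hx)))

theorem mem_smul_idealBall_iff {r : ℝ} (hr : r ≠ 0) {x : hB.ideal} :
    x ∈ r • hB.idealBall ↔ (x : X) ∈ r • B := by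
  rw [mem_smul_set_iff_inv_smul_mem₀ hr, mem_smul_set_iff_inv_smul_mem₀ hr]
  rfl

theorem convex_idealBall : Convex ℝ hB.idealBall :=
  hB.convex.linear_preimage _

theorem balanced_idealBall : Balanced ℝ hB.idealBall :=
  hB.isSolid.balanced.mulActionHom_preimage hB.ideal.subtype.toMulActionHom

theorem absorbent_idealBall : Absorbent ℝ hB.idealBall := by
  rintro ⟨x, r, hr, hx⟩
  refine Absorbs.of_norm ⟨r, fun c hc => singleton_subset_iff.2 ?_⟩
  have hc₀ : c ≠ 0 := norm_pos_iff.1 (hr.trans_le hc)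
  rw [hB.mem_smul_idealBall_iff hc₀]
  exact hB.isSolid.balanced.smul_mono (by rwa [Real.norm_of_nonneg hr.le]) hx

theorem isClosed_idealBall : IsClosed hB.idealBall :=
  hB.isClosed.preimage continuous_subtype_val

theorem exists_norm_le_mul_gauge : ∃ M > 0, ∀ x : hB.ideal, ‖x‖ ≤ M * gauge hB.idealBall x := by
  obtain ⟨M, hM, hBM⟩ := hB.isBounded.subset_closedBall_lt 0 0
  refine ⟨M, hM, fun x => ?_⟩
  have hsub : hB.idealBall ⊆ closedBall 0 M := fun y hy => by simpa using hBM hy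
  have := gauge_mono hB.absorbent_idealBall hsub x
  rwa [gauge_closedBall hM.le, div_le_iff₀' hM] at this

end Ideal

/-- The ideal generated by `B`, normed by the gauge of `B`. -/
def GaugeLattice (hB : IsClosedBoundedConvexSolid B) : Type := hB.ideal

namespace GaugeLattice

variable {hB : IsClosedBoundedConvexSolid B}

instance : AddCommGroup (GaugeLattice hB) := inferInstanceAs (AddCommGroup hB.ideal)
instance : Module ℝ (GaugeLattice hB) := inferInstanceAs (Module ℝ hB.ideal)

variable (hB) in
def val : GaugeLattice hB →ₗ[ℝ] X := hB.ideal.subtype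

theorem val_injective : Function.Injective (val hB) := Subtype.val_injective

theorem val_mem (x : GaugeLattice hB) : val hB x ∈ hB.ideal := x.2

instance : Max (GaugeLattice hB) := ⟨fun x y => (⟨x.1 ⊔ y.1, hB.sup_mem_ideal x.2 y.2⟩ : hB.ideal)⟩
instance : Min (GaugeLattice hB) := ⟨fun x y => (⟨x.1 ⊓ y.1, hB.inf_mem_ideal x.2 y.2⟩ : hB.ideal)⟩
instance : LE (GaugeLattice hB) := ⟨fun x y => val hB x ≤ val hB y⟩
instance : LT (GaugeLattice hB) := ⟨fun x y => val hB x < val hB y⟩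

instance : Lattice (GaugeLattice hB) :=
  val_injective.lattice _ Iff.rfl Iff.rfl (fun _ _ => rfl) (fun _ _ => rfl)

theorem val_le_val {x y : GaugeLattice hB} : val hB x ≤ val hB y ↔ x ≤ y := Iff.rfl

theorem isLatHom_val : IsLatHom (val hB) := fun _ _ => rfl

theorem val_abs (x : GaugeLattice hB) : val hB |x| = |val hB x| :=
  isLatHom_val.map_abs (f := (val hB).toAddMonoidHom) x

instance : IsOrderedAddMonoid (GaugeLattice hB) :=
  Function.Injective.isOrderedAddMonoid (val hB) (map_add _) val_le_val

instance : PosSMulStrictMono ℝ (GaugeLattice hB) :=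
  PosSMulStrictMono.lift _ val_le_val (map_smul _)

instance : NormedAddCommGroup (GaugeLattice hB) :=
  AddGroupNorm.toNormedAddCommGroup
    { (gaugeSeminorm hB.balanced_idealBall hB.convex_idealBall
        hB.absorbent_idealBall).toAddGroupSeminorm with
      eq_zero_of_map_eq_zero' := fun x hx => by
        obtain ⟨M, -, hle⟩ := hB.exists_norm_le_mul_gauge
        change gauge hB.idealBall (x : hB.ideal) = 0 at hx
        have h := hle x
        rw [hx, mul_zero] at h
        exact norm_le_zero_iff.1 h }

instance : NormedSpace ℝ (GaugeLattice hB) where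
  norm_smul_le r x := (map_smul_eq_mul (gaugeSeminorm hB.balanced_idealBall hB.convex_idealBall
    hB.absorbent_idealBall) r (x : hB.ideal)).le

instance : HasSolidNorm (GaugeLattice hB) where
  solid a b hab := by
    have hab' : |val hB a| ≤ |val hB b| := by rwa [← val_abs, ← val_abs, val_le_val]
    exact gauge_le_gauge_of_forall_mem_smul hB.absorbent_idealBall fun r hr hb =>
      (hB.mem_smul_idealBall_iff hr.ne').2
        (hB.isSolid.smul hr.ne' hab' ((hB.mem_smul_idealBall_iff hr.ne').1 hb))

theorem norm_le_one_iff {x : GaugeLattice hB} : ‖x‖ ≤ 1 ↔ val hB x ∈ B :=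
  gauge_le_one_iff_mem_of_isClosed hB.convex_idealBall hB.zero_mem hB.absorbent_idealBall
    hB.isClosed_idealBall

variable (hB) in
def valL : GaugeLattice hB →L[ℝ] X :=
  (val hB).mkContinuousOfExistsBound <| by
    obtain ⟨M, -, hM⟩ := hB.exists_norm_le_mul_gauge
    exact ⟨M, hM⟩

theorem image_valL_closedBall : valL hB '' closedBall 0 1 = B := by
  ext z
  constructor
  · rintro ⟨x, hx, rfl⟩
    exact norm_le_one_iff.1 (mem_closedBall_zero_iff.1 hx)
  · intro hz
    exact ⟨⟨z, hB.mem_ideal_of_mem hz⟩, mem_closedBall_zero_iff.2 (norm_le_one_iff.2 hz), rfl⟩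

theorem isClosed_image_valL_closedBall : IsClosed (valL hB '' closedBall 0 1) := by
  rw [image_valL_closedBall]
  exact hB.isClosed

instance [CompleteSpace X] : CompleteSpace (GaugeLattice hB) :=
  completeSpace_of_isClosed_image_closedBall (valL hB) val_injective
    isClosed_image_valL_closedBall

theorem isIntervalPreserving_val : IsIntervalPreserving (val hB) := by
  intro x hx
  refine subset_antisymm (image_subset_iff.2 fun y hy => ⟨?_, ?_⟩) fun z hz => ?_
  · simpa using val_le_val.2 hy.1
  · exact val_le_val.2 hy.2
  · have hx' : 0 ≤ val hB x := by simpa using val_le_val.2 hx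
    have hzI : z ∈ hB.ideal := hB.mem_ideal_of_abs_le
      (by rw [abs_of_nonneg hz.1, abs_of_nonneg hx']; exact hz.2) (val_mem x)
    exact ⟨⟨z, hzI⟩, ⟨val_le_val.1 (by rw [map_zero]; exact hz.1), val_le_val.1 hz.2⟩, rfl⟩

theorem isClassC_valL [HasSolidNorm X] : IsClassC (valL hB) :=
  ⟨val_injective, isLatHom_val, isIntervalPreserving_val, isClosed_image_valL_closedBall⟩

section Factorization

variable {E : Type} [NormedAddCommGroup E] [NormedSpace ℝ E] (T : E →L[ℝ] X) {c : ℝ}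
  (hc : 0 < c) (hcT : ∀ e ∈ closedBall (0 : E) 1, c • T e ∈ B)

include hc hcT

theorem apply_mem_ideal (e : E) : T e ∈ hB.ideal := by
  rcases eq_or_ne e 0 with rfl | he
  · rw [map_zero]
    exact hB.ideal.zero_mem
  · exact ⟨c⁻¹ * ‖e‖, by positivity, apply_mem_smul_of_forall_mem_closedBall T hc hcT he⟩

variable (hB) in
def codRestrict : E →L[ℝ] GaugeLattice hB :=
  LinearMap.mkContinuous (T.toLinearMap.codRestrict hB.ideal (apply_mem_ideal T hc hcT)) c⁻¹
    fun e => by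
      rcases eq_or_ne e 0 with rfl | he
      · change gauge hB.idealBall ⟨T 0, _⟩ ≤ c⁻¹ * ‖(0 : E)‖
        simp only [map_zero, norm_zero, mul_zero]
        exact gauge_zero.le
      · exact gauge_le_of_mem (by positivity) ((hB.mem_smul_idealBall_iff (by positivity)).2
          (apply_mem_smul_of_forall_mem_closedBall T hc hcT he))

end Factorization

end GaugeLattice

end IsClosedBoundedConvexSolid

theorem classC_factorization_correspondence_general
    {E : Type} [NormedAddCommGroup E] [NormedSpace ℝ E]
    {X : Type} [NormedAddCommGroup X] [Lattice X] [IsOrderedAddMonoid X] [HasSolidNorm X] [NormedSpace ℝ X] [PosSMulStrictMono ℝ X]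
    [CompleteSpace X]
    (T : E →L[ℝ] X)
    {Y : Type} [NormedAddCommGroup Y] [Lattice Y] [IsOrderedAddMonoid Y] [HasSolidNorm Y] [NormedSpace ℝ Y]
    {Y₁ : Type} [NormedAddCommGroup Y₁] [Lattice Y₁] [IsOrderedAddMonoid Y₁] [HasSolidNorm Y₁] [NormedSpace ℝ Y₁]
    {Y₂ : Type} [NormedAddCommGroup Y₂] [Lattice Y₂] [IsOrderedAddMonoid Y₂] [HasSolidNorm Y₂] [NormedSpace ℝ Y₂] :
    -- (i)
    (∀ (U : E →L[ℝ] Y) (V : Y →L[ℝ] X), IsClassC V → T = V.comp U →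
      IsClosed (⇑V '' Metric.closedBall 0 1) ∧
      Bornology.IsBounded (⇑V '' Metric.closedBall 0 1) ∧
      Convex ℝ (⇑V '' Metric.closedBall 0 1) ∧
      IsSolid (⇑V '' Metric.closedBall 0 1) ∧
      ∃ c > (0 : ℝ), ∀ e ∈ Metric.closedBall (0 : E) 1,
        c • T e ∈ ⇑V '' Metric.closedBall 0 1) ∧
    -- (ii)
    (∀ B : Set X, IsClosed B → Bornology.IsBounded B → Convex ℝ B → IsSolid B →
      (∃ c > (0 : ℝ), ∀ e ∈ Metric.closedBall (0 : E) 1, c • T e ∈ B) →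
      ∃ (Y' : BanachLat) (U : E →L[ℝ] Y') (V : Y' →L[ℝ] X),
        IsClassC V ∧ T = V.comp U ∧ ⇑V '' Metric.closedBall 0 1 = B) ∧
    -- (iii)
    (∀ (U₁ : E →L[ℝ] Y₁) (V₁ : Y₁ →L[ℝ] X) (U₂ : E →L[ℝ] Y₂) (V₂ : Y₂ →L[ℝ] X),
      IsClassC V₁ → T = V₁.comp U₁ → IsClassC V₂ → T = V₂.comp U₂ →
      ⇑V₁ '' Metric.closedBall 0 1 = ⇑V₂ '' Metric.closedBall 0 1 →
      ∃ ι : Y₁ ≃ₗᵢ[ℝ] Y₂, IsLatHom ⇑ι ∧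
        (∀ e : E, U₂ e = ι (U₁ e)) ∧ (∀ y : Y₁, V₁ y = V₂ (ι y))) := by
  refine ⟨fun U V hV hT => ?_, fun B hcl hbd hcv hsol ⟨c, hc, hcT⟩ => ?_,
    fun U₁ V₁ U₂ V₂ h₁ hT₁ h₂ hT₂ h => ?_⟩
  · subst hT
    exact ⟨hV.2.2.2, V.lipschitz.isBounded_image isBounded_closedBall,
      (convex_closedBall 0 1).linear_image V.toLinearMap, hV.isSolid_image_closedBall,
      (‖U‖ + 1)⁻¹, by positivity, fun e he => smul_apply_mem_image_closedBall U V he⟩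
  · have hB : IsClosedBoundedConvexSolid B :=
      ⟨hcl, hbd, hcv, hsol, by simpa using hcT 0 (mem_closedBall_self zero_le_one)⟩
    exact ⟨⟨IsClosedBoundedConvexSolid.GaugeLattice hB⟩,
      IsClosedBoundedConvexSolid.GaugeLattice.codRestrict hB T hc hcT,
      IsClosedBoundedConvexSolid.GaugeLattice.valL hB,
      IsClosedBoundedConvexSolid.GaugeLattice.isClassC_valL, rfl,
      IsClosedBoundedConvexSolid.GaugeLattice.image_valL_closedBall⟩
  · obtain ⟨ι, hιlat, hι⟩ := h₁.exists_isLatHom_isometry_of_image_closedBall_eq h₂ h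
    refine ⟨ι, hιlat, fun e => h₂.1 ?_, fun y => (hι y).symm⟩
    rw [hι, ← ContinuousLinearMap.comp_apply, ← ContinuousLinearMap.comp_apply, ← hT₁, ← hT₂]

/-- Correspondence between Class 𝒞 factorizations of a nonzero operator
`T : E → X` and closed bounded convex solid subsets of `X` containing a positive multiple
of `T(B_E)`. -/
theorem classC_factorization_correspondence
    {E : Type} [NormedAddCommGroup E] [NormedSpace ℝ E] [CompleteSpace E]
    {X : Type} [NormedAddCommGroup X] [Lattice X] [IsOrderedAddMonoid X] [HasSolidNorm X] [NormedSpace ℝ X] [PosSMulStrictMono ℝ X]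
    [CompleteSpace X]
    (T : E →L[ℝ] X) (hT : T ≠ 0)
    {Y : Type} [NormedAddCommGroup Y] [Lattice Y] [IsOrderedAddMonoid Y] [HasSolidNorm Y] [NormedSpace ℝ Y] [PosSMulStrictMono ℝ Y]
    [CompleteSpace Y]
    {Y₁ : Type} [NormedAddCommGroup Y₁] [Lattice Y₁] [IsOrderedAddMonoid Y₁] [HasSolidNorm Y₁] [NormedSpace ℝ Y₁] [PosSMulStrictMono ℝ Y₁]
    [CompleteSpace Y₁]
    {Y₂ : Type} [NormedAddCommGroup Y₂] [Lattice Y₂] [IsOrderedAddMonoid Y₂] [HasSolidNorm Y₂] [NormedSpace ℝ Y₂] [PosSMulStrictMono ℝ Y₂]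
    [CompleteSpace Y₂] :
    -- (i)
    (∀ (U : E →L[ℝ] Y) (V : Y →L[ℝ] X), IsClassC V → T = V.comp U →
      IsClosed (⇑V '' Metric.closedBall 0 1) ∧
      Bornology.IsBounded (⇑V '' Metric.closedBall 0 1) ∧
      Convex ℝ (⇑V '' Metric.closedBall 0 1) ∧
      IsSolid (⇑V '' Metric.closedBall 0 1) ∧
      ∃ c > (0 : ℝ), ∀ e ∈ Metric.closedBall (0 : E) 1,
        c • T e ∈ ⇑V '' Metric.closedBall 0 1) ∧
    -- (ii)
    (∀ B : Set X, IsClosed B → Bornology.IsBounded B → Convex ℝ B → IsSolid B →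
      (∃ c > (0 : ℝ), ∀ e ∈ Metric.closedBall (0 : E) 1, c • T e ∈ B) →
      ∃ (Y' : BanachLat) (U : E →L[ℝ] Y') (V : Y' →L[ℝ] X),
        IsClassC V ∧ T = V.comp U ∧ ⇑V '' Metric.closedBall 0 1 = B) ∧
    -- (iii)
    (∀ (U₁ : E →L[ℝ] Y₁) (V₁ : Y₁ →L[ℝ] X) (U₂ : E →L[ℝ] Y₂) (V₂ : Y₂ →L[ℝ] X),
      IsClassC V₁ → T = V₁.comp U₁ → IsClassC V₂ → T = V₂.comp U₂ →
      ⇑V₁ '' Metric.closedBall 0 1 = ⇑V₂ '' Metric.closedBall 0 1 →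
      ∃ ι : Y₁ ≃ₗᵢ[ℝ] Y₂, IsLatHom ⇑ι ∧
        (∀ e : E, U₂ e = ι (U₁ e)) ∧ (∀ y : Y₁, V₁ y = V₂ (ι y))) :=
  classC_factorization_correspondence_general T
end
end

section
/- Let X be a Banach lattice, E a Banach space, T : X → E a nonzero bounded linear operator, and let (Y₁, U₁, V₁) and (Y₂, U₂, V₂) be Class D factorizations of T. Then the following are equivalent: (a) there is a bounded linear map φ : Y₁ → Y₂ such that U₂ = φ∘U₁ and V₁ = V₂∘φ; (b) there is a positive constant c such that U₁⁻¹(B_{Y₁}) ⊆ c·U₂⁻¹(B_{Y₂}). Moreover, when (a) holds, φ is necessarily of Class D. -/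
/-!
Comparability of the unit-ball preimages amounts to the estimate `‖U₂ x‖ ≤ c * ‖U₁ x‖`. Under it,
`U₁ x ↦ U₂ x` is a well-defined bounded operator on the dense range of `U₁`, which extends to
`φ : Y₁ → Y₂` by completeness of `Y₂`; then `V₁` and `V₂ ∘ φ` agree with `T` on the range of `U₁`.
Conversely, a bound for `φ` gives the estimate. Any such `φ` inherits being a lattice homomorphism
from `U₂ = φ ∘ U₁` by density of the range of `U₁`, and its range contains that of `U₂`.
-/

noncomputable section

open scoped Pointwise

/-- An operator `U : X → Y` between Banach lattices is of Class 𝒟 if it is a lattice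
homomorphism with dense range. -/
def IsClassD {X Y : Type*} [NormedAddCommGroup X] [Lattice X] [HasSolidNorm X] [IsOrderedAddMonoid X] [NormedSpace ℝ X]
    [NormedAddCommGroup Y] [Lattice Y] [HasSolidNorm Y] [IsOrderedAddMonoid Y] [NormedSpace ℝ Y] (U : X →L[ℝ] Y) : Prop :=
  IsLatHom ⇑U ∧ DenseRange ⇑U

open Metric

section UnitBall

variable {X Y Z F G : Type*} [AddCommGroup X] [Module ℝ X]
  [SeminormedAddCommGroup Y] [NormedSpace ℝ Y] [SeminormedAddCommGroup Z] [NormedSpace ℝ Z]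
  [FunLike F X Y] [LinearMapClass F ℝ X Y] [FunLike G X Z] [LinearMapClass G ℝ X Z]

theorem norm_le_mul_of_forall_norm_le_one (f : F) (g : G) {c : ℝ} (hc : 0 < c)
    (h : ∀ x, ‖f x‖ ≤ 1 → ‖g x‖ ≤ c) (x : X) : ‖g x‖ ≤ c * ‖f x‖ := by
  have bound_of_le : ∀ r > 0, ‖f x‖ ≤ r → ‖g x‖ ≤ c * r := by
    intro r hr hfx
    have := h (r⁻¹ • x) (by
      rw [map_smul, norm_smul, norm_inv, Real.norm_of_nonneg hr.le]
      exact inv_mul_le_one_of_le₀ hfx hr.le)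
    rwa [map_smul, norm_smul, norm_inv, Real.norm_of_nonneg hr.le, inv_mul_le_iff₀ hr,
      mul_comm] at this
  -- Testing all `r > ‖f x‖` rather than `r = ‖f x‖` also covers the case `f x = 0`.
  rw [← div_le_iff₀' hc]
  refine le_of_forall_gt_imp_ge_of_dense fun r hr => ?_
  rw [div_le_iff₀' hc]
  exact bound_of_le r ((norm_nonneg _).trans_lt hr) hr.le

theorem preimage_unitClosedBall_subset_smul_iff (f : F) (g : G) {c : ℝ} (hc : 0 < c) :
    f ⁻¹' closedBall 0 1 ⊆ c • (g ⁻¹' closedBall 0 1) ↔ ∀ x, ‖g x‖ ≤ c * ‖f x‖ := by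
  rw [← hc.ne'.isUnit.preimage_smul_set, smul_closedBall' hc.ne', smul_zero, mul_one,
    Real.norm_of_nonneg hc.le]
  simp only [Set.subset_def, Set.mem_preimage, mem_closedBall_zero_iff]
  exact ⟨norm_le_mul_of_forall_norm_le_one f g hc,
    fun h x hx => (h x).trans (mul_le_of_le_one_right hc.le hx)⟩

end UnitBall

theorem IsLatHom.of_comp_of_denseRange {X Y Z : Type*} [Lattice X] [Lattice Y] [Lattice Z]
    [TopologicalSpace Y] [TopologicalSpace Z] [ContinuousSup Y] [ContinuousSup Z] [T2Space Z]
    {u : X → Y} {f : Y → Z} (hu : IsLatHom u) (hd : DenseRange u) (hf : Continuous f)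
    (hfu : IsLatHom (f ∘ u)) : IsLatHom f :=
  hd.induction_on₂
    (isClosed_eq (hf.comp (continuous_fst.sup continuous_snd))
      ((hf.comp continuous_fst).sup (hf.comp continuous_snd)))
    fun a b => by simpa only [Function.comp_apply, hu a b] using hfu a b

theorem ContinuousLinearMap.eq_of_comp_eq_of_denseRange {𝕜 X Y Z : Type*} [Semiring 𝕜]
    [TopologicalSpace X] [AddCommMonoid X] [Module 𝕜 X]
    [TopologicalSpace Y] [AddCommMonoid Y] [Module 𝕜 Y]
    [TopologicalSpace Z] [AddCommMonoid Z] [Module 𝕜 Z] [T2Space Z]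
    {u : X →L[𝕜] Y} (hu : DenseRange u) {A B : Y →L[𝕜] Z} (h : A.comp u = B.comp u) : A = B :=
  coeFn_injective <| hu.equalizer A.continuous B.continuous congr(⇑$h)

theorem classD_factorization_comparison_general
    {X : Type*} [NormedAddCommGroup X] [Lattice X] [HasSolidNorm X] [IsOrderedAddMonoid X] [NormedSpace ℝ X]
    {E : Type*} [NormedAddCommGroup E] [NormedSpace ℝ E]
    {Y₁ : Type*} [NormedAddCommGroup Y₁] [Lattice Y₁] [HasSolidNorm Y₁] [IsOrderedAddMonoid Y₁] [NormedSpace ℝ Y₁]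
    {Y₂ : Type*} [NormedAddCommGroup Y₂] [Lattice Y₂] [HasSolidNorm Y₂] [IsOrderedAddMonoid Y₂] [NormedSpace ℝ Y₂]
    [CompleteSpace Y₂]
    (T : X →L[ℝ] E)
    (U₁ : X →L[ℝ] Y₁) (V₁ : Y₁ →L[ℝ] E) (U₂ : X →L[ℝ] Y₂) (V₂ : Y₂ →L[ℝ] E)
    (h₁ : IsClassD U₁) (hf₁ : T = V₁.comp U₁)
    (h₂ : IsClassD U₂) (hf₂ : T = V₂.comp U₂) :
    ((∃ φ : Y₁ →L[ℝ] Y₂, U₂ = φ.comp U₁ ∧ V₁ = V₂.comp φ) ↔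
      (∃ c > (0 : ℝ),
        ⇑U₁ ⁻¹' Metric.closedBall 0 1 ⊆ c • (⇑U₂ ⁻¹' Metric.closedBall 0 1))) ∧
    (∀ φ : Y₁ →L[ℝ] Y₂, U₂ = φ.comp U₁ → V₁ = V₂.comp φ → IsClassD φ) := by
  refine ⟨⟨fun ⟨φ, hU, _⟩ => ?_, fun ⟨c, hc, hball⟩ => ?_⟩, fun φ hU _ => ?_⟩
  · obtain ⟨C, hC, hφ⟩ := φ.bound
    refine ⟨C, hC, (preimage_unitClosedBall_subset_smul_iff U₁ U₂ hC).2 fun x => ?_⟩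
    rw [hU]
    exact hφ (U₁ x)
  · have hbound := (preimage_unitClosedBall_subset_smul_iff U₁ U₂ hc).1 hball
    let φ := LinearMap.extendOfNorm (U₂ : X →ₗ[ℝ] Y₂) (U₁ : X →ₗ[ℝ] Y₁)
    have hU : U₂ = φ.comp U₁ :=
      ContinuousLinearMap.ext fun x => (LinearMap.extendOfNorm_eq h₁.2 ⟨c, hbound⟩ x).symm
    refine ⟨φ, hU, ContinuousLinearMap.eq_of_comp_eq_of_denseRange h₁.2 ?_⟩
    rw [← hf₁, hf₂, hU, ContinuousLinearMap.comp_assoc]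
  · subst hU
    exact ⟨h₁.1.of_comp_of_denseRange h₁.2 φ.continuous h₂.1,
      DenseRange.of_comp (f := φ) (g := U₁) h₂.2⟩

/-- Comparison of two Class 𝒟 factorizations of a nonzero operator
`T : X → E`: a connecting operator `φ` exists iff the unit-ball preimages are comparable,
and such a `φ` is automatically of Class 𝒟. -/
theorem classD_factorization_comparison
    {X : Type*} [NormedAddCommGroup X] [Lattice X] [HasSolidNorm X] [IsOrderedAddMonoid X] [NormedSpace ℝ X] [PosSMulStrictMono ℝ X]
    [CompleteSpace X]
    {E : Type*} [NormedAddCommGroup E] [NormedSpace ℝ E] [CompleteSpace E]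
    {Y₁ : Type*} [NormedAddCommGroup Y₁] [Lattice Y₁] [HasSolidNorm Y₁] [IsOrderedAddMonoid Y₁] [NormedSpace ℝ Y₁] [PosSMulStrictMono ℝ Y₁]
    [CompleteSpace Y₁]
    {Y₂ : Type*} [NormedAddCommGroup Y₂] [Lattice Y₂] [HasSolidNorm Y₂] [IsOrderedAddMonoid Y₂] [NormedSpace ℝ Y₂] [PosSMulStrictMono ℝ Y₂]
    [CompleteSpace Y₂]
    (T : X →L[ℝ] E) (hT : T ≠ 0)
    (U₁ : X →L[ℝ] Y₁) (V₁ : Y₁ →L[ℝ] E) (U₂ : X →L[ℝ] Y₂) (V₂ : Y₂ →L[ℝ] E)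
    (h₁ : IsClassD U₁) (hf₁ : T = V₁.comp U₁)
    (h₂ : IsClassD U₂) (hf₂ : T = V₂.comp U₂) :
    ((∃ φ : Y₁ →L[ℝ] Y₂, U₂ = φ.comp U₁ ∧ V₁ = V₂.comp φ) ↔
      (∃ c > (0 : ℝ),
        ⇑U₁ ⁻¹' Metric.closedBall 0 1 ⊆ c • (⇑U₂ ⁻¹' Metric.closedBall 0 1))) ∧
    (∀ φ : Y₁ →L[ℝ] Y₂, U₂ = φ.comp U₁ → V₁ = V₂.comp φ → IsClassD φ) :=
  classD_factorization_comparison_general T U₁ V₁ U₂ V₂ h₁ hf₁ h₂ hf₂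

end
end

section
/- Let 1 < p < ∞, let E be a Banach space, let X be a Banach lattice, and let T : E → X be a bounded linear operator. Define C_T = { u ∈ X : there exist x₁, …, xₙ ∈ E with |u| ≤ ⋁_{i=1}^n |T x_i| and Σ_{i=1}^n ‖x_i‖^p ≤ 1 }, and let D be the bipolar of C_T with respect to the dual pairing ⟨X, X*⟩ (equivalently, the norm-closed convex hull of C_T). Then: (i) D is closed, convex and solid; (ii) if T is (p,∞)-convex with constant K, then T(B_E) ⊆ D ⊆ K·B_X; (iii) for any u₁, …, uₙ ∈ D and any real scalars α₁, …, αₙ with Σ_{i=1}^n |α_i|^p ≤ 1, the element ⋁_{i=1}^n |α_i u_i| belongs to D. -/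
/-!
Since `0 ∈ C_T`, Hahn–Banach identifies `D` with the closed convex hull of `C_T`. Solidity passes
from `C_T` to its convex hull by the Riesz decomposition property, and to the closure because the
clamp `t ↦ u ⊓ |t| ⊔ -|t|` is continuous. Bound (ii) holds on `C_T` by `(p,∞)`-convexity and the
ball `K • B_X` is closed and convex. For (iii), `C_T` is stable under `(uᵢ) ↦ ⋁ |αᵢ uᵢ|`; in each
coordinate separately this map is continuous, positive and convex for the lattice order, so it
pulls the closed convex solid set `D` back to a closed convex set containing `C_T`, hence `D`.
Replacing the coordinates one at a time gives (iii).
-/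

noncomputable section

open scoped BigOperators

/-- An operator `T : E → X` from a Banach space into a Banach lattice is `(p,∞)`-convex
with constant `K`. -/
def IsPInftyConvex {E X : Type*} [NormedAddCommGroup E] [NormedSpace ℝ E]
    [NormedAddCommGroup X] [Lattice X] [IsOrderedAddMonoid X] [HasSolidNorm X] [NormedSpace ℝ X] (p K : ℝ) (T : E →L[ℝ] X) : Prop :=
  ∀ (n : ℕ) (x : Fin (n + 1) → E),
    ‖(Finset.univ : Finset (Fin (n + 1))).sup' Finset.univ_nonempty
        (fun i => |T (x i)|)‖ ≤ K * (∑ i, ‖x i‖ ^ p) ^ (1 / p)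

/-- The set `C_T` associated to an operator `T : E → X` and `1 < p < ∞`. -/
def convexitySet {E X : Type*} [NormedAddCommGroup E] [NormedSpace ℝ E]
    [NormedAddCommGroup X] [Lattice X] [IsOrderedAddMonoid X] [HasSolidNorm X] [NormedSpace ℝ X] (p : ℝ) (T : E →L[ℝ] X) : Set X :=
  { u | ∃ (n : ℕ) (x : Fin (n + 1) → E),
      |u| ≤ (Finset.univ : Finset (Fin (n + 1))).sup' Finset.univ_nonempty
          (fun i => |T (x i)|) ∧
      ∑ i, ‖x i‖ ^ p ≤ 1 }

/-- The (one-sided) polar of a subset of `X` in the continuous dual `X*`. -/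
def onePolar {X : Type*} [NormedAddCommGroup X] [Lattice X] [IsOrderedAddMonoid X] [HasSolidNorm X] [NormedSpace ℝ X]
    (C : Set X) : Set (X →L[ℝ] ℝ) :=
  { f | ∀ u ∈ C, f u ≤ 1 }

/-- The (one-sided) bipolar of a subset of `X` with respect to the pairing `⟨X, X*⟩`. -/
def oneBipolar {X : Type*} [NormedAddCommGroup X] [Lattice X] [IsOrderedAddMonoid X] [HasSolidNorm X] [NormedSpace ℝ X]
    (C : Set X) : Set X :=
  { u | ∀ f ∈ onePolar C, f u ≤ 1 }

open Finset Function

section LatticeGroup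

variable {X : Type*} [Lattice X] [AddCommGroup X] [IsOrderedAddMonoid X]

lemma abs_inf_sup_neg_le {x : X} (hx : 0 ≤ x) (u : X) : |u ⊓ x ⊔ -x| ≤ x :=
  abs_le'.2 ⟨sup_le inf_le_right (neg_le_self hx), neg_le.2 le_sup_right⟩

lemma inf_sup_neg_eq_self {u x : X} (h : |u| ≤ x) : u ⊓ x ⊔ -x = u := by
  rw [inf_eq_left.2 ((le_abs_self u).trans h), sup_eq_left.2 (neg_le.1 ((neg_le_abs u).trans h))]

/-- Riesz decomposition, with `a` the truncation of `u` to `[-x, x]`. -/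
lemma exists_add_eq_of_abs_le_add {u x y : X} (hx : 0 ≤ x) (hy : 0 ≤ y) (h : |u| ≤ x + y) :
    ∃ a b : X, u = a + b ∧ |a| ≤ x ∧ |b| ≤ y := by
  refine ⟨u ⊓ x ⊔ -x, u - (u ⊓ x ⊔ -x), by abel, abs_inf_sup_neg_le hx u,
    abs_le'.2 ⟨?_, ?_⟩⟩
  · have : u - y ≤ u ⊓ x :=
      le_inf (sub_le_self u hy) (sub_le_iff_le_add.2 ((le_abs_self u).trans h))
    exact sub_le_comm.1 (this.trans le_sup_left)
  · rw [neg_sub, sub_le_iff_le_add']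
    refine sup_le (inf_le_left.trans (le_add_of_nonneg_right hy)) ?_
    refine neg_le.2 ?_
    rw [neg_add, ← sub_eq_add_neg, sub_le_iff_le_add]
    exact (neg_le_abs u).trans h

lemma sup'_abs_nonneg {ι : Type*} {s : Finset ι} (hs : s.Nonempty) (f : ι → X) :
    0 ≤ s.sup' hs fun i => |f i| :=
  let ⟨_, hi⟩ := hs
  le_sup'_of_le _ hi (abs_nonneg _)

end LatticeGroup

lemma smul_finset_sup'_of_nonneg {X ι : Type*} [Lattice X] [AddCommGroup X] [Module ℝ X]
    [PosSMulMono ℝ X] {s : Finset ι} (hs : s.Nonempty) {r : ℝ}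
    (hr : 0 ≤ r) (f : ι → X) : r • s.sup' hs f = s.sup' hs fun i => r • f i := by
  rcases hr.eq_or_lt with rfl | hr
  · simp
  · exact map_finset_sup' (OrderIso.smulRight hr) hs f

section LatticeModule

variable {X : Type*} [Lattice X] [AddCommGroup X] [IsOrderedAddMonoid X] [Module ℝ X]
  [PosSMulMono ℝ X]

lemma abs_smul_of_nonneg {r : ℝ} (hr : 0 ≤ r) (x : X) : |r • x| = r • |x| := by
  rcases hr.eq_or_lt with rfl | hr
  · simp
  · rw [abs, abs, ← smul_neg]
    exact ((OrderIso.smulRight hr).map_sup x (-x)).symm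

lemma abs_smul' (r : ℝ) (x : X) : |r • x| = |r| • |x| := by
  rcases le_total 0 r with hr | hr
  · rw [abs_smul_of_nonneg hr, abs_of_nonneg hr]
  · rw [← neg_smul_neg, abs_smul_of_nonneg (neg_nonneg.2 hr), abs_neg, abs_of_nonpos hr]

lemma convexOn_univ_abs : ConvexOn ℝ Set.univ fun x : X => |x| :=
  ⟨convex_univ, fun x _ y _ a b ha hb _ => (abs_add_le _ _).trans_eq <| by
    rw [abs_smul_of_nonneg ha, abs_smul_of_nonneg hb]⟩

lemma ConvexOn.finset_sup' {E ι : Type*} [AddCommMonoid E] [Module ℝ E] {s : Set E}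
    {t : Finset ι} (ht : t.Nonempty) {f : ι → E → X}
    (hf : ∀ i ∈ t, ConvexOn ℝ s (f i)) :
    ConvexOn ℝ s fun x => t.sup' ht fun i => f i x := by
  obtain ⟨i₀, hi₀⟩ := ht
  refine ⟨(hf i₀ hi₀).1, fun x hx y hy a b ha hb hab => sup'_le _ _ fun i hi => ?_⟩
  refine ((hf i hi).2 hx hy ha hb hab).trans (add_le_add ?_ ?_)
  · exact smul_le_smul_of_nonneg_left (le_sup' (fun i => f i x) hi) ha
  · exact smul_le_smul_of_nonneg_left (le_sup' (fun i => f i y) hi) hb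

lemma abs_inv_smul_le {a : ℝ} (ha : 0 < a) {w v : X} (h : |w| ≤ a • v) :
    |a⁻¹ • w| ≤ v := by
  rw [abs_smul_of_nonneg (inv_nonneg.2 ha.le)]
  calc a⁻¹ • |w| ≤ a⁻¹ • a • v := smul_le_smul_of_nonneg_left h (inv_nonneg.2 ha.le)
    _ = v := inv_smul_smul₀ ha.ne' v

lemma isSolid_convexHull {C : Set X} (hC : IsSolid C) : IsSolid (convexHull ℝ C) := by
  let S := {v : X | ∀ ⦃u⦄, |u| ≤ |v| → u ∈ convexHull ℝ C}
  suffices convexHull ℝ C ⊆ S from fun u v huv hv => this hv huv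
  refine convexHull_min (fun v hv u huv => subset_convexHull ℝ C (hC huv hv)) ?_
  refine convex_iff_pairwise_pos.2 fun v₁ h₁ v₂ h₂ _ a b ha hb hab u hu => ?_
  have hu' : |u| ≤ a • |v₁| + b • |v₂| := by
    simpa using hu.trans (convexOn_univ_abs.2 trivial trivial ha.le hb.le hab)
  obtain ⟨w₁, w₂, rfl, hw₁, hw₂⟩ := exists_add_eq_of_abs_le_add
    (smul_nonneg ha.le (abs_nonneg v₁)) (smul_nonneg hb.le (abs_nonneg v₂)) hu'
  have hmem := convex_convexHull ℝ C (h₁ (abs_inv_smul_le ha hw₁))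
    (h₂ (abs_inv_smul_le hb hw₂)) ha.le hb.le hab
  rwa [smul_inv_smul₀ ha.ne', smul_inv_smul₀ hb.ne'] at hmem

lemma IsSolid.convex_preimage {V : Type*} [AddCommGroup V] [Module ℝ V] {D : Set X}
    (hDs : IsSolid D) (hD : Convex ℝ D) {F : V → X} (hF : ConvexOn ℝ Set.univ F)
    (hF0 : ∀ t, 0 ≤ F t) : Convex ℝ (F ⁻¹' D) := by
  intro x hx y hy a b ha hb hab
  refine hDs ?_ (hD hx hy ha hb hab)
  rw [abs_of_nonneg (hF0 _),
    abs_of_nonneg (add_nonneg (smul_nonneg ha (hF0 x)) (smul_nonneg hb (hF0 y)))]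
  exact hF.2 trivial trivial ha hb hab

end LatticeModule

lemma isSolid_closure {X : Type*} [NormedAddCommGroup X] [Lattice X] [IsOrderedAddMonoid X]
    [HasSolidNorm X] {S : Set X} (hS : IsSolid S) : IsSolid (closure S) := by
  intro u v huv hv
  let clamp : X → X := fun t => u ⊓ |t| ⊔ -|t|
  have habs : Continuous fun t : X => |t| := continuous_id.sup continuous_neg
  have hcont : Continuous clamp := (continuous_const.inf habs).sup habs.neg
  have hmaps : Set.MapsTo clamp S S := fun t ht =>
    hS (by simpa using abs_inf_sup_neg_le (abs_nonneg t) u) ht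
  simpa [clamp, inf_sup_neg_eq_self huv] using map_mem_closure hcont hv hmaps

lemma isSolid_closedConvexHull {X : Type*} [NormedAddCommGroup X] [Lattice X]
    [IsOrderedAddMonoid X] [HasSolidNorm X] [NormedSpace ℝ X] [PosSMulMono ℝ X] {C : Set X}
    (hC : IsSolid C) : IsSolid (closedConvexHull ℝ C) := by
  rw [closedConvexHull_eq_closure_convexHull]
  exact isSolid_closure (isSolid_convexHull hC)

lemma forall_mem_closedConvexHull_of_separately {V ι : Type*} [TopologicalSpace V]
    [AddCommGroup V] [Module ℝ V] [Fintype ι] [DecidableEq ι] {C : Set V}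
    {P : (ι → V) → Prop}
    (hP : ∀ u j, IsClosed {t | P (update u j t)} ∧ Convex ℝ {t | P (update u j t)})
    (hC : ∀ u, (∀ i, u i ∈ C) → P u) {u : ι → V}
    (hu : ∀ i, u i ∈ closedConvexHull ℝ C) : P u := by
  suffices ∀ s : Finset ι, ∀ u : ι → V, (∀ i, u i ∈ closedConvexHull ℝ C) →
      (∀ i ∉ s, u i ∈ C) → P u from this univ u hu fun i hi => absurd (mem_univ i) hi
  intro s
  induction s using Finset.induction_on with
  | empty => exact fun u _ hC' => hC u fun i => hC' i (notMem_empty i)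
  | insert j s _ ih =>
    intro u hu hC'
    have hCS : C ⊆ {t | P (update u j t)} := fun t ht => by
      refine ih _ (fun i => ?_) (fun i hi => ?_) <;> rcases eq_or_ne i j with rfl | hij
      · simpa using subset_closedConvexHull ht
      · simpa [hij] using hu i
      · simpa using ht
      · simpa [hij] using hC' i (by simp [hij, hi])
    simpa using closedConvexHull_min hCS (hP u j).2 (hP u j).1 (hu j)

section NormedLattice

variable {X : Type*} [NormedAddCommGroup X] [Lattice X] [IsOrderedAddMonoid X] [HasSolidNorm X]
  [NormedSpace ℝ X]

lemma sup_abs_smul_mem_closedConvexHull [PosSMulMono ℝ X] {ι : Type*} [Fintype ι]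
    [Nonempty ι] {C : Set X} (hCs : IsSolid (closedConvexHull ℝ C)) (α : ι → ℝ)
    (hC : ∀ u : ι → X, (∀ i, u i ∈ C) →
      univ.sup' univ_nonempty (fun i => |α i • u i|) ∈ closedConvexHull ℝ C)
    {u : ι → X} (hu : ∀ i, u i ∈ closedConvexHull ℝ C) :
    univ.sup' univ_nonempty (fun i => |α i • u i|) ∈ closedConvexHull ℝ C := by
  classical
  refine forall_mem_closedConvexHull_of_separately (fun u j => ?_) hC hu
  let F : X → X := fun t => univ.sup' univ_nonempty fun i => |α i • update u j t i|
  have hF_cont : Continuous F :=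
    Continuous.finset_sup'_apply _ fun i _ => (continuous_id.sup continuous_neg).comp
      (by fun_prop)
  have hF_convex : ConvexOn ℝ Set.univ F := by
    refine ConvexOn.finset_sup' _ fun i _ => ?_
    rcases eq_or_ne i j with rfl | hij
    · simp only [update_self]
      exact (convexOn_univ_abs.comp_linearMap (α i • LinearMap.id (R := ℝ) (M := X))).subset
        (Set.subset_univ _) convex_univ
    · simp only [update_of_ne hij]
      exact convexOn_const _ convex_univ
  have hF_nonneg : ∀ t, 0 ≤ F t := fun t => sup'_abs_nonneg _ _
  exact ⟨isClosed_closedConvexHull.preimage hF_cont,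
    hCs.convex_preimage convex_closedConvexHull hF_convex hF_nonneg⟩

lemma isClosed_oneBipolar (C : Set X) : IsClosed (oneBipolar C) := by
  simp only [oneBipolar, Set.ofPred_forall]
  exact isClosed_biInter fun f _ => isClosed_le f.continuous continuous_const

lemma convex_oneBipolar (C : Set X) : Convex ℝ (oneBipolar C) := by
  simp only [oneBipolar, Set.ofPred_forall]
  exact convex_iInter₂ fun f _ => convex_halfSpace_le f.isLinear 1

lemma subset_oneBipolar (C : Set X) : C ⊆ oneBipolar C := fun _ hu _ hf => hf _ hu

lemma oneBipolar_eq_closedConvexHull {C : Set X} (h0 : 0 ∈ C) :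
    oneBipolar C = closedConvexHull ℝ C := by
  refine subset_antisymm (fun x hx => ?_) <|
    closedConvexHull_min (subset_oneBipolar C) (convex_oneBipolar C) (isClosed_oneBipolar C)
  by_contra hx'
  obtain ⟨f, s, hfs, hsx⟩ :=
    geometric_hahn_banach_closed_point convex_closedConvexHull isClosed_closedConvexHull hx'
  have hC : ∀ w ∈ C, f w < s := fun w hw => hfs w (subset_closedConvexHull hw)
  have hs : 0 < s := by simpa using hC 0 h0
  have hpolar : s⁻¹ • f ∈ onePolar C := fun w hw => by
    simpa [inv_mul_le_one₀ hs] using (hC w hw).le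
  have := hx _ hpolar
  simp only [smul_apply, smul_eq_mul, inv_mul_le_one₀ hs] at this
  exact absurd hsx this.not_gt

end NormedLattice

section ConvexitySet

variable {E X : Type*} [NormedAddCommGroup E] [NormedSpace ℝ E] [NormedAddCommGroup X] [Lattice X]
  [IsOrderedAddMonoid X] [HasSolidNorm X] [NormedSpace ℝ X] {p : ℝ} {T : E →L[ℝ] X}

lemma zero_mem_convexitySet : (0 : X) ∈ convexitySet p T :=
  ⟨0, 0, by simp, by simp [Real.zero_rpow_le_one]⟩

lemma isSolid_convexitySet : IsSolid (convexitySet p T) :=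
  fun _ _ huv ⟨n, x, hle, hsum⟩ => ⟨n, x, huv.trans hle, hsum⟩

lemma apply_mem_convexitySet (hp : 0 ≤ p) {e : E} (he : ‖e‖ ≤ 1) :
    T e ∈ convexitySet p T :=
  ⟨0, fun _ => e, by simp, by simpa using Real.rpow_le_one (norm_nonneg e) he hp⟩

lemma norm_le_of_mem_convexitySet (hp : 0 < p) {K : ℝ} (hK : 0 ≤ K) (hT : IsPInftyConvex p K T)
    {u : X} (hu : u ∈ convexitySet p T) : ‖u‖ ≤ K := by
  obtain ⟨n, x, hle, hsum⟩ := hu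
  have hnorm : (∑ i, ‖x i‖ ^ p) ^ (1 / p) ≤ 1 :=
    Real.rpow_le_one (sum_nonneg fun i _ => by positivity) hsum (by positivity)
  calc ‖u‖ ≤ ‖univ.sup' univ_nonempty fun i => |T (x i)|‖ :=
        norm_le_norm_of_abs_le_abs (by rwa [abs_of_nonneg (sup'_abs_nonneg _ _)])
    _ ≤ K * (∑ i, ‖x i‖ ^ p) ^ (1 / p) := hT n x
    _ ≤ K := mul_le_of_le_one_right hK hnorm

lemma mem_convexitySet_of_fintype {ι : Type*} [Fintype ι] [Nonempty ι] {u : X} (x : ι → E)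
    (hu : |u| ≤ univ.sup' univ_nonempty fun i => |T (x i)|) (hx : ∑ i, ‖x i‖ ^ p ≤ 1) :
    u ∈ convexitySet p T := by
  obtain ⟨n, hn⟩ := Nat.exists_eq_succ_of_ne_zero (Fintype.card_ne_zero (α := ι))
  let e : Fin (n + 1) ≃ ι := (Fintype.equivFinOfCardEq hn).symm
  refine ⟨n, x ∘ e, hu.trans (sup'_le _ _ fun i _ => ?_), ?_⟩
  · exact le_sup'_of_le _ (mem_univ (e.symm i)) (by simp)
  · rwa [← e.sum_comp] at hx

/-- The families witnessing `u i ∈ C_T` are concatenated, the `i`-th one scaled by `α i`. -/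
lemma sup_abs_smul_mem_convexitySet [PosSMulMono ℝ X] {ι : Type*} [Fintype ι] [Nonempty ι]
    (u : ι → X) (α : ι → ℝ) (hu : ∀ i, u i ∈ convexitySet p T)
    (hα : ∑ i, |α i| ^ p ≤ 1) :
    univ.sup' univ_nonempty (fun i => |α i • u i|) ∈ convexitySet p T := by
  choose m x hx hsum using hu
  have : Nonempty (Σ i, Fin (m i + 1)) := ⟨⟨Classical.arbitrary ι, 0⟩⟩
  refine mem_convexitySet_of_fintype (ι := Σ i, Fin (m i + 1))
    (fun k => α k.1 • x k.1 k.2) ?_ ?_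
  · rw [abs_of_nonneg (sup'_abs_nonneg _ _)]
    refine sup'_le _ _ fun i _ => ?_
    calc |α i • u i| = |α i| • |u i| := abs_smul' _ _
      _ ≤ |α i| • univ.sup' univ_nonempty (fun j => |T (x i j)|) :=
          smul_le_smul_of_nonneg_left (hx i) (abs_nonneg _)
      _ = univ.sup' univ_nonempty (fun j => |α i| • |T (x i j)|) :=
          smul_finset_sup'_of_nonneg _ (abs_nonneg _) _
      _ ≤ _ := sup'_le _ _ fun j _ =>
          le_sup'_of_le _ (mem_univ ⟨i, j⟩) (by rw [map_smul, abs_smul'])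
  · calc ∑ k : Σ i, Fin (m i + 1), ‖α k.1 • x k.1 k.2‖ ^ p
        = ∑ i, |α i| ^ p * ∑ j, ‖x i j‖ ^ p := by
          simp only [Fintype.sum_sigma, mul_sum, norm_smul, Real.norm_eq_abs,
            Real.mul_rpow (abs_nonneg _) (norm_nonneg _)]
      _ ≤ ∑ i, |α i| ^ p :=
          sum_le_sum fun i _ => mul_le_of_le_one_right (by positivity) (hsum i)
      _ ≤ 1 := hα

end ConvexitySet

theorem bipolar_convexitySet_properties_general
    {E : Type*} [NormedAddCommGroup E] [NormedSpace ℝ E]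
    {X : Type*} [NormedAddCommGroup X] [Lattice X] [IsOrderedAddMonoid X] [HasSolidNorm X] [NormedSpace ℝ X] [PosSMulStrictMono ℝ X]
    (p K : ℝ) (hp : 1 < p) (hK : 0 ≤ K)
    (T : E →L[ℝ] X) (hT : IsPInftyConvex p K T) :
    -- (i)
    (IsClosed (oneBipolar (convexitySet p T)) ∧
      Convex ℝ (oneBipolar (convexitySet p T)) ∧
      IsSolid (oneBipolar (convexitySet p T))) ∧
    -- (ii)
    ((∀ e ∈ Metric.closedBall (0 : E) 1, T e ∈ oneBipolar (convexitySet p T)) ∧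
      (∀ u ∈ oneBipolar (convexitySet p T), ‖u‖ ≤ K)) ∧
    -- (iii)
    (∀ (n : ℕ) (u : Fin (n + 1) → X) (α : Fin (n + 1) → ℝ),
      (∀ i, u i ∈ oneBipolar (convexitySet p T)) → (∑ i, |α i| ^ p) ≤ 1 →
      (Finset.univ : Finset (Fin (n + 1))).sup' Finset.univ_nonempty
          (fun i => |α i • u i|) ∈ oneBipolar (convexitySet p T)) := by
  set C := convexitySet p T
  have hD : oneBipolar C = closedConvexHull ℝ C :=
    oneBipolar_eq_closedConvexHull zero_mem_convexitySet
  have hD_solid : IsSolid (closedConvexHull ℝ C) := isSolid_closedConvexHull isSolid_convexitySet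
  have hC_ball : C ⊆ Metric.closedBall 0 K := fun u hu =>
    mem_closedBall_zero_iff.2 (norm_le_of_mem_convexitySet (by linarith) hK hT hu)
  refine ⟨⟨isClosed_oneBipolar C, convex_oneBipolar C, hD ▸ hD_solid⟩,
    ⟨fun e he => ?_, ?_⟩, ?_⟩
  · exact subset_oneBipolar C <|
      apply_mem_convexitySet (by linarith) (mem_closedBall_zero_iff.1 he)
  · rw [hD]
    exact fun u hu => mem_closedBall_zero_iff.1 <|
      closedConvexHull_min hC_ball (convex_closedBall 0 K) Metric.isClosed_closedBall hu
  · intro n u α hu hα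
    rw [hD] at hu ⊢
    exact sup_abs_smul_mem_closedConvexHull hD_solid α
      (fun v hv => subset_closedConvexHull (sup_abs_smul_mem_convexitySet v α hv hα)) hu

/-- Properties of the bipolar `D = (C_T)°°` of the convexity set of a
`(p,∞)`-convex operator `T : E → X` with constant `K`. -/
theorem bipolar_convexitySet_properties
    {E : Type*} [NormedAddCommGroup E] [NormedSpace ℝ E] [CompleteSpace E]
    {X : Type*} [NormedAddCommGroup X] [Lattice X] [IsOrderedAddMonoid X] [HasSolidNorm X] [NormedSpace ℝ X] [PosSMulStrictMono ℝ X] [PosSMulReflectLT ℝ X]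
    [CompleteSpace X]
    (p K : ℝ) (hp : 1 < p) (hK : 0 ≤ K)
    (T : E →L[ℝ] X) (hT : IsPInftyConvex p K T) :
    -- (i)
    (IsClosed (oneBipolar (convexitySet p T)) ∧
      Convex ℝ (oneBipolar (convexitySet p T)) ∧
      IsSolid (oneBipolar (convexitySet p T))) ∧
    -- (ii)
    ((∀ e ∈ Metric.closedBall (0 : E) 1, T e ∈ oneBipolar (convexitySet p T)) ∧
      (∀ u ∈ oneBipolar (convexitySet p T), ‖u‖ ≤ K)) ∧
    -- (iii)
    (∀ (n : ℕ) (u : Fin (n + 1) → X) (α : Fin (n + 1) → ℝ),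
      (∀ i, u i ∈ oneBipolar (convexitySet p T)) → (∑ i, |α i| ^ p) ≤ 1 →
      (Finset.univ : Finset (Fin (n + 1))).sup' Finset.univ_nonempty
          (fun i => |α i • u i|) ∈ oneBipolar (convexitySet p T)) :=
  bipolar_convexitySet_properties_general p K hp hK T hT

end
end

section
/- Let K be a compact Hausdorff space, μ a finite regular Borel measure on K, n ∈ ℕ, and let σ be a lattice norm on ℝⁿ with dual norm σ*. Given μ-integrable functions g₁, …, gₙ : K → ℝ and ε > 0, there exist continuous functions h₁, …, hₙ ∈ C(K) such that σ(h₁(t), …, hₙ(t)) ≤ 1 for every t ∈ K, and ∫_K σ*(g₁(t), …, gₙ(t)) dμ(t) ≤ Σ_{i=1}^n ∫_K h_i g_i dμ + ε. -/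
noncomputable section

open scoped BigOperators
open MeasureTheory

/-- The dual norm of a (lattice) norm `σ` on `ℝⁿ`. -/
def dualNorm {n : ℕ} (σ : (Fin n → ℝ) → ℝ) (b : Fin n → ℝ) : ℝ :=
  sSup ((fun a : Fin n → ℝ => ∑ i, a i * b i) '' { a | σ a ≤ 1 })

/-!
Coordinatewise, the unit ball of a lattice norm `σ` lies in the box `|aᵢ| ≤ σ(eᵢ)⁻¹`, so
`⟨a, b⟩ ≤ C‖b‖` on it with `C = ∑ σ(eᵢ)⁻¹`; hence `σ*` is finite and `C`-Lipschitz.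
Approximate `g` in `L¹` by a continuous `G`. Near each point `t` a single `a` in the unit ball
satisfies `σ*(G s) - δ < ⟨a, G s⟩`, and as the unit ball is convex a partition of unity glues these
local constants into a continuous `h` with `σ(h s) ≤ 1` and `σ*(G s) - δ < ⟨h s, G s⟩` everywhere.
Passing from `G` back to `g` costs `2C‖g s - G s‖` pointwise, which integrates to at most `2Cη`.
-/

section DualNorm

variable {n : ℕ} {σ : (Fin n → ℝ) → ℝ} {C : ℝ}

theorem bddAbove_image_sum_mul (hC : ∀ a b : Fin n → ℝ, σ a ≤ 1 → ∑ i, a i * b i ≤ C * ‖b‖)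
    (b : Fin n → ℝ) : BddAbove ((fun a : Fin n → ℝ => ∑ i, a i * b i) '' {a | σ a ≤ 1}) := by
  refine ⟨C * ‖b‖, ?_⟩
  rintro _ ⟨a, ha, rfl⟩
  exact hC a b ha

theorem nonempty_image_sum_mul (h0 : σ 0 ≤ 1) (b : Fin n → ℝ) :
    ((fun a : Fin n → ℝ => ∑ i, a i * b i) '' {a | σ a ≤ 1}).Nonempty :=
  ⟨_, 0, h0, rfl⟩

theorem sum_mul_le_dualNorm (hC : ∀ a b : Fin n → ℝ, σ a ≤ 1 → ∑ i, a i * b i ≤ C * ‖b‖)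
    {a : Fin n → ℝ} (ha : σ a ≤ 1) (b : Fin n → ℝ) : ∑ i, a i * b i ≤ dualNorm σ b :=
  le_csSup (bddAbove_image_sum_mul hC b) ⟨a, ha, rfl⟩

theorem dualNorm_nonneg (h0 : σ 0 ≤ 1)
    (hC : ∀ a b : Fin n → ℝ, σ a ≤ 1 → ∑ i, a i * b i ≤ C * ‖b‖) (b : Fin n → ℝ) :
    0 ≤ dualNorm σ b := by
  simpa using sum_mul_le_dualNorm hC h0 b

theorem exists_dualNorm_sub_lt_sum_mul (h0 : σ 0 ≤ 1) (b : Fin n → ℝ) {δ : ℝ} (hδ : 0 < δ) :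
    ∃ a, σ a ≤ 1 ∧ dualNorm σ b - δ < ∑ i, a i * b i := by
  obtain ⟨_, ⟨a, ha, rfl⟩, hlt⟩ :=
    exists_lt_of_lt_csSup (nonempty_image_sum_mul h0 b) (sub_lt_self _ hδ)
  exact ⟨a, ha, hlt⟩

theorem dualNorm_le_add (h0 : σ 0 ≤ 1)
    (hC : ∀ a b : Fin n → ℝ, σ a ≤ 1 → ∑ i, a i * b i ≤ C * ‖b‖) (b c : Fin n → ℝ) :
    dualNorm σ b ≤ dualNorm σ c + C * ‖b - c‖ := by
  refine csSup_le (nonempty_image_sum_mul h0 b) ?_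
  rintro _ ⟨a, ha, rfl⟩
  dsimp only
  have hsplit : ∑ i, a i * b i = ∑ i, a i * c i + ∑ i, a i * (b - c) i := by
    simp only [Pi.sub_apply, mul_sub, Finset.sum_sub_distrib]
    ring
  rw [hsplit]
  exact add_le_add (sum_mul_le_dualNorm hC ha c) (hC a _ ha)

theorem continuous_dualNorm (h0 : σ 0 ≤ 1)
    (hC : ∀ a b : Fin n → ℝ, σ a ≤ 1 → ∑ i, a i * b i ≤ C * ‖b‖) : Continuous (dualNorm σ) :=
  (LipschitzWith.of_le_add_mul' C fun b c => by
    simpa only [dist_eq_norm] using dualNorm_le_add h0 hC b c).continuous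

theorem dualNorm_le_sum_mul_add (h0 : σ 0 ≤ 1)
    (hC : ∀ a b : Fin n → ℝ, σ a ≤ 1 → ∑ i, a i * b i ≤ C * ‖b‖) {a b c : Fin n → ℝ} {δ : ℝ}
    (ha : σ a ≤ 1) (hac : dualNorm σ c - δ < ∑ i, a i * c i) :
    dualNorm σ b ≤ ∑ i, a i * b i + δ + 2 * C * ‖b - c‖ := by
  have hsplit : ∑ i, a i * c i = ∑ i, a i * b i + ∑ i, a i * (c - b) i := by
    simp only [Pi.sub_apply, mul_sub, Finset.sum_sub_distrib]
    ring
  have hcb := hC a (c - b) ha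
  rw [norm_sub_rev] at hcb
  linarith [dualNorm_le_add h0 hC b c]

end DualNorm

section LatticeNorm

theorem map_zero_of_map_smul {E : Type*} [AddCommGroup E] [Module ℝ E] {σ : E → ℝ}
    (hσ_smul : ∀ (t : ℝ) (a : E), σ (t • a) = |t| * σ a) : σ 0 = 0 := by
  simpa using hσ_smul 0 0

theorem convex_setOf_le_one {E : Type*} [AddCommGroup E] [Module ℝ E] {σ : E → ℝ}
    (hσ_add : ∀ a b : E, σ (a + b) ≤ σ a + σ b)
    (hσ_smul : ∀ (t : ℝ) (a : E), σ (t • a) = |t| * σ a) : Convex ℝ {a | σ a ≤ 1} := by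
  intro a ha b hb s t hs ht hst
  calc σ (s • a + t • b) ≤ |s| * σ a + |t| * σ b := by
        rw [← hσ_smul, ← hσ_smul]
        exact hσ_add _ _
    _ ≤ s * 1 + t * 1 := by
        rw [abs_of_nonneg hs, abs_of_nonneg ht]
        gcongr
        exacts [ha, hb]
    _ = 1 := by rw [mul_one, mul_one, hst]

variable {ι : Type*} [DecidableEq ι] {σ : (ι → ℝ) → ℝ}

theorem abs_apply_mul_le (hσ_smul : ∀ (t : ℝ) (a : ι → ℝ), σ (t • a) = |t| * σ a)
    (hσ_mono : ∀ a b : ι → ℝ, (∀ i, |a i| ≤ |b i|) → σ a ≤ σ b) (a : ι → ℝ) (i : ι) :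
    |a i| * σ (Pi.single i 1) ≤ σ a := by
  rw [← hσ_smul]
  refine hσ_mono _ _ fun k => ?_
  rcases eq_or_ne k i with rfl | hk
  · simp
  · simp [hk]

theorem map_single_pos (hσ_smul : ∀ (t : ℝ) (a : ι → ℝ), σ (t • a) = |t| * σ a)
    (hσ_def : ∀ a : ι → ℝ, σ a = 0 → a = 0)
    (hσ_mono : ∀ a b : ι → ℝ, (∀ i, |a i| ≤ |b i|) → σ a ≤ σ b) (i : ι) :
    0 < σ (Pi.single i 1) := by
  refine lt_of_le_of_ne ?_ fun h => ?_
  · simpa [map_zero_of_map_smul hσ_smul] using hσ_mono 0 (Pi.single i 1) (by simp)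
  · simpa using congrFun (hσ_def _ h.symm) i

theorem sum_mul_le_of_le_one [Fintype ι]
    (hσ_smul : ∀ (t : ℝ) (a : ι → ℝ), σ (t • a) = |t| * σ a)
    (hσ_def : ∀ a : ι → ℝ, σ a = 0 → a = 0)
    (hσ_mono : ∀ a b : ι → ℝ, (∀ i, |a i| ≤ |b i|) → σ a ≤ σ b)
    {a : ι → ℝ} (ha : σ a ≤ 1) (b : ι → ℝ) :
    ∑ i, a i * b i ≤ (∑ i, (σ (Pi.single i 1))⁻¹) * ‖b‖ := by
  rw [Finset.sum_mul]
  refine Finset.sum_le_sum fun i _ => ?_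
  have hpos := map_single_pos hσ_smul hσ_def hσ_mono i
  have hai : |a i| ≤ (σ (Pi.single i 1))⁻¹ := by
    rw [← one_div, le_div_iff₀ hpos]
    exact (abs_apply_mul_le hσ_smul hσ_mono a i).trans ha
  calc a i * b i ≤ |a i| * ‖b i‖ := by
        rw [Real.norm_eq_abs, ← abs_mul]
        exact le_abs_self _
    _ ≤ (σ (Pi.single i 1))⁻¹ * ‖b‖ :=
        mul_le_mul hai (norm_le_pi_norm b i) (norm_nonneg _) (inv_nonneg.mpr hpos.le)

end LatticeNorm

theorem exists_continuous_forall_mem_and_lt {X E : Type*} [TopologicalSpace X] [NormalSpace X]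
    [ParacompactSpace X] [AddCommGroup E] [Module ℝ E] [TopologicalSpace E] [ContinuousAdd E]
    [ContinuousSMul ℝ E] {B : Set E} (hB : Convex ℝ B) {ℓ : X → E →ₗ[ℝ] ℝ}
    (hℓ : ∀ a, Continuous fun x => ℓ x a) {φ : X → ℝ} (hφ : Continuous φ)
    (H : ∀ x, ∃ a ∈ B, φ x < ℓ x a) : ∃ h : C(X, E), ∀ x, h x ∈ B ∧ φ x < ℓ x (h x) := by
  refine exists_continuous_forall_mem_convex_of_local_const
    (t := fun x => B ∩ {a | φ x < ℓ x a})
    (fun x => hB.inter (convex_halfSpace_gt (ℓ x).isLinear _)) fun x => ?_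
  obtain ⟨a, haB, hxa⟩ := H x
  exact ⟨a, (hφ.continuousAt.eventually_lt (hℓ a).continuousAt hxa).mono fun y hy => ⟨haB, hy⟩⟩

theorem integral_dualNorm_le {X : Type*} [MeasurableSpace X] {μ : Measure X} [IsFiniteMeasure μ]
    {n : ℕ} {σ : (Fin n → ℝ) → ℝ} {C : ℝ} (h0 : σ 0 ≤ 1)
    (hC : ∀ a b : Fin n → ℝ, σ a ≤ 1 → ∑ i, a i * b i ≤ C * ‖b‖) {f G H : X → Fin n → ℝ} {δ : ℝ}
    (hf : Integrable f μ) (hG : Integrable G μ)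
    (hH : ∀ t, σ (H t) ≤ 1 ∧ dualNorm σ (G t) - δ < ∑ i, H t i * G t i)
    (hHf : ∀ i, Integrable (fun t => H t i * f t i) μ) :
    ∫ t, dualNorm σ (f t) ∂μ ≤
      ∑ i, ∫ t, H t i * f t i ∂μ + δ * μ.real Set.univ + 2 * C * ∫ t, ‖f t - G t‖ ∂μ := by
  have hHf_add : Integrable (fun t => ∑ i, H t i * f t i + δ) μ :=
    (integrable_finsetSum _ fun i _ => hHf i).add (integrable_const δ)
  have hfG : Integrable (fun t => ‖f t - G t‖) μ := (hf.sub hG).norm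
  calc ∫ t, dualNorm σ (f t) ∂μ
      ≤ ∫ t, (∑ i, H t i * f t i + δ + 2 * C * ‖f t - G t‖) ∂μ :=
        integral_mono_of_nonneg (ae_of_all _ fun t => dualNorm_nonneg h0 hC _)
          (hHf_add.add (hfG.const_mul _))
          (ae_of_all _ fun t => dualNorm_le_sum_mul_add h0 hC (hH t).1 (hH t).2)
    _ = _ := by
        rw [integral_add hHf_add (hfG.const_mul _),
          integral_add (integrable_finsetSum _ fun i _ => hHf i) (integrable_const δ),
          integral_finsetSum _ fun i _ => hHf i, integral_const, integral_const_mul, smul_eq_mul,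
          mul_comm δ]

/-- Linearization lemma: given integrable `g₁, …, gₙ` on a compact
Hausdorff space with a finite regular Borel measure, and a lattice norm `σ` on `ℝⁿ`, the
integral of `σ*(g₁, …, gₙ)` is almost attained by a continuous selection `h₁, …, hₙ`
with `σ(h₁(t), …, hₙ(t)) ≤ 1` everywhere. -/
theorem dualNorm_integral_linearization
    {K : Type*} [TopologicalSpace K] [CompactSpace K] [T2Space K]
    [MeasurableSpace K] [BorelSpace K]
    (μ : Measure K) [IsFiniteMeasure μ] [μ.Regular]
    (n : ℕ) (σ : (Fin n → ℝ) → ℝ)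
    (hσ_add : ∀ a b : Fin n → ℝ, σ (a + b) ≤ σ a + σ b)
    (hσ_smul : ∀ (t : ℝ) (a : Fin n → ℝ), σ (t • a) = |t| * σ a)
    (hσ_def : ∀ a : Fin n → ℝ, σ a = 0 → a = 0)
    (hσ_mono : ∀ a b : Fin n → ℝ, (∀ i, |a i| ≤ |b i|) → σ a ≤ σ b)
    (g : Fin n → K → ℝ) (hg : ∀ i, Integrable (g i) μ)
    (ε : ℝ) (hε : 0 < ε) :
    ∃ h : Fin n → ContinuousMap K ℝ,
      (∀ t : K, σ (fun i => h i t) ≤ 1) ∧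
      ∫ t, dualNorm σ (fun i => g i t) ∂μ ≤ (∑ i, ∫ t, h i t * g i t ∂μ) + ε := by
  set C : ℝ := ∑ i, (σ (Pi.single i 1))⁻¹
  have hC : ∀ a b : Fin n → ℝ, σ a ≤ 1 → ∑ i, a i * b i ≤ C * ‖b‖ := fun a b ha =>
    sum_mul_le_of_le_one hσ_smul hσ_def hσ_mono ha b
  have hC0 : 0 ≤ C := Finset.sum_nonneg fun i _ =>
    (inv_pos.mpr (map_single_pos hσ_smul hσ_def hσ_mono i)).le
  have h0 : σ 0 ≤ 1 := by simp [map_zero_of_map_smul hσ_smul]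
  set M := μ.real Set.univ
  set δ := ε / 2 / (M + 1)
  set η := ε / 4 / (C + 1)
  have hg' : Integrable (fun t i => g i t) μ := Integrable.of_eval hg
  obtain ⟨G, hGg, hG⟩ := hg'.exists_boundedContinuous_integral_sub_le (show 0 < η by positivity)
  obtain ⟨H, hH⟩ := exists_continuous_forall_mem_and_lt (convex_setOf_le_one hσ_add hσ_smul)
    (ℓ := fun t => (dotProductBilin ℝ ℝ).flip (G t))
    (fun a => show Continuous fun t => ∑ i, a i * G t i by fun_prop)
    (φ := fun t => dualNorm σ (G t) - δ)
    (((continuous_dualNorm h0 hC).comp G.continuous).sub continuous_const)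
    fun t => exists_dualNorm_sub_lt_sum_mul h0 (G t) (by positivity)
  have hHg : ∀ i, Integrable (fun t => H t i * g i t) μ := fun i => integrableOn_univ.mp
    ((hg i).integrableOn.continuousOn_mul (by fun_prop) isCompact_univ)
  refine ⟨fun i => ⟨fun t => H t i, by fun_prop⟩, fun t => (hH t).1, ?_⟩
  have hδM : δ * M ≤ ε / 2 := by
    rw [div_mul_eq_mul_div, div_le_iff₀ (by positivity)]
    nlinarith
  have hCη : 2 * C * η ≤ ε / 2 := by
    rw [mul_div_assoc', div_le_iff₀ (by positivity)]
    nlinarith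
  have hCG := mul_le_mul_of_nonneg_left hGg (by positivity : 0 ≤ 2 * C)
  simp only [ContinuousMap.coe_mk]
  linarith [integral_dualNorm_le h0 hC hg' hG hH hHg]

end
end

section
/- Let (Ω, Σ, μ) be a measure space, 1 < p < ∞, p* = p/(p−1), and let f : Ω → ℝ be a measurable function with ‖f‖_{p,∞} := sup{ μ(A)^{−1/p*} ∫_A |f| dμ : A ∈ Σ, 0 < μ(A) < ∞ } < ∞. Then the following are equivalent: (a) for every ε > 0 there exists an integrable simple function s (a simple function whose support has finite measure) with ‖f − s‖_{p,∞} ≤ ε (i.e., f belongs to the order-continuous part L°_{p,∞}(μ)); (b) for every ε > 0 there exists δ > 0 such that every A ∈ Σ with 0 < μ(A) < δ satisfies μ(A)^{−1/p*} ∫_A |f| dμ ≤ ε, and for every ε > 0 there exists M > 0 such that every A ∈ Σ with M < μ(A) < ∞ satisfies μ(A)^{−1/p*} ∫_A |f| dμ ≤ ε. -/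
/-!
If `‖f - s‖_{p,∞} ≤ ε` for a simple `s` with `|s| ≤ C` and `∫|s| = I < ∞`, then
`μ(A)^{-1/p*} ∫_A |f| ≤ ε + min (C μ(A)^{1/p}) (μ(A)^{-1/p*} I)`, which gives both limits.

Conversely, cut `f` at a small level `c` and a large level `C`. On sets of measure at most `M`
the part `|f| ≤ c` contributes at most `c M^{1/p}`; the part `|f| > C` lives on sets of small
measure by the weak-type bound `C μ(B)^{1/p} ≤ ‖f‖_{p,∞}` for `B ⊆ {|f| ≥ C}`; sets of
measure larger than `M` are controlled by hypothesis. The same bound makes the finite-measure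
subsets of `{|f| > c}` uniformly bounded in measure, so (even though `μ` need not be
semifinite) they are exhausted by one set `F` of finite measure up to null sets. What remains,
`f` on `F ∩ {|f| ≤ C}`, is bounded with support of finite measure, hence a uniform limit of
integrable simple functions.
-/

noncomputable section

open scoped ENNReal
open MeasureTheory

/-- The weak-`L_p` norm `‖f‖_{p,∞} = sup { μ(A)^{1/p − 1} ∫_A |f| dμ : 0 < μ(A) < ∞ }`
of a measurable function `f : Ω → ℝ`, valued in `ℝ≥0∞`. -/
def weakLpNorm {Ω : Type*} [MeasurableSpace Ω] (μ : Measure Ω) (p : ℝ)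
    (f : Ω → ℝ) : ℝ≥0∞ :=
  ⨆ (A : Set Ω) (_ : MeasurableSet A) (_ : 0 < μ A) (_ : μ A ≠ ∞),
    μ A ^ (1 / p - 1) * ∫⁻ a in A, ENNReal.ofReal |f a| ∂μ

open Filter Topology Set

namespace ENNReal

theorem rpow_le_rpow_of_nonpos {x y : ℝ≥0∞} {z : ℝ} (hxy : x ≤ y) (hz : z ≤ 0) :
    y ^ z ≤ x ^ z := by
  rw [← neg_neg z, rpow_neg y, rpow_neg x, ENNReal.inv_le_inv]
  exact rpow_le_rpow hxy (neg_nonneg.2 hz)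

theorem rpow_sub_one_mul_self {x : ℝ≥0∞} (hx₀ : x ≠ 0) (hx : x ≠ ∞) (y : ℝ) :
    x ^ (y - 1) * x = x ^ y := by
  rw [rpow_sub _ _ hx₀ hx, rpow_one, ENNReal.div_mul_cancel hx₀ hx]

theorem ofReal_half_add_half {ε : ℝ} (hε : 0 ≤ ε) :
    ENNReal.ofReal (ε / 2) + ENNReal.ofReal (ε / 2) = ENNReal.ofReal ε := by
  rw [← ofReal_add (by positivity) (by positivity), add_halves]

theorem exists_pos_ofReal_mul_le {a : ℝ≥0∞} (ha : a ≠ ∞) {ε : ℝ} (hε : 0 < ε) :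
    ∃ c > 0, ENNReal.ofReal c * a ≤ ENNReal.ofReal ε := by
  refine ⟨ε / (a.toReal + 1), by positivity, ?_⟩
  calc ENNReal.ofReal (ε / (a.toReal + 1)) * a
        = ENNReal.ofReal (ε / (a.toReal + 1) * a.toReal) := by
        rw [ofReal_mul (by positivity), ofReal_toReal ha]
    _ ≤ ENNReal.ofReal ε := by
        apply ofReal_le_ofReal
        rw [div_mul_eq_mul_div, div_le_iff₀ (by positivity)]
        nlinarith [a.toReal_nonneg]

theorem exists_pos_forall_lt_ofReal {P : ℝ≥0∞ → Prop} (h : ∀ᶠ t in 𝓝 0, P t) :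
    ∃ δ > 0, ∀ t < ENNReal.ofReal δ, P t := by
  obtain ⟨a, ha, haP⟩ := nhds_zero_basis.eventually_iff.1 h
  obtain ⟨δ, -, hδ, hδa⟩ := lt_iff_exists_real_btwn.1 ha
  exact ⟨δ, ofReal_pos.1 hδ, fun t ht => haP (ht.trans hδa)⟩

theorem exists_pos_forall_ofReal_lt {P : ℝ≥0∞ → Prop} (h : ∀ᶠ t in 𝓝 ∞, P t) :
    ∃ M > 0, ∀ t, ENNReal.ofReal M < t → P t := by
  obtain ⟨a, ha, haP⟩ := nhds_top_basis.eventually_iff.1 h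
  refine ⟨a.toReal + 1, by positivity, fun t ht => haP ?_⟩
  calc a = ENNReal.ofReal a.toReal := (ofReal_toReal ha.ne).symm
    _ < ENNReal.ofReal (a.toReal + 1) := (ofReal_lt_ofReal_iff (by positivity)).2 (lt_add_one _)
    _ < t := ht

end ENNReal

theorem MeasureTheory.exists_exhausting_subset_of_measure_le {α : Type*} [MeasurableSpace α]
    {μ : Measure α} {E : Set α} {K : ℝ≥0∞} (hK : K ≠ ∞)
    (hE : ∀ B, MeasurableSet B → B ⊆ E → μ B ≠ ∞ → μ B ≤ K) :
    ∃ F ⊆ E, MeasurableSet F ∧ μ F ≠ ∞ ∧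
      ∀ B, MeasurableSet B → B ⊆ E \ F → μ B ≠ ∞ → μ B = 0 := by
  set 𝒞 : Set (Set α) := {B | MeasurableSet B ∧ B ⊆ E ∧ μ B ≠ ∞}
  set m := sSup (μ '' 𝒞)
  have hm : m ≠ ∞ := ne_top_of_le_ne_top hK <| sSup_le <| by
    rintro _ ⟨B, hB, rfl⟩
    exact hE B hB.1 hB.2.1 hB.2.2
  obtain ⟨u, -, hu, hu𝒞⟩ :=
    exists_seq_tendsto_sSup (show (μ '' 𝒞).Nonempty from
      ⟨0, ∅, ⟨.empty, empty_subset E, by simp⟩, measure_empty⟩)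
      (OrderTop.bddAbove (μ '' 𝒞))
  choose B hB hμB using hu𝒞
  have hacc : ∀ n, accumulate B n ∈ 𝒞 := fun n =>
    ⟨.biUnion (to_countable _) fun k _ => (hB k).1, iUnion₂_subset fun k _ => (hB k).2.1,
      (measure_biUnion_lt_top (finite_Iic n) fun k _ => (hB k).2.2.lt_top).ne⟩
  have hFm : μ (⋃ n, B n) = m := by
    refine le_antisymm ?_ (le_of_tendsto' hu fun n => hμB n ▸ measure_mono (subset_iUnion B n))
    rw [measure_iUnion_eq_iSup_accumulate]
    exact iSup_le fun n => le_sSup ⟨_, hacc n, rfl⟩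
  have hF : (⋃ n, B n) ∈ 𝒞 :=
    ⟨.iUnion fun n => (hB n).1, iUnion_subset fun n => (hB n).2.1, hFm ▸ hm⟩
  refine ⟨⋃ n, B n, hF.2.1, hF.1, hF.2.2, fun B' hB' hB'E hB'fin => ?_⟩
  have hunion : μ (⋃ n, B n) + μ B' ≤ μ (⋃ n, B n) + 0 :=
    calc μ (⋃ n, B n) + μ B' = μ ((⋃ n, B n) ∪ B') :=
          (measure_union (disjoint_sdiff_right.mono_right hB'E) hB').symm
      _ ≤ m := le_sSup ⟨_, ⟨hF.1.union hB', union_subset hF.2.1 fun x hx => (hB'E hx).1,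
          (measure_union_lt_top hF.2.2.lt_top hB'fin.lt_top).ne⟩, rfl⟩
      _ = μ (⋃ n, B n) + 0 := by rw [hFm, add_zero]
  exact nonpos_iff_eq_zero.1 ((ENNReal.add_le_add_iff_left hF.2.2).1 hunion)

section WeakLp

variable {Ω : Type*} [MeasurableSpace Ω] {μ : Measure Ω} {p : ℝ} {f g : Ω → ℝ}
  {A B : Set Ω}

variable (μ p) in
def weakLpRatio (f : Ω → ℝ) (A : Set Ω) : ℝ≥0∞ :=
  μ A ^ (1 / p - 1) * ∫⁻ a in A, ENNReal.ofReal |f a| ∂μ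

variable (μ p) in
def MemWeakLpOrderContinuous (f : Ω → ℝ) : Prop :=
  ∀ ε > (0 : ℝ), ∃ s : SimpleFunc Ω ℝ, μ (Function.support s) < ∞ ∧
    weakLpNorm μ p (fun a => f a - s a) ≤ ENNReal.ofReal ε

variable (μ p) in
def WeakLpRatioVanishesOnSmallSets (f : Ω → ℝ) : Prop :=
  ∀ ε > (0 : ℝ), ∃ δ > (0 : ℝ), ∀ A : Set Ω, MeasurableSet A →
    0 < μ A → μ A < ENNReal.ofReal δ → weakLpRatio μ p f A ≤ ENNReal.ofReal ε

variable (μ p) in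
def WeakLpRatioVanishesOnLargeSets (f : Ω → ℝ) : Prop :=
  ∀ ε > (0 : ℝ), ∃ M > (0 : ℝ), ∀ A : Set Ω, MeasurableSet A →
    ENNReal.ofReal M < μ A → μ A ≠ ∞ → weakLpRatio μ p f A ≤ ENNReal.ofReal ε

theorem weakLpRatio_le_weakLpNorm (hA : MeasurableSet A) (h₀ : 0 < μ A) (hA' : μ A ≠ ∞) :
    weakLpRatio μ p f A ≤ weakLpNorm μ p f :=
  le_iSup_of_le A <| le_iSup_of_le hA <| le_iSup_of_le h₀ <| le_iSup_of_le hA' le_rfl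

theorem weakLpNorm_le_iff {L : ℝ≥0∞} :
    weakLpNorm μ p f ≤ L ↔
      ∀ A, MeasurableSet A → 0 < μ A → μ A ≠ ∞ → weakLpRatio μ p f A ≤ L := by
  simp only [weakLpNorm, iSup_le_iff]
  rfl

theorem weakLpRatio_of_measure_eq_zero (h : μ A = 0) : weakLpRatio μ p f A = 0 := by
  rw [weakLpRatio, setLIntegral_measure_zero _ _ h, mul_zero]

theorem weakLpRatio_mono (hA : MeasurableSet A) (h : ∀ x ∈ A, |f x| ≤ |g x|) :
    weakLpRatio μ p f A ≤ weakLpRatio μ p g A :=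
  mul_le_mul_right (setLIntegral_mono' hA fun x hx => ENNReal.ofReal_le_ofReal (h x hx)) _

theorem weakLpRatio_add_le (hg : Measurable g) :
    weakLpRatio μ p (fun a => f a + g a) A ≤ weakLpRatio μ p f A + weakLpRatio μ p g A := by
  rw [weakLpRatio, weakLpRatio, weakLpRatio, ← mul_add,
    ← lintegral_add_right _ hg.abs.ennreal_ofReal]
  gcongr with a
  rw [← ENNReal.ofReal_add (abs_nonneg _) (abs_nonneg _)]
  exact ENNReal.ofReal_le_ofReal (abs_add_le _ _)

theorem weakLpNorm_add_le (hg : Measurable g) :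
    weakLpNorm μ p (fun a => f a + g a) ≤ weakLpNorm μ p f + weakLpNorm μ p g :=
  weakLpNorm_le_iff.2 fun _ hA h₀ hA' => (weakLpRatio_add_le hg).trans <|
    add_le_add (weakLpRatio_le_weakLpNorm hA h₀ hA') (weakLpRatio_le_weakLpNorm hA h₀ hA')

theorem weakLpRatio_le_weakLpNorm_sub_add (hg : Measurable g) (hA : MeasurableSet A)
    (h₀ : 0 < μ A) (hA' : μ A ≠ ∞) :
    weakLpRatio μ p f A ≤ weakLpNorm μ p (fun a => f a - g a) + weakLpRatio μ p g A :=
  calc weakLpRatio μ p f A = weakLpRatio μ p (fun a => (f a - g a) + g a) A := by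
        simp only [sub_add_cancel]
    _ ≤ _ := (weakLpRatio_add_le hg).trans <|
        add_le_add (weakLpRatio_le_weakLpNorm hA h₀ hA') le_rfl

theorem weakLpRatio_le_of_abs_le {c : ℝ} (hA : MeasurableSet A) (hA' : μ A ≠ ∞)
    (h : ∀ x ∈ A, |f x| ≤ c) :
    weakLpRatio μ p f A ≤ ENNReal.ofReal c * μ A ^ (1 / p) := by
  rcases eq_or_ne (μ A) 0 with h₀ | h₀
  · rw [weakLpRatio_of_measure_eq_zero h₀]
    exact zero_le
  calc weakLpRatio μ p f A ≤ μ A ^ (1 / p - 1) * ∫⁻ _ in A, ENNReal.ofReal c ∂μ :=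
        mul_le_mul_right (setLIntegral_mono' hA fun x hx => ENNReal.ofReal_le_ofReal (h x hx)) _
    _ = ENNReal.ofReal c * μ A ^ (1 / p) := by
        rw [setLIntegral_const, mul_left_comm, ENNReal.rpow_sub_one_mul_self h₀ hA']

theorem ofReal_mul_rpow_le_weakLpNorm {c : ℝ} (hp : 0 < p) (hB : MeasurableSet B)
    (hB' : μ B ≠ ∞) (h : ∀ x ∈ B, c ≤ |f x|) :
    ENNReal.ofReal c * μ B ^ (1 / p) ≤ weakLpNorm μ p f := by
  rcases eq_or_ne (μ B) 0 with h₀ | h₀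
  · simp [h₀, ENNReal.zero_rpow_of_pos (inv_pos.2 hp)]
  calc ENNReal.ofReal c * μ B ^ (1 / p)
        = μ B ^ (1 / p - 1) * ∫⁻ _ in B, ENNReal.ofReal c ∂μ := by
        rw [setLIntegral_const, mul_left_comm, ENNReal.rpow_sub_one_mul_self h₀ hB']
    _ ≤ weakLpRatio μ p f B :=
        mul_le_mul_right (setLIntegral_mono' hB fun x hx => ENNReal.ofReal_le_ofReal (h x hx)) _
    _ ≤ weakLpNorm μ p f := weakLpRatio_le_weakLpNorm hB (pos_iff_ne_zero.2 h₀) hB'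

theorem measure_lt_of_weakLpNorm_lt {c : ℝ} {d : ℝ≥0∞} (hp : 0 < p) (hB : MeasurableSet B)
    (hB' : μ B ≠ ∞) (h : ∀ x ∈ B, c ≤ |f x|)
    (hd : weakLpNorm μ p f < ENNReal.ofReal c * d ^ (1 / p)) : μ B < d :=
  lt_of_not_ge fun hdB => hd.not_ge <|
    (mul_le_mul_right (ENNReal.rpow_le_rpow hdB (by positivity)) _).trans
      (ofReal_mul_rpow_le_weakLpNorm hp hB hB' h)

theorem rpow_mul_setLIntegral_le_weakLpRatio (hp : 1 ≤ p) (hBA : B ⊆ A) :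
    μ A ^ (1 / p - 1) * ∫⁻ a in B, ENNReal.ofReal |f a| ∂μ ≤ weakLpRatio μ p f B :=
  mul_le_mul_left (ENNReal.rpow_le_rpow_of_nonpos (measure_mono hBA)
    (sub_nonpos.2 ((div_le_one (zero_lt_one.trans_le hp)).2 hp))) _

theorem weakLpRatio_indicator (hB : MeasurableSet B) :
    weakLpRatio μ p (B.indicator f) A =
      μ A ^ (1 / p - 1) * ∫⁻ a in B ∩ A, ENNReal.ofReal |f a| ∂μ := by
  rw [weakLpRatio, ← Measure.restrict_restrict hB, ← lintegral_indicator hB]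
  congr 2 with a
  by_cases ha : a ∈ B <;> simp [ha]

theorem weakLpRatio_indicator_le (hp : 1 ≤ p) (hB : MeasurableSet B) :
    weakLpRatio μ p (B.indicator f) A ≤ weakLpRatio μ p f (B ∩ A) :=
  (weakLpRatio_indicator hB).trans_le (rpow_mul_setLIntegral_le_weakLpRatio hp inter_subset_right)

theorem weakLpRatio_indicator_le_add {B₁ B₂ : Set Ω} (hB : MeasurableSet B)
    (hB₁ : MeasurableSet B₁) (hB₂ : MeasurableSet B₂) (h : B ⊆ B₁ ∪ B₂) :
    weakLpRatio μ p (B.indicator f) A ≤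
      weakLpRatio μ p (B₁.indicator f) A + weakLpRatio μ p (B₂.indicator f) A := by
  rw [weakLpRatio_indicator hB, weakLpRatio_indicator hB₁, weakLpRatio_indicator hB₂,
    ← mul_add]
  gcongr
  calc ∫⁻ a in B ∩ A, ENNReal.ofReal |f a| ∂μ
      ≤ ∫⁻ a in B₁ ∩ A ∪ B₂ ∩ A, ENNReal.ofReal |f a| ∂μ :=
        lintegral_mono_set (union_inter_distrib_right B₁ B₂ A ▸ inter_subset_inter_left A h)
    _ ≤ _ := lintegral_union_le _ _ _

theorem MemWeakLpOrderContinuous.weakLpRatioVanishesOnSmallSets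
    (hf : MemWeakLpOrderContinuous μ p f) (hp : 0 < p) :
    WeakLpRatioVanishesOnSmallSets μ p f := by
  intro ε hε
  obtain ⟨s, -, hs⟩ := hf (ε / 2) (half_pos hε)
  obtain ⟨C, hC⟩ := s.exists_forall_norm_le
  have hlim : Tendsto (fun t : ℝ≥0∞ => ENNReal.ofReal C * t ^ (1 / p)) (𝓝 0) (𝓝 0) := by
    have h0 : (0 : ℝ≥0∞) ^ (1 / p) = 0 := ENNReal.zero_rpow_of_pos (one_div_pos.2 hp)
    simpa [h0] using ENNReal.Tendsto.const_mul
      (ENNReal.continuous_rpow_const.tendsto' 0 0 h0) (Or.inr ENNReal.ofReal_ne_top)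
  obtain ⟨δ, hδ, hsmall⟩ := ENNReal.exists_pos_forall_lt_ofReal
    (hlim.eventually (Iic_mem_nhds (ENNReal.ofReal_pos.2 (half_pos hε))))
  refine ⟨δ, hδ, fun A hA h₀ hAδ => ?_⟩
  have hA' : μ A ≠ ∞ := ne_top_of_lt (hAδ.trans ENNReal.ofReal_lt_top)
  calc weakLpRatio μ p f A
      ≤ weakLpNorm μ p (fun a => f a - s a) + weakLpRatio μ p s A :=
        weakLpRatio_le_weakLpNorm_sub_add s.measurable hA h₀ hA'
    _ ≤ ENNReal.ofReal (ε / 2) + ENNReal.ofReal (ε / 2) :=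
        add_le_add hs <| (weakLpRatio_le_of_abs_le hA hA' fun x _ => hC x).trans (hsmall _ hAδ)
    _ = ENNReal.ofReal ε := ENNReal.ofReal_half_add_half hε.le

theorem MemWeakLpOrderContinuous.weakLpRatioVanishesOnLargeSets
    (hf : MemWeakLpOrderContinuous μ p f) (hp : 1 < p) :
    WeakLpRatioVanishesOnLargeSets μ p f := by
  intro ε hε
  obtain ⟨s, hs_supp, hs⟩ := hf (ε / 2) (half_pos hε)
  have hI : ∫⁻ a, ENNReal.ofReal |s a| ∂μ ≠ ∞ := by
    have := (SimpleFunc.integrable_iff_finMeasSupp.2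
      (SimpleFunc.finMeasSupp_iff_support.2 hs_supp)).hasFiniteIntegral
    simpa [HasFiniteIntegral, Real.enorm_eq_ofReal_abs] using this.ne
  have he : 1 / p - 1 < 0 := sub_neg.2 ((div_lt_one (zero_lt_one.trans hp)).2 hp)
  have hlim : Tendsto (fun t : ℝ≥0∞ => t ^ (1 / p - 1) * ∫⁻ a, ENNReal.ofReal |s a| ∂μ)
      (𝓝 ∞) (𝓝 0) := by
    simpa [ENNReal.top_rpow_of_neg he] using ENNReal.Tendsto.mul_const
      (ENNReal.continuous_rpow_const.tendsto' ∞ 0 (ENNReal.top_rpow_of_neg he)) (Or.inr hI)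
  obtain ⟨M, hM, hlarge⟩ := ENNReal.exists_pos_forall_ofReal_lt
    (hlim.eventually (Iic_mem_nhds (ENNReal.ofReal_pos.2 (half_pos hε))))
  refine ⟨M, hM, fun A hA hMA hA' => ?_⟩
  calc weakLpRatio μ p f A
      ≤ weakLpNorm μ p (fun a => f a - s a) + weakLpRatio μ p s A :=
        weakLpRatio_le_weakLpNorm_sub_add s.measurable hA (pos_of_gt hMA) hA'
    _ ≤ ENNReal.ofReal (ε / 2) + ENNReal.ofReal (ε / 2) :=
        add_le_add hs <|
          (mul_le_mul_right (setLIntegral_le_lintegral _ _) _).trans (hlarge _ hMA)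
    _ = ENNReal.ofReal ε := ENNReal.ofReal_half_add_half hε.le

theorem exists_simpleFunc_abs_sub_le {C η : ℝ} (hg : Measurable g) (hC : ∀ x, |g x| ≤ C)
    (hη : 0 < η) :
    ∃ s : SimpleFunc Ω ℝ, (∀ x, |g x - s x| ≤ η) ∧ ∀ x, g x = 0 → s x = 0 := by
  let k : Ω → ℤ := fun x => ⌊g x / η⌋
  have hk : Measurable k := (hg.div_const η).floor
  have hk_range : (range k).Finite := (finite_Icc ⌊-C / η⌋ ⌊C / η⌋).subset <| by
    rintro _ ⟨x, rfl⟩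
    obtain ⟨hlo, hhi⟩ := abs_le.1 (hC x)
    exact ⟨Int.floor_le_floor (div_le_div_of_nonneg_right hlo hη.le),
      Int.floor_le_floor (div_le_div_of_nonneg_right hhi hη.le)⟩
  let t : SimpleFunc Ω ℤ := ⟨k, fun n => hk (measurableSet_singleton n), hk_range⟩
  refine ⟨t.map fun n : ℤ => η * n, fun x => ?_, fun x hx => by simp [t, k, hx]⟩
  have hlo := Int.floor_le (g x / η)
  have hhi := Int.lt_floor_add_one (g x / η)
  rw [le_div_iff₀ hη] at hlo
  rw [div_lt_iff₀ hη] at hhi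
  simp only [SimpleFunc.coe_map, Function.comp_apply, t, SimpleFunc.coe_mk, k]
  rw [abs_le]
  constructor <;> nlinarith

theorem memWeakLpOrderContinuous_of_abs_le {F : Set Ω} {C : ℝ} (hp : 1 ≤ p) (hg : Measurable g)
    (hF : MeasurableSet F) (hF' : μ F ≠ ∞) (hgF : ∀ x ∉ F, g x = 0)
    (hgC : ∀ x, |g x| ≤ C) :
    MemWeakLpOrderContinuous μ p g := by
  intro ε hε
  obtain ⟨η, hη, hηF⟩ := ENNReal.exists_pos_ofReal_mul_le
    (ENNReal.rpow_ne_top_of_nonneg (by positivity) hF' : μ F ^ (1 / p) ≠ ∞) hε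
  obtain ⟨s, hgs, hs₀⟩ := exists_simpleFunc_abs_sub_le hg hgC hη
  have hsF : ∀ x ∉ F, s x = 0 := fun x hx => hs₀ x (hgF x hx)
  refine ⟨s, (measure_mono (Function.support_subset_iff'.2 hsF)).trans_lt hF'.lt_top,
    weakLpNorm_le_iff.2 fun A hA _ hA' => ?_⟩
  calc weakLpRatio μ p (fun a => g a - s a) A
      ≤ weakLpRatio μ p (F.indicator fun _ => η) A := weakLpRatio_mono hA fun x _ => by
        by_cases hx : x ∈ F
        · simpa [hx, abs_of_pos hη] using hgs x
        · simp [hx, hgF x hx, hsF x hx]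
    _ ≤ weakLpRatio μ p (fun _ => η) (F ∩ A) := weakLpRatio_indicator_le hp hF
    _ ≤ ENNReal.ofReal η * μ (F ∩ A) ^ (1 / p) :=
        weakLpRatio_le_of_abs_le (hF.inter hA) (measure_ne_top_of_subset inter_subset_right hA')
          fun _ _ => (abs_of_pos hη).le
    _ ≤ ENNReal.ofReal η * μ F ^ (1 / p) := by gcongr; exact inter_subset_left
    _ ≤ ENNReal.ofReal ε := hηF

theorem MemWeakLpOrderContinuous.of_approx
    (h : ∀ ε > (0 : ℝ), ∃ g, Measurable g ∧ MemWeakLpOrderContinuous μ p g ∧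
      weakLpNorm μ p (fun a => f a - g a) ≤ ENNReal.ofReal ε) :
    MemWeakLpOrderContinuous μ p f := by
  intro ε hε
  obtain ⟨g, hg, hg_mem, hfg⟩ := h (ε / 2) (half_pos hε)
  obtain ⟨s, hs_supp, hgs⟩ := hg_mem (ε / 2) (half_pos hε)
  refine ⟨s, hs_supp, ?_⟩
  calc weakLpNorm μ p (fun a => f a - s a)
      = weakLpNorm μ p (fun a => (f a - g a) + (g a - s a)) := by simp only [sub_add_sub_cancel]
    _ ≤ weakLpNorm μ p (fun a => f a - g a) + weakLpNorm μ p (fun a => g a - s a) :=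
        weakLpNorm_add_le (hg.sub s.measurable)
    _ ≤ ENNReal.ofReal (ε / 2) + ENNReal.ofReal (ε / 2) := add_le_add hfg hgs
    _ = ENNReal.ofReal ε := ENNReal.ofReal_half_add_half hε.le

theorem weakLpRatio_indicator_compl_le {F : Set Ω} {c C : ℝ} (hp : 1 ≤ p) (hf : Measurable f)
    (hF : MeasurableSet F) (hc : 0 ≤ c)
    (hnull : ∀ B, MeasurableSet B → B ⊆ {x | c < |f x|} \ F → μ B ≠ ∞ → μ B = 0)
    (hA : MeasurableSet A) (hA' : μ A ≠ ∞) :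
    weakLpRatio μ p ((F ∩ {x | |f x| ≤ C})ᶜ.indicator f) A ≤
      ENNReal.ofReal c * μ A ^ (1 / p) + weakLpRatio μ p f ({x | C < |f x|} ∩ A) := by
  set U₁ := {x | |f x| ≤ c}
  set N := {x | c < |f x|} \ F
  set U₃ := {x | C < |f x|}
  have hU₁ : MeasurableSet U₁ := measurableSet_le hf.abs measurable_const
  have hN : MeasurableSet N := (measurableSet_lt measurable_const hf.abs).diff hF
  have hU₃ : MeasurableSet U₃ := measurableSet_lt measurable_const hf.abs
  have hcover : (F ∩ {x | |f x| ≤ C})ᶜ ⊆ (U₁ ∪ N) ∪ U₃ := by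
    intro x hx
    by_cases h₁ : |f x| ≤ c
    · exact Or.inl (Or.inl h₁)
    by_cases hxF : x ∈ F
    · exact Or.inr (show C < |f x| from not_le.1 fun h => hx ⟨hxF, h⟩)
    · exact Or.inl (Or.inr ⟨not_le.1 h₁, hxF⟩)
  have hN_null : weakLpRatio μ p (N.indicator f) A = 0 := by
    rw [weakLpRatio_indicator hN, setLIntegral_measure_zero _ _ (hnull _ (hN.inter hA)
      inter_subset_left (measure_ne_top_of_subset inter_subset_right hA')), mul_zero]
  calc weakLpRatio μ p ((F ∩ {x | |f x| ≤ C})ᶜ.indicator f) A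
      ≤ weakLpRatio μ p (U₁.indicator f) A + weakLpRatio μ p (N.indicator f) A +
          weakLpRatio μ p (U₃.indicator f) A :=
        (weakLpRatio_indicator_le_add ((hF.inter (measurableSet_le hf.abs measurable_const)).compl)
          (hU₁.union hN) hU₃ hcover).trans <|
          add_le_add (weakLpRatio_indicator_le_add (hU₁.union hN) hU₁ hN subset_rfl) le_rfl
    _ ≤ ENNReal.ofReal c * μ A ^ (1 / p) + weakLpRatio μ p f (U₃ ∩ A) := by
        rw [hN_null, add_zero]
        refine add_le_add (weakLpRatio_le_of_abs_le hA hA' fun x _ => ?_)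
          (weakLpRatio_indicator_le hp hU₃)
        by_cases hx : x ∈ U₁
        · rw [indicator_of_mem hx]
          exact hx
        · rwa [indicator_of_notMem hx, abs_zero]

theorem exists_exhausting_subset_setOf_lt_abs {c : ℝ} (hp : 0 < p)
    (hfin : weakLpNorm μ p f ≠ ∞) (hc : 0 < c) :
    ∃ F ⊆ {x | c < |f x|}, MeasurableSet F ∧ μ F ≠ ∞ ∧
      ∀ B, MeasurableSet B → B ⊆ {x | c < |f x|} \ F → μ B ≠ ∞ → μ B = 0 := by
  obtain ⟨n, hn⟩ := ENNReal.exists_nat_mul_gt (ENNReal.ofReal_pos.2 hc).ne' hfin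
  refine exists_exhausting_subset_of_measure_le
    (ENNReal.rpow_ne_top_of_nonneg hp.le (ENNReal.natCast_ne_top n)) fun B hB hBc hB' =>
      (measure_lt_of_weakLpNorm_lt hp hB hB' (fun x hx => (hBc hx).le) ?_).le
  rwa [one_div, ENNReal.rpow_rpow_inv hp.ne', mul_comm]

theorem WeakLpRatioVanishesOnSmallSets.exists_forall_weakLpRatio_le
    (hsmall : WeakLpRatioVanishesOnSmallSets μ p f) (hp : 0 < p) (hfin : weakLpNorm μ p f ≠ ∞)
    {ε : ℝ} (hε : 0 < ε) :
    ∃ C ≥ (0 : ℝ), ∀ B, MeasurableSet B → μ B ≠ ∞ → (∀ x ∈ B, C < |f x|) →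
      weakLpRatio μ p f B ≤ ENNReal.ofReal ε := by
  obtain ⟨δ, hδ, hδB⟩ := hsmall ε hε
  obtain ⟨C, hC⟩ := ENNReal.exists_nat_mul_gt (a := ENNReal.ofReal δ ^ (1 / p))
    (ENNReal.rpow_pos (ENNReal.ofReal_pos.2 hδ) ENNReal.ofReal_ne_top).ne' hfin
  refine ⟨C, C.cast_nonneg, fun B hB hB' hBC => ?_⟩
  rcases eq_or_ne (μ B) 0 with h₀ | h₀
  · rw [weakLpRatio_of_measure_eq_zero h₀]
    exact zero_le
  refine hδB B hB (pos_iff_ne_zero.2 h₀) (measure_lt_of_weakLpNorm_lt hp hB hB'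
    (fun x hx => (hBC x hx).le) ?_)
  rwa [ENNReal.ofReal_natCast]

theorem memWeakLpOrderContinuous_of_vanishes (hp : 1 < p) (hf : Measurable f)
    (hfin : weakLpNorm μ p f ≠ ∞) (hsmall : WeakLpRatioVanishesOnSmallSets μ p f)
    (hlarge : WeakLpRatioVanishesOnLargeSets μ p f) : MemWeakLpOrderContinuous μ p f := by
  have hp₀ : 0 < p := zero_lt_one.trans hp
  refine MemWeakLpOrderContinuous.of_approx fun ε hε => ?_
  obtain ⟨M, -, hMA⟩ := hlarge (ε / 2) (half_pos hε)
  obtain ⟨C, hC₀, hC⟩ := hsmall.exists_forall_weakLpRatio_le hp₀ hfin (half_pos hε)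
  obtain ⟨c, hc, hcM⟩ := ENNReal.exists_pos_ofReal_mul_le
    (ENNReal.rpow_ne_top_of_nonneg (by positivity) ENNReal.ofReal_ne_top :
      ENNReal.ofReal M ^ (1 / p) ≠ ∞) (half_pos hε)
  obtain ⟨F, -, hF, hF', hnull⟩ := exists_exhausting_subset_setOf_lt_abs hp₀ hfin hc
  set S := F ∩ {x | |f x| ≤ C}
  have hS : MeasurableSet S := hF.inter (measurableSet_le hf.abs measurable_const)
  have hSC : ∀ x, |S.indicator f x| ≤ C := fun x => by
    by_cases hx : x ∈ S
    · simpa [hx] using hx.2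
    · simpa [hx] using hC₀
  refine ⟨S.indicator f, hf.indicator hS, memWeakLpOrderContinuous_of_abs_le hp.le
    (hf.indicator hS) hF hF' (fun x hx => indicator_of_notMem (fun h => hx h.1) f) hSC, ?_⟩
  rw [show (fun a => f a - S.indicator f a) = Sᶜ.indicator f by rw [indicator_compl]; rfl,
    weakLpNorm_le_iff]
  intro A hA h₀ hA'
  rcases le_or_gt (μ A) (ENNReal.ofReal M) with hAM | hAM
  · calc weakLpRatio μ p (Sᶜ.indicator f) A
        ≤ ENNReal.ofReal c * μ A ^ (1 / p) + weakLpRatio μ p f ({x | C < |f x|} ∩ A) :=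
          weakLpRatio_indicator_compl_le hp.le hf hF hc.le hnull hA hA'
      _ ≤ ENNReal.ofReal (ε / 2) + ENNReal.ofReal (ε / 2) :=
          add_le_add ((mul_le_mul_right (ENNReal.rpow_le_rpow hAM (by positivity)) _).trans hcM)
            (hC _ ((measurableSet_lt measurable_const hf.abs).inter hA)
              (measure_ne_top_of_subset inter_subset_right hA') fun _ hx => hx.1)
      _ = ENNReal.ofReal ε := ENNReal.ofReal_half_add_half hε.le
  · calc weakLpRatio μ p (Sᶜ.indicator f) A
        ≤ weakLpRatio μ p f A := weakLpRatio_mono hA fun x _ => by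
          by_cases hx : x ∈ Sᶜ <;> simp [hx]
      _ ≤ ENNReal.ofReal (ε / 2) := hMA A hA hAM hA'
      _ ≤ ENNReal.ofReal ε := ENNReal.ofReal_le_ofReal (half_le_self hε.le)

end WeakLp

/-- Characterization of membership in the order-continuous part
`L°_{p,∞}(μ)`: `f` is approximable by integrable simple functions in the weak-`L_p`
norm iff `μ(A)^{−1/p*} ∫_A |f| dμ` tends to `0` both as `μ(A) → 0` and as `μ(A) → ∞`. -/
theorem mem_orderContinuousPart_weakLp_iff
    {Ω : Type*} [MeasurableSpace Ω] (μ : Measure Ω)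
    (p : ℝ) (hp : 1 < p)
    (f : Ω → ℝ) (hmeas : Measurable f) (hfin : weakLpNorm μ p f ≠ ∞) :
    (∀ ε > (0 : ℝ), ∃ s : SimpleFunc Ω ℝ, μ (Function.support s) < ∞ ∧
        weakLpNorm μ p (fun a => f a - s a) ≤ ENNReal.ofReal ε) ↔
      ((∀ ε > (0 : ℝ), ∃ δ > (0 : ℝ), ∀ A : Set Ω, MeasurableSet A →
          0 < μ A → μ A < ENNReal.ofReal δ →
          μ A ^ (1 / p - 1) * ∫⁻ a in A, ENNReal.ofReal |f a| ∂μ ≤ ENNReal.ofReal ε) ∧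
        (∀ ε > (0 : ℝ), ∃ M > (0 : ℝ), ∀ A : Set Ω, MeasurableSet A →
          ENNReal.ofReal M < μ A → μ A ≠ ∞ →
          μ A ^ (1 / p - 1) * ∫⁻ a in A, ENNReal.ofReal |f a| ∂μ ≤ ENNReal.ofReal ε)) :=
  ⟨fun h => ⟨MemWeakLpOrderContinuous.weakLpRatioVanishesOnSmallSets h (zero_lt_one.trans hp),
      MemWeakLpOrderContinuous.weakLpRatioVanishesOnLargeSets h hp⟩,
    fun h => memWeakLpOrderContinuous_of_vanishes hp hmeas hfin h.1 h.2⟩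

end
end

section
/- Let (Ω, Σ, μ) be a measure space, let 1 < r < p < ∞, let a₁, …, aₙ ≥ 0, and let U₁, …, Uₙ be pairwise disjoint measurable sets with 0 < μ(Uᵢ) < ∞, and suppose C := (Σ_{i=1}^n μ(U_i))^{1/p − 1/r} (∫_Ω (Σ_{i=1}^n a_i 1_{U_i})^r dμ)^{1/r} ≤ 1. Then there exist d₁, …, dₙ ≥ 0 with Σ_{i=1}^n d_i ≤ 1 and c₁, …, cₙ ≥ 0 such that, with ν the measure on Σ defined by ν(A) = Σ_{i=1}^n d_i · μ(A ∩ U_i)/μ(U_i) and w = Σ_{i=1}^n c_i 1_{U_i}: (i) for every measurable f : Ω → ℝ with ‖f‖_{L^{[r]}_{p,∞}(μ)} ≤ 1 and every A ∈ Σ with 0 < ν(A) < ∞, ∫_A w |f| dν ≤ ν(A)^{1/p*} (i.e., multiplication by w is a contraction from L^{[r]}_{p,∞}(μ) into L^{[1]}_{p,∞}(ν)); and (ii) ‖w · Σ_{i=1}^n a_i 1_{U_i}‖_{L^{[1]}_{p,∞}(ν)} ≥ C^r. -/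
/-!
Let `T = ∑ μ(Uᵢ)`, `K = T^(r/p - 1)` (so that `C^r = K ∑ aᵢ^r μ(Uᵢ)`), `θ = (1 - 1/r)/(1 - 1/p)`
and `r'` the exponent conjugate to `r`. Give `ν` the density `eᵢ = θ K aᵢ^r + (1 - θ)/T` on `Uᵢ`
and put `cᵢ = Hᵢ / eᵢ` with `Hᵢ = K aᵢ^(r-1)`; then `∑ dᵢ = ∑ eᵢ μ(Uᵢ) = θ C^r + 1 - θ ≤ 1`.

For (i), `∫_A w|f| dν = ∫_B H|f| dμ` with `B = A ∩ ⋃ Uᵢ`. Hölder and the weak-norm bound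
`(∫_B |f|^r)^(1/r) ≤ μ(B)^(1/r - 1/p)` bound this by `(X^θ μ(B)^(1-θ))^(1 - 1/p)`, where
`X = ∫_B H^r' dμ`, and the weighted AM-GM inequality, applied after rescaling `X` and `μ(B)`,
bounds `X^θ μ(B)^(1-θ)` by `∫_B e dμ = ν(A)`. For (ii), test the weak norm on all of `Ω`:
`ν(Ω) ≤ 1` and `∫ w g dν = ∑ Hᵢ aᵢ μ(Uᵢ) = C^r`.
-/

noncomputable section

open scoped BigOperators ENNReal
open MeasureTheory
open Function

/-- The `L^{[r]}_{p,∞}(μ)` norm of a measurable function `f : Ω → ℝ`: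
`sup { μ(A)^{1/p − 1/r} (∫_A |f|^r dμ)^{1/r} : 0 < μ(A) < ∞ }`, valued in `ℝ≥0∞`. -/
def weakNorm {Ω : Type*} [MeasurableSpace Ω] (μ : Measure Ω) (p r : ℝ)
    (f : Ω → ℝ) : ℝ≥0∞ :=
  ⨆ (A : Set Ω) (_ : MeasurableSet A) (_ : 0 < μ A) (_ : μ A ≠ ∞),
    μ A ^ (1 / p - 1 / r) * (∫⁻ a in A, ENNReal.ofReal (|f a| ^ r) ∂μ) ^ (1 / r)

theorem ENNReal.geom_mean_le_arith_mean2_weighted {w₁ w₂ : ℝ} (hw₁ : 0 ≤ w₁) (hw₂ : 0 ≤ w₂)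
    (hw : w₁ + w₂ = 1) {x y : ℝ≥0∞} (hx : x ≠ ∞) (hy : y ≠ ∞) :
    x ^ w₁ * y ^ w₂ ≤ ENNReal.ofReal w₁ * x + ENNReal.ofReal w₂ * y := by
  lift x to NNReal using hx
  lift y to NNReal using hy
  have key := NNReal.geom_mean_le_arith_mean2_weighted w₁.toNNReal w₂.toNNReal x y
    (by rw [← Real.toNNReal_add hw₁ hw₂, hw, Real.toNNReal_one])
  rw [Real.coe_toNNReal _ hw₁, Real.coe_toNNReal _ hw₂] at key
  change _ ≤ (w₁.toNNReal : ℝ≥0∞) * x + (w₂.toNNReal : ℝ≥0∞) * y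
  rw [← ENNReal.coe_rpow_of_nonneg _ hw₁, ← ENNReal.coe_rpow_of_nonneg _ hw₂]
  exact_mod_cast key

theorem ENNReal.rpow_mul_rpow_le_of_rpow_mul_rpow_eq_one {θ σ τ : ℝ} (hθ0 : 0 ≤ θ) (hθ1 : θ ≤ 1)
    (hσ : 0 < σ) (hτ : 0 < τ) (hστ : σ ^ θ * τ ^ (1 - θ) = 1) {x y : ℝ≥0∞} (hx : x ≠ ∞)
    (hy : y ≠ ∞) :
    x ^ θ * y ^ (1 - θ) ≤ ENNReal.ofReal (θ * σ) * x + ENNReal.ofReal ((1 - θ) * τ) * y := by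
  have hθ1' : 0 ≤ 1 - θ := by linarith
  calc x ^ θ * y ^ (1 - θ)
      = (ENNReal.ofReal σ * x) ^ θ * (ENNReal.ofReal τ * y) ^ (1 - θ) := by
        rw [ENNReal.mul_rpow_of_nonneg _ x hθ0, ENNReal.mul_rpow_of_nonneg _ y hθ1',
          mul_mul_mul_comm, ENNReal.ofReal_rpow_of_pos hσ, ENNReal.ofReal_rpow_of_pos hτ,
          ← ENNReal.ofReal_mul (by positivity), hστ, ENNReal.ofReal_one, one_mul]
    _ ≤ ENNReal.ofReal θ * (ENNReal.ofReal σ * x) +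
          ENNReal.ofReal (1 - θ) * (ENNReal.ofReal τ * y) :=
        ENNReal.geom_mean_le_arith_mean2_weighted hθ0 hθ1' (by ring)
          (ENNReal.mul_ne_top ENNReal.ofReal_ne_top hx)
          (ENNReal.mul_ne_top ENNReal.ofReal_ne_top hy)
    _ = ENNReal.ofReal (θ * σ) * x + ENNReal.ofReal ((1 - θ) * τ) * y := by
        rw [ENNReal.ofReal_mul hθ0, ENNReal.ofReal_mul hθ1', mul_assoc, mul_assoc]

theorem sum_ofReal_mul_eq_ofReal_sum {ι : Type*} [Fintype ι] {x : ι → ℝ} (hx : ∀ i, 0 ≤ x i)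
    {m : ι → ℝ≥0∞} (hm : ∀ i, m i ≠ ∞) :
    ∑ i, ENNReal.ofReal (x i) * m i = ENNReal.ofReal (∑ i, x i * (m i).toReal) := by
  rw [ENNReal.ofReal_sum_of_nonneg fun i _ => mul_nonneg (hx i) ENNReal.toReal_nonneg]
  simp_rw [ENNReal.ofReal_mul (hx _), ENNReal.ofReal_toReal (hm _)]

theorem ENNReal.rpow_one_div_sub_mul_rpow_one_div_rpow {r : ℝ} (hr : 0 < r) (p : ℝ)
    (x y : ℝ≥0∞) : (x ^ (1 / p - 1 / r) * y ^ (1 / r)) ^ r = x ^ (r / p - 1) * y := by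
  rw [ENNReal.mul_rpow_of_nonneg _ _ hr.le, ← ENNReal.rpow_mul, ← ENNReal.rpow_mul,
    one_div_mul_cancel hr.ne', ENNReal.rpow_one]
  congr 2
  field_simp

theorem sum_rpow_mul_sum_ofReal_mul_eq {ι : Type*} [Fintype ι] {m : ι → ℝ≥0∞}
    (hm : ∀ i, m i ≠ ∞) (hm0 : 0 < ∑ i, (m i).toReal) {x : ι → ℝ} (hx : ∀ i, 0 ≤ x i) (s : ℝ) :
    (∑ i, m i) ^ s * ∑ i, ENNReal.ofReal (x i) * m i =
      ENNReal.ofReal ((∑ i, (m i).toReal) ^ s * ∑ i, x i * (m i).toReal) := by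
  rw [sum_ofReal_mul_eq_ofReal_sum hx hm,
    ← ENNReal.ofReal_toReal (ENNReal.sum_ne_top.2 fun i _ => hm i),
    ENNReal.toReal_sum fun i _ => hm i, ENNReal.ofReal_rpow_of_pos hm0,
    ← ENNReal.ofReal_mul (by positivity)]

section SimpleFunc

variable {ι Ω M : Type*} [Fintype ι] {U : ι → Set Ω}

theorem sum_indicator_const_of_mem [AddCommMonoid M] (hU : Pairwise (Disjoint on U))
    (x : ι → M) {i : ι} {ω : Ω} (hω : ω ∈ U i) :
    ∑ j, (U j).indicator (fun _ => x j) ω = x i := by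
  rw [Finset.sum_eq_single_of_mem i (Finset.mem_univ i) fun j _ hji =>
    Set.indicator_of_notMem (fun hωj => (hU hji).ne_of_mem hωj hω rfl) _]
  exact Set.indicator_of_mem hω _

theorem comp_sum_indicator_const [AddCommMonoid M] {N : Type*} [AddCommMonoid N]
    (hU : Pairwise (Disjoint on U)) (x : ι → M) {F : M → N} (hF : F 0 = 0) (ω : Ω) :
    F (∑ j, (U j).indicator (fun _ => x j) ω) = ∑ j, (U j).indicator (fun _ => F (x j)) ω := by
  by_cases hω : ∃ i, ω ∈ U i
  · obtain ⟨i, hi⟩ := hω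
    rw [sum_indicator_const_of_mem hU x hi, sum_indicator_const_of_mem hU _ hi]
  · push Not at hω
    simp [Set.indicator_of_notMem (hω _), hF]

variable [MeasurableSpace Ω] {μ : Measure Ω}

theorem lintegral_comp_sum_indicator [AddCommMonoid M] (hU : Pairwise (Disjoint on U))
    (hUm : ∀ i, MeasurableSet (U i)) (x : ι → M) {F : M → ℝ≥0∞} (hF : F 0 = 0) :
    ∫⁻ ω, F (∑ j, (U j).indicator (fun _ => x j) ω) ∂μ = ∑ i, F (x i) * μ (U i) := by
  simp_rw [comp_sum_indicator_const hU x hF]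
  rw [lintegral_finsetSum _ fun i _ => measurable_const.indicator (hUm i)]
  simp_rw [lintegral_indicator_const (hUm _)]

theorem lintegral_sum_indicator_mul (hUm : ∀ i, MeasurableSet (U i)) (x : ι → ℝ≥0∞)
    {φ : Ω → ℝ≥0∞} (hφ : Measurable φ) :
    ∫⁻ ω, (∑ j, (U j).indicator (fun _ => x j) ω) * φ ω ∂μ =
      ∑ i, x i * ∫⁻ ω in U i, φ ω ∂μ := by
  simp_rw [Finset.sum_mul, ← Set.indicator_mul_left]
  rw [lintegral_finsetSum _ fun i _ => (hφ.const_mul (x i)).indicator (hUm i)]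
  simp_rw [lintegral_indicator (hUm _), lintegral_const_mul _ hφ]

theorem setLIntegral_sum_smul_restrict (κ : ι → ℝ≥0∞) (U : ι → Set Ω) {A : Set Ω}
    (hA : MeasurableSet A) (F : Ω → ℝ≥0∞) :
    ∫⁻ ω in A, F ω ∂(∑ i, κ i • μ.restrict (U i)) = ∑ i, κ i * ∫⁻ ω in A ∩ U i, F ω ∂μ := by
  rw [← lintegral_indicator hA, lintegral_finsetSum_measure]
  simp_rw [lintegral_smul_measure, lintegral_indicator hA, Measure.restrict_restrict hA]
  rfl

theorem sum_smul_restrict_apply (κ : ι → ℝ≥0∞) (U : ι → Set Ω) {A : Set Ω}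
    (hA : MeasurableSet A) :
    (∑ i, κ i • μ.restrict (U i)) A = ∑ i, κ i * μ (A ∩ U i) := by
  simpa using setLIntegral_sum_smul_restrict (μ := μ) κ U hA 1

end SimpleFunc

section WeakNorm

variable {Ω : Type*} [MeasurableSpace Ω] {μ : Measure Ω}

theorem setLIntegral_rpow_le_weakNorm (p : ℝ) {r : ℝ} (hr : 0 < r) (f : Ω → ℝ) {B : Set Ω}
    (hB : MeasurableSet B) (hBfin : μ B ≠ ∞) :
    (∫⁻ ω in B, ENNReal.ofReal (|f ω| ^ r) ∂μ) ^ (1 / r) ≤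
      μ B ^ (1 / r - 1 / p) * weakNorm μ p r f := by
  rcases eq_or_ne (μ B) 0 with hB0 | hB0
  · simp [Measure.restrict_eq_zero.mpr hB0, hr]
  calc (∫⁻ ω in B, ENNReal.ofReal (|f ω| ^ r) ∂μ) ^ (1 / r)
      = μ B ^ (1 / r - 1 / p) *
          (μ B ^ (1 / p - 1 / r) * (∫⁻ ω in B, ENNReal.ofReal (|f ω| ^ r) ∂μ) ^ (1 / r)) := by
        rw [← mul_assoc, ← ENNReal.rpow_add _ _ hB0 hBfin, sub_add_sub_cancel, sub_self,
          ENNReal.rpow_zero, one_mul]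
    _ ≤ μ B ^ (1 / r - 1 / p) * weakNorm μ p r f := by
        gcongr
        exact le_iSup₂_of_le B hB (le_iSup₂_of_le (pos_iff_ne_zero.2 hB0) hBfin le_rfl)

theorem setLIntegral_mul_le_weakNorm (p : ℝ) {r r' : ℝ} (hrr' : r'.HolderConjugate r)
    {f : Ω → ℝ} (hf : Measurable f) {G : Ω → ℝ≥0∞} (hG : Measurable G) {B : Set Ω}
    (hB : MeasurableSet B) (hBfin : μ B ≠ ∞) :
    ∫⁻ ω in B, G ω * ENNReal.ofReal |f ω| ∂μ ≤
      (∫⁻ ω in B, G ω ^ r' ∂μ) ^ (1 / r') * (μ B ^ (1 / r - 1 / p) * weakNorm μ p r f) := by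
  calc ∫⁻ ω in B, G ω * ENNReal.ofReal |f ω| ∂μ
      ≤ (∫⁻ ω in B, G ω ^ r' ∂μ) ^ (1 / r') *
          (∫⁻ ω in B, ENNReal.ofReal |f ω| ^ r ∂μ) ^ (1 / r) :=
        ENNReal.lintegral_mul_le_Lp_mul_Lq _ hrr' hG.aemeasurable
          hf.abs.ennreal_ofReal.aemeasurable
    _ ≤ _ := by
        gcongr
        simp_rw [ENNReal.ofReal_rpow_of_nonneg (abs_nonneg _) hrr'.symm.nonneg]
        exact setLIntegral_rpow_le_weakNorm p hrr'.symm.pos f hB hBfin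

theorem lintegral_le_weakNorm_one {p : ℝ} (hp : 1 < p) (hμ : μ Set.univ ≤ 1) (g : Ω → ℝ) :
    ∫⁻ ω, ENNReal.ofReal |g ω| ∂μ ≤ weakNorm μ p 1 g := by
  rcases eq_or_ne (μ Set.univ) 0 with h0 | h0
  · simp [Measure.measure_univ_eq_zero.mp h0]
  have hexp : (1 : ℝ≥0∞) ≤ μ Set.univ ^ (1 / p - 1 / 1) :=
    ENNReal.one_le_rpow_of_pos_of_le_one_of_neg (pos_iff_ne_zero.2 h0) hμ
      (by rw [div_one, sub_neg]; exact (div_lt_one (by linarith)).2 hp)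
  calc ∫⁻ ω, ENNReal.ofReal |g ω| ∂μ
      ≤ μ Set.univ ^ (1 / p - 1 / 1) *
          (∫⁻ ω in Set.univ, ENNReal.ofReal (|g ω| ^ (1 : ℝ)) ∂μ) ^ (1 / (1 : ℝ)) := by
        simpa using mul_le_mul_left hexp _
    _ ≤ weakNorm μ p 1 g :=
        le_iSup₂_of_le Set.univ MeasurableSet.univ
          (le_iSup₂_of_le (pos_iff_ne_zero.2 h0) (hμ.trans_lt ENNReal.one_lt_top).ne le_rfl)

end WeakNorm

section Construction

variable {ι : Type*} {p r T : ℝ} {a : ι → ℝ}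

/-- The exponent `θ` with `1/r' = θ (1 - 1/p)` and `1/r - 1/p = (1 - θ) (1 - 1/p)`. -/
def interpolationWeight (p r : ℝ) : ℝ := (1 - 1 / r) / (1 - 1 / p)

def embeddingDensity (p r T : ℝ) (a : ι → ℝ) (i : ι) : ℝ :=
  interpolationWeight p r * T ^ (r / p - 1) * a i ^ r + (1 - interpolationWeight p r) / T

def embeddingMultiplier (p r T : ℝ) (a : ι → ℝ) (i : ι) : ℝ :=
  T ^ (r / p - 1) * a i ^ (r - 1) / embeddingDensity p r T a i

theorem interpolationWeight_pos (hr : 1 < r) (hrp : r < p) : 0 < interpolationWeight p r := by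
  have : 1 / p < 1 / r := one_div_lt_one_div_of_lt (by linarith) hrp
  have : 1 / r < 1 := (div_lt_one (by linarith)).2 hr
  exact div_pos (by linarith) (by linarith)

theorem interpolationWeight_lt_one (hr : 1 < r) (hrp : r < p) : interpolationWeight p r < 1 := by
  have : 1 / p < 1 / r := one_div_lt_one_div_of_lt (by linarith) hrp
  have : 1 / p < 1 := (div_lt_one (by linarith)).2 (by linarith)
  exact (div_lt_one (by linarith)).2 (by linarith)

theorem embeddingDensity_pos (hr : 1 < r) (hrp : r < p) (ha : ∀ i, 0 ≤ a i) (hT : 0 < T)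
    (i : ι) : 0 < embeddingDensity p r T a i := by
  have := interpolationWeight_pos hr hrp
  have := interpolationWeight_lt_one hr hrp
  have := Real.rpow_nonneg (ha i) r
  unfold embeddingDensity
  positivity

theorem embeddingMultiplier_nonneg (hr : 1 < r) (hrp : r < p) (ha : ∀ i, 0 ≤ a i) (hT : 0 < T)
    (i : ι) : 0 ≤ embeddingMultiplier p r T a i := by
  have := Real.rpow_nonneg (ha i) (r - 1)
  have := embeddingDensity_pos hr hrp ha hT i
  unfold embeddingMultiplier
  positivity

theorem embeddingDensity_mul_embeddingMultiplier (hr : 1 < r) (hrp : r < p)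
    (ha : ∀ i, 0 ≤ a i) (hT : 0 < T) (i : ι) :
    embeddingDensity p r T a i * embeddingMultiplier p r T a i =
      T ^ (r / p - 1) * a i ^ (r - 1) :=
  mul_div_cancel₀ _ (embeddingDensity_pos hr hrp ha hT i).ne'

theorem sum_embeddingDensity_mul_le_one [Fintype ι] (hr : 1 < r) (hrp : r < p) (hT : T ≠ 0)
    {m : ι → ℝ} (hm : ∑ i, m i = T) (hC : T ^ (r / p - 1) * ∑ i, a i ^ r * m i ≤ 1) :
    ∑ i, embeddingDensity p r T a i * m i ≤ 1 := by
  have hsum : ∑ i, embeddingDensity p r T a i * m i =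
      interpolationWeight p r * (T ^ (r / p - 1) * ∑ i, a i ^ r * m i) +
        (1 - interpolationWeight p r) := by
    simp only [embeddingDensity, add_mul, Finset.sum_add_distrib]
    rw [← Finset.mul_sum, hm, div_mul_cancel₀ _ hT, Finset.mul_sum, Finset.mul_sum]
    congr 1
    refine Finset.sum_congr rfl fun i _ => ?_
    ring
  rw [hsum]
  nlinarith [interpolationWeight_pos hr hrp, interpolationWeight_lt_one hr hrp]

/-- `e` is the linearisation given by the weighted AM-GM inequality with the scales
`T ^ ((1 - θ) / θ)` and `T⁻¹`, whose weighted geometric mean is `1`. -/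
theorem embeddingDensity_eq {r' : ℝ} (hrp : r < p) (hrr' : r'.HolderConjugate r)
    (ha : ∀ i, 0 ≤ a i) (hT : 0 < T) (i : ι) :
    embeddingDensity p r T a i =
      interpolationWeight p r * T ^ ((1 - interpolationWeight p r) / interpolationWeight p r) *
          (T ^ (r / p - 1) * a i ^ (r - 1)) ^ r' +
        (1 - interpolationWeight p r) * T⁻¹ := by
  have hr := hrr'.symm.lt
  have hθ0 := interpolationWeight_pos hr hrp
  have hr1 : r - 1 ≠ 0 := hrr'.symm.sub_one_ne_zero
  have hp1 : p - 1 ≠ 0 := by linarith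
  have hp0 : p ≠ 0 := by linarith
  have hr0 : r ≠ 0 := by linarith
  have hexp : (1 - interpolationWeight p r) / interpolationWeight p r + (r / p - 1) * r' =
      r / p - 1 := by
    rw [interpolationWeight, hrr'.symm.conjugate_eq]
    field_simp
    ring
  rw [Real.mul_rpow (by positivity) (Real.rpow_nonneg (ha i) _), ← Real.rpow_mul (ha i),
    hrr'.symm.sub_one_mul_conj, ← Real.rpow_mul hT.le, mul_assoc _ (T ^ _), ← mul_assoc (T ^ _),
    ← Real.rpow_add hT, hexp, embeddingDensity]
  ring

theorem rpow_mul_rpow_le_sum_embeddingDensity_mul [Fintype ι] {r' : ℝ} (hrp : r < p)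
    (hrr' : r'.HolderConjugate r) (ha : ∀ i, 0 ≤ a i) (hT : 0 < T) {m : ι → ℝ≥0∞}
    (hm : ∀ i, m i ≠ ∞) :
    (∑ i, ENNReal.ofReal (T ^ (r / p - 1) * a i ^ (r - 1)) ^ r' * m i) ^ (1 / r') *
        (∑ i, m i) ^ (1 / r - 1 / p) ≤
      (∑ i, ENNReal.ofReal (embeddingDensity p r T a i) * m i) ^ (1 - 1 / p) := by
  have hr := hrr'.symm.lt
  have hθ0 := interpolationWeight_pos hr hrp
  have hθ1 := interpolationWeight_lt_one hr hrp
  set θ := interpolationWeight p r with hθ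
  have hq : 0 < 1 - 1 / p := by
    have : 1 / p < 1 := (div_lt_one (by linarith)).2 (by linarith); linarith
  have h1 : 1 / r' = θ * (1 - 1 / p) := by
    rw [hθ, interpolationWeight, div_mul_cancel₀ _ hq.ne', one_div, one_div,
      hrr'.symm.one_sub_inv]
  have h2 : 1 / r - 1 / p = (1 - θ) * (1 - 1 / p) := by
    rw [hθ, interpolationWeight, sub_mul, div_mul_cancel₀ _ hq.ne']; ring
  have hστ : (T ^ ((1 - θ) / θ)) ^ θ * T⁻¹ ^ (1 - θ) = 1 := by
    rw [← Real.rpow_mul hT.le, div_mul_cancel₀ _ hθ0.ne', Real.inv_rpow hT.le,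
      mul_inv_cancel₀ (by positivity)]
  have hH : ∀ i, 0 ≤ T ^ (r / p - 1) * a i ^ (r - 1) := fun i => by
    have := Real.rpow_nonneg (ha i) (r - 1); positivity
  calc _ = ((∑ i, ENNReal.ofReal (T ^ (r / p - 1) * a i ^ (r - 1)) ^ r' * m i) ^ θ *
          (∑ i, m i) ^ (1 - θ)) ^ (1 - 1 / p) := by
        rw [h1, h2, ENNReal.rpow_mul, ENNReal.rpow_mul, ENNReal.mul_rpow_of_nonneg _ _ hq.le]
    _ ≤ (ENNReal.ofReal (θ * T ^ ((1 - θ) / θ)) *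
            ∑ i, ENNReal.ofReal (T ^ (r / p - 1) * a i ^ (r - 1)) ^ r' * m i +
          ENNReal.ofReal ((1 - θ) * T⁻¹) * ∑ i, m i) ^ (1 - 1 / p) := by
        gcongr
        exact ENNReal.rpow_mul_rpow_le_of_rpow_mul_rpow_eq_one hθ0.le hθ1.le (by positivity)
          (by positivity) hστ
          (ENNReal.sum_ne_top.2 fun i _ => ENNReal.mul_ne_top
            (ENNReal.rpow_ne_top_of_nonneg hrr'.nonneg ENNReal.ofReal_ne_top) (hm i))
          (ENNReal.sum_ne_top.2 fun i _ => hm i)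
    _ = _ := by
        simp_rw [embeddingDensity_eq hrp hrr' ha hT, ← hθ, Finset.mul_sum,
          ← Finset.sum_add_distrib]
        congr 1
        refine Finset.sum_congr rfl fun i _ => ?_
        rw [ENNReal.ofReal_add (by have := hH i; positivity) (by have := hθ1; positivity),
          ENNReal.ofReal_mul (by positivity) (q := _ ^ r'),
          ENNReal.ofReal_rpow_of_nonneg (hH i) hrr'.nonneg]
        ring

end Construction

section Embedding

variable {ι Ω : Type*} [Fintype ι] [MeasurableSpace Ω] {μ : Measure Ω} {p r T : ℝ}
  {a : ι → ℝ} {U : ι → Set Ω}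

def embeddingMeasure (μ : Measure Ω) (p r T : ℝ) (a : ι → ℝ) (U : ι → Set Ω) : Measure Ω :=
  ∑ i, ENNReal.ofReal (embeddingDensity p r T a i) • μ.restrict (U i)

theorem sum_smul_restrict_eq_embeddingMeasure (hr : 1 < r) (hrp : r < p) (ha : ∀ i, 0 ≤ a i)
    (hUpos : ∀ i, 0 < μ (U i)) (hUfin : ∀ i, μ (U i) ≠ ∞) (hT : 0 < T) :
    ∑ i, (ENNReal.ofReal (embeddingDensity p r T a i * (μ (U i)).toReal) * (μ (U i))⁻¹) •
      μ.restrict (U i) = embeddingMeasure μ p r T a U := by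
  refine Finset.sum_congr rfl fun i _ => ?_
  rw [ENNReal.ofReal_mul (embeddingDensity_pos hr hrp ha hT i).le,
    ENNReal.ofReal_toReal (hUfin i), mul_assoc, ENNReal.mul_inv_cancel (hUpos i).ne' (hUfin i),
    mul_one]

theorem embeddingMeasure_univ (hr : 1 < r) (hrp : r < p) (ha : ∀ i, 0 ≤ a i)
    (hUfin : ∀ i, μ (U i) ≠ ∞) (hT : 0 < T) :
    embeddingMeasure μ p r T a U Set.univ =
      ENNReal.ofReal (∑ i, embeddingDensity p r T a i * (μ (U i)).toReal) := by
  simp_rw [embeddingMeasure, sum_smul_restrict_apply _ _ MeasurableSet.univ, Set.univ_inter]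
  exact sum_ofReal_mul_eq_ofReal_sum (fun i => (embeddingDensity_pos hr hrp ha hT i).le) hUfin

theorem setLIntegral_embeddingMultiplier_mul_le (hr : 1 < r) (hrp : r < p) (ha : ∀ i, 0 ≤ a i)
    (hU : Pairwise (Disjoint on U)) (hUm : ∀ i, MeasurableSet (U i)) (hUfin : ∀ i, μ (U i) ≠ ∞)
    (hT : 0 < T) {f : Ω → ℝ} (hf : Measurable f) (hfw : weakNorm μ p r f ≤ 1) {A : Set Ω}
    (hA : MeasurableSet A) :
    ∫⁻ ω in A, ENNReal.ofReal
        ((∑ i, (U i).indicator (fun _ => embeddingMultiplier p r T a i) ω) * |f ω|)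
        ∂embeddingMeasure μ p r T a U ≤
      embeddingMeasure μ p r T a U A ^ (1 - 1 / p) := by
  set H : ι → ℝ := fun i => T ^ (r / p - 1) * a i ^ (r - 1)
  set G : Ω → ℝ≥0∞ := fun ω => ∑ i, (U i).indicator (fun _ => ENNReal.ofReal (H i)) ω
  have hG : Measurable G := Finset.measurable_sum _ fun i _ => measurable_const.indicator (hUm i)
  have hφ : Measurable fun ω => ENNReal.ofReal |f ω| := hf.abs.ennreal_ofReal
  have hrr' : r.conjExponent.HolderConjugate r := (Real.HolderConjugate.conjExponent hr).symm
  set B := A ∩ ⋃ i, U i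
  have hB : MeasurableSet B := hA.inter (MeasurableSet.iUnion hUm)
  have hUB : ∀ i, U i ∩ B = A ∩ U i := fun i => by
    ext ω
    simp only [B, Set.mem_inter_iff, Set.mem_iUnion]
    exact ⟨fun h => ⟨h.2.1, h.1⟩, fun h => ⟨h.2, h.1, i, h.2⟩⟩
  have hμB : μ B = ∑ i, μ (A ∩ U i) := by
    rw [show B = ⋃ i, A ∩ U i from Set.inter_iUnion _ _,
      measure_iUnion (hU.mono fun i j h => h.mono Set.inter_subset_right Set.inter_subset_right)
        fun i => hA.inter (hUm i), tsum_fintype]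
  have hfin : ∀ i, μ (A ∩ U i) ≠ ∞ := fun i =>
    measure_ne_top_of_subset Set.inter_subset_right (hUfin i)
  have hBfin : μ B ≠ ∞ := hμB ▸ ENNReal.sum_ne_top.2 fun i _ => hfin i
  have hLHS : ∫⁻ ω in A, ENNReal.ofReal
        ((∑ i, (U i).indicator (fun _ => embeddingMultiplier p r T a i) ω) * |f ω|)
        ∂embeddingMeasure μ p r T a U = ∫⁻ ω in B, G ω * ENNReal.ofReal |f ω| ∂μ := by
    rw [embeddingMeasure, setLIntegral_sum_smul_restrict _ _ hA,
      lintegral_sum_indicator_mul hUm _ hφ]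
    refine Finset.sum_congr rfl fun i _ => ?_
    rw [Measure.restrict_restrict (hUm i), hUB,
      setLIntegral_congr_fun (hA.inter (hUm i)) fun ω hω => by
        rw [sum_indicator_const_of_mem hU _ hω.2,
          ENNReal.ofReal_mul (embeddingMultiplier_nonneg hr hrp ha hT i)],
      lintegral_const_mul _ hφ, ← mul_assoc,
      ← ENNReal.ofReal_mul (embeddingDensity_pos hr hrp ha hT i).le,
      embeddingDensity_mul_embeddingMultiplier hr hrp ha hT]
  have hGr : ∫⁻ ω in B, G ω ^ r.conjExponent ∂μ =
      ∑ i, ENNReal.ofReal (H i) ^ r.conjExponent * μ (A ∩ U i) := by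
    rw [lintegral_comp_sum_indicator hU hUm _ (F := (· ^ r.conjExponent))
      (ENNReal.zero_rpow_of_pos hrr'.pos)]
    simp_rw [Measure.restrict_apply (hUm _), hUB]
  calc _ = ∫⁻ ω in B, G ω * ENNReal.ofReal |f ω| ∂μ := hLHS
    _ ≤ (∫⁻ ω in B, G ω ^ r.conjExponent ∂μ) ^ (1 / r.conjExponent) *
          (μ B ^ (1 / r - 1 / p) * weakNorm μ p r f) :=
        setLIntegral_mul_le_weakNorm p hrr' hf hG hB hBfin
    _ ≤ (∑ i, ENNReal.ofReal (H i) ^ r.conjExponent * μ (A ∩ U i)) ^ (1 / r.conjExponent) *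
          (∑ i, μ (A ∩ U i)) ^ (1 / r - 1 / p) := by
        rw [hGr, ← hμB]
        exact mul_le_mul_right (mul_le_of_le_one_right' hfw) _
    _ ≤ _ := by
        rw [embeddingMeasure, sum_smul_restrict_apply _ _ hA]
        exact rpow_mul_rpow_le_sum_embeddingDensity_mul hrp hrr' ha hT hfin

theorem lintegral_embeddingMultiplier_mul_sum_indicator (hr : 1 < r) (hrp : r < p)
    (ha : ∀ i, 0 ≤ a i) (hU : Pairwise (Disjoint on U)) (hUm : ∀ i, MeasurableSet (U i))
    (hUfin : ∀ i, μ (U i) ≠ ∞) (hT : 0 < T) :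
    ∫⁻ ω, ENNReal.ofReal |(∑ i, (U i).indicator (fun _ => embeddingMultiplier p r T a i) ω) *
        ∑ i, (U i).indicator (fun _ => a i) ω| ∂embeddingMeasure μ p r T a U =
      ENNReal.ofReal (T ^ (r / p - 1) * ∑ i, a i ^ r * (μ (U i)).toReal) := by
  have hK : 0 ≤ T ^ (r / p - 1) := by positivity
  rw [← setLIntegral_univ, embeddingMeasure,
    setLIntegral_sum_smul_restrict _ _ MeasurableSet.univ, Finset.mul_sum]
  simp_rw [← mul_assoc]
  rw [← sum_ofReal_mul_eq_ofReal_sum (fun i => mul_nonneg hK (Real.rpow_nonneg (ha i) r)) hUfin]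
  refine Finset.sum_congr rfl fun i _ => ?_
  have hc := embeddingMultiplier_nonneg hr hrp ha hT i
  rw [Set.univ_inter, setLIntegral_congr_fun (hUm i) fun ω hω => by
      rw [sum_indicator_const_of_mem hU _ hω, sum_indicator_const_of_mem hU _ hω],
    setLIntegral_const, ← mul_assoc,
    ← ENNReal.ofReal_mul (embeddingDensity_pos hr hrp ha hT i).le,
    abs_of_nonneg (mul_nonneg hc (ha i)), ← mul_assoc,
    embeddingDensity_mul_embeddingMultiplier hr hrp ha hT, mul_assoc,
    ← Real.rpow_add_one' (ha i) (by linarith), sub_add_cancel]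

end Embedding

/-- Embedding lemma: a normalized nonnegative simple function gives a
multiplication operator which is a contraction from `L^{[r]}_{p,∞}(μ)` into
`L^{[1]}_{p,∞}(ν)` and almost preserves the norm of the given simple function. -/
theorem simpleFunc_weakNorm_embedding
    {Ω : Type*} [MeasurableSpace Ω] (μ : Measure Ω)
    (p r : ℝ) (hr : 1 < r) (hrp : r < p)
    (n : ℕ) (a : Fin n → ℝ) (ha : ∀ i, 0 ≤ a i)
    (U : Fin n → Set Ω) (hUmeas : ∀ i, MeasurableSet (U i))
    (hUdisj : ∀ i j, i ≠ j → Disjoint (U i) (U j))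
    (hUpos : ∀ i, 0 < μ (U i)) (hUfin : ∀ i, μ (U i) ≠ ∞)
    (Cval : ℝ≥0∞)
    (hCdef : Cval = (∑ i, μ (U i)) ^ (1 / p - 1 / r) *
      (∫⁻ ω, ENNReal.ofReal ((∑ i, Set.indicator (U i) (fun _ => a i) ω) ^ r) ∂μ) ^ (1 / r))
    (hC : Cval ≤ 1) :
    ∃ (d c : Fin n → ℝ) (ν : Measure Ω),
      (∀ i, 0 ≤ d i) ∧ (∀ i, 0 ≤ c i) ∧ (∑ i, d i) ≤ 1 ∧
      ν = ∑ i, (ENNReal.ofReal (d i) * (μ (U i))⁻¹) • μ.restrict (U i) ∧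
      -- (i) multiplication by `w = ∑ cᵢ 1_{Uᵢ}` is a contraction into `L^{[1]}_{p,∞}(ν)`
      (∀ f : Ω → ℝ, Measurable f → weakNorm μ p r f ≤ 1 →
        ∀ A : Set Ω, MeasurableSet A → 0 < ν A → ν A ≠ ∞ →
          ∫⁻ ω in A,
              ENNReal.ofReal ((∑ i, Set.indicator (U i) (fun _ => c i) ω) * |f ω|) ∂ν ≤
            ν A ^ (1 - 1 / p)) ∧
      -- (ii) the image of the simple function has `L^{[1]}_{p,∞}(ν)`-norm at least `C^r`
      (Cval ^ r ≤ weakNorm ν p 1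
        (fun ω => (∑ i, Set.indicator (U i) (fun _ => c i) ω) *
          (∑ i, Set.indicator (U i) (fun _ => a i) ω))) := by
  have hr0 : 0 < r := by linarith
  have hCr : Cval ^ r =
      (∑ i, μ (U i)) ^ (r / p - 1) * ∑ i, ENNReal.ofReal (a i ^ r) * μ (U i) := by
    rw [hCdef, lintegral_comp_sum_indicator hUdisj hUmeas a (F := fun t => ENNReal.ofReal (t ^ r))
      (by simp [Real.zero_rpow hr0.ne']), ENNReal.rpow_one_div_sub_mul_rpow_one_div_rpow hr0]
  rcases isEmpty_or_nonempty (Fin n) with hn | hn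
  · exact ⟨0, 0, 0, fun _ => le_rfl, fun _ => le_rfl, by simp, by simp,
      fun _ _ _ A _ hA _ => by simp at hA, by simp [hCr]⟩
  set T := ∑ i, (μ (U i)).toReal
  have hT : 0 < T :=
    Finset.sum_pos (fun i _ => ENNReal.toReal_pos (hUpos i).ne' (hUfin i)) Finset.univ_nonempty
  rw [sum_rpow_mul_sum_ofReal_mul_eq hUfin hT fun i => Real.rpow_nonneg (ha i) r] at hCr
  have hd : ∑ i, embeddingDensity p r T a i * (μ (U i)).toReal ≤ 1 :=
    sum_embeddingDensity_mul_le_one hr hrp hT.ne' rfl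
      (ENNReal.ofReal_le_one.1 (hCr ▸ ENNReal.rpow_le_one hC hr0.le))
  refine ⟨fun i => embeddingDensity p r T a i * (μ (U i)).toReal, embeddingMultiplier p r T a,
    _, fun i => mul_nonneg (embeddingDensity_pos hr hrp ha hT i).le ENNReal.toReal_nonneg,
    embeddingMultiplier_nonneg hr hrp ha hT, hd, rfl, ?_, ?_⟩ <;>
    rw [sum_smul_restrict_eq_embeddingMeasure hr hrp ha hUpos hUfin hT]
  · exact fun f hf hfw A hA _ _ =>
      setLIntegral_embeddingMultiplier_mul_le hr hrp ha hUdisj hUmeas hUfin hT hf hfw hA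
  · rw [hCr, ← lintegral_embeddingMultiplier_mul_sum_indicator hr hrp ha hUdisj hUmeas hUfin hT]
    refine lintegral_le_weakNorm_one (hr.trans hrp) ?_ _
    rw [embeddingMeasure_univ hr hrp ha hUfin hT]
    exact ENNReal.ofReal_le_one.2 hd

end
end

section
/- Let 1 < p < ∞ and p* = p/(p−1), and let (f_n) be a sequence of nonnegative measurable functions on [0,1] (with Lebesgue measure λ) having pairwise disjoint supports, such that for each n: sup_{t>0} t · λ({f_n > t})^{1/p} = 1, and f_n lies in the order-continuous part of weak-L_p, i.e., for every ε > 0 there exists δ > 0 such that every measurable A ⊆ [0,1] with 0 < λ(A) < δ satisfies λ(A)^{−1/p*} ∫_A f_n dλ ≤ ε. Then there exist a subsequence (f_{n_k}) and a constant C ≥ 1 such that for every finitely supported real sequence (a_k): sup_k |a_k| ≤ sup_{t>0} t · λ({ |Σ_k a_k f_{n_k}| > t })^{1/p} ≤ C · sup_k |a_k|; in particular, (f_{n_k}) is equivalent to the unit vector basis of c₀. -/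
noncomputable section

open scoped BigOperators ENNReal
open MeasureTheory

/-- The weak-`L_p` quasinorm `⦀g⦀_{p,∞} = sup_{t>0} t · μ({|g| > t})^{1/p}`, valued in
`ℝ≥0∞`. -/
def weakQuasinorm {Ω : Type*} [MeasurableSpace Ω] (μ : Measure Ω) (p : ℝ)
    (g : Ω → ℝ) : ℝ≥0∞ :=
  ⨆ (t : ℝ) (_ : 0 < t), ENNReal.ofReal t * μ { x | t < |g x| } ^ (1 / p)

/-- Lebesgue measure restricted to `[0,1]`. -/
def lebOn01 : Measure ℝ := MeasureTheory.volume.restrict (Set.Icc (0 : ℝ) 1)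

/-!
Order continuity and Chebyshev's inequality give, for each `n` and `ε`, a `δ` such that level
sets of `f_n` of measure below `δ` contribute at most `ε` to the weak norm. Pass to a subsequence
in which the support of every later `f_{n_j}` is tiny compared with the `δ_k` of each earlier
`f_{n_k}`, taken for `ε = 2^{-k}`. At a fixed level `t`, call the term `a_k f_{n_k}` large if
`t · λ{|a_k f_{n_k}| > t}^{1/p} > 2^{-k} max |a|`. A large term has a level set of measure at
least `δ_k`, so every later term lives on a set too small to be large: at most one term is large,
and it contributes at most `max |a|` by normalization. Subadditivity of `x ↦ x^{1/p}` over the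
disjoint supports bounds the weak norm of the sum by `3 max |a|`; the lower bound holds since
`|Σ a_k f_{n_k}| ≥ |a_k f_{n_k}|` pointwise.
-/

open Filter Function Topology

section Pointwise

variable {α ι : Type*}

lemma setOf_lt_abs_const_mul {a : ℝ} (ha : a ≠ 0) (g : α → ℝ) (t : ℝ) :
    {x | t < |a * g x|} = {x | t / |a| < |g x|} := by
  ext x
  simp only [Set.mem_ofPred_eq, abs_mul, div_lt_iff₀' (abs_pos.2 ha)]

variable {g : ι → α → ℝ}

lemma sum_mul_apply_eq_of_ne_zero (hdisj : Pairwise (Disjoint on fun k => support (g k)))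
    {s : Finset ι} (a : ι → ℝ) {k : ι} (hk : k ∈ s) {x : α} (hx : g k x ≠ 0) :
    ∑ j ∈ s, a j * g j x = a k * g k x := by
  refine Finset.sum_eq_single_of_mem k hk fun j _ hjk => ?_
  rw [notMem_support.1 fun hj => Set.disjoint_left.1 (hdisj hjk) hj hx, mul_zero]

lemma abs_mul_le_abs_sum_mul (hdisj : Pairwise (Disjoint on fun k => support (g k)))
    {s : Finset ι} (a : ι → ℝ) {k : ι} (hk : k ∈ s) (x : α) :
    |a k * g k x| ≤ |∑ j ∈ s, a j * g j x| := by
  by_cases hx : g k x = 0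
  · simp [hx]
  · rw [sum_mul_apply_eq_of_ne_zero hdisj a hk hx]

lemma setOf_lt_abs_sum_mul_subset (hdisj : Pairwise (Disjoint on fun k => support (g k)))
    (s : Finset ι) (a : ι → ℝ) {t : ℝ} (ht : 0 ≤ t) :
    {x | t < |∑ j ∈ s, a j * g j x|} ⊆ ⋃ k ∈ s, {x | t < |a k * g k x|} := by
  intro x hx
  obtain ⟨k, hk, hkx⟩ := Finset.exists_ne_zero_of_sum_ne_zero (abs_pos.1 (ht.trans_lt hx))
  rw [Set.mem_ofPred_eq, sum_mul_apply_eq_of_ne_zero hdisj a hk (right_ne_zero_of_mul hkx)] at hx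
  exact Set.mem_biUnion hk hx

end Pointwise

section WeakQuasinorm

variable {α : Type*} [MeasurableSpace α] {μ : Measure α} {p : ℝ}

def scaledTail (μ : Measure α) (p : ℝ) (g : α → ℝ) (t : ℝ) : ℝ≥0∞ :=
  ENNReal.ofReal t * μ {x | t < |g x|} ^ (1 / p)

lemma scaledTail_le_weakQuasinorm (g : α → ℝ) {t : ℝ} (ht : 0 < t) :
    scaledTail μ p g t ≤ weakQuasinorm μ p g :=
  le_iSup₂ (f := fun t (_ : 0 < t) => scaledTail μ p g t) t ht

lemma weakQuasinorm_le_iff {g : α → ℝ} {C : ℝ≥0∞} :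
    weakQuasinorm μ p g ≤ C ↔ ∀ t > 0, scaledTail μ p g t ≤ C :=
  iSup₂_le_iff

lemma scaledTail_mono (hp : 0 ≤ p) {g h : α → ℝ} (hgh : ∀ x, |g x| ≤ |h x|) (t : ℝ) :
    scaledTail μ p g t ≤ scaledTail μ p h t := by
  have hsub : {x | t < |g x|} ⊆ {x | t < |h x|} := fun x hx => lt_of_lt_of_le hx (hgh x)
  unfold scaledTail
  gcongr

lemma weakQuasinorm_mono (hp : 0 ≤ p) {g h : α → ℝ} (hgh : ∀ x, |g x| ≤ |h x|) :
    weakQuasinorm μ p g ≤ weakQuasinorm μ p h :=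
  weakQuasinorm_le_iff.2 fun t ht =>
    (scaledTail_mono hp hgh t).trans (scaledTail_le_weakQuasinorm h ht)

lemma scaledTail_const_mul {a : ℝ} (ha : a ≠ 0) (g : α → ℝ) (t : ℝ) :
    scaledTail μ p (fun x => a * g x) t = ENNReal.ofReal |a| * scaledTail μ p g (t / |a|) := by
  have ha' : 0 < |a| := abs_pos.2 ha
  rw [scaledTail, scaledTail, setOf_lt_abs_const_mul ha, ← mul_assoc,
    ← ENNReal.ofReal_mul ha'.le, mul_div_cancel₀ _ ha'.ne']

lemma scaledTail_zero (hp : 0 < p) {t : ℝ} (ht : 0 < t) :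
    scaledTail μ p (fun _ => (0 : ℝ)) t = 0 := by
  simp [scaledTail, ht.not_gt, hp]

lemma scaledTail_const_mul_le (hp : 0 < p) (a : ℝ) (g : α → ℝ) {t : ℝ} (ht : 0 < t) :
    scaledTail μ p (fun x => a * g x) t ≤ ENNReal.ofReal |a| * weakQuasinorm μ p g := by
  rcases eq_or_ne a 0 with rfl | ha
  · simp [scaledTail_zero hp ht]
  · rw [scaledTail_const_mul ha]
    gcongr
    exact scaledTail_le_weakQuasinorm g (div_pos ht (abs_pos.2 ha))

lemma ofReal_abs_mul_weakQuasinorm_le (a : ℝ) (g : α → ℝ) :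
    ENNReal.ofReal |a| * weakQuasinorm μ p g ≤ weakQuasinorm μ p (fun x => a * g x) := by
  rcases eq_or_ne a 0 with rfl | ha
  · simp
  have ha' : 0 < |a| := abs_pos.2 ha
  simp only [weakQuasinorm, ENNReal.mul_iSup]
  refine iSup₂_le fun u hu => ?_
  have h := scaledTail_const_mul (μ := μ) (p := p) ha g (|a| * u)
  rw [mul_div_cancel_left₀ _ ha'.ne'] at h
  exact h.symm.trans_le (scaledTail_le_weakQuasinorm _ (mul_pos ha' hu))

lemma scaledTail_le_of_setLIntegral_le [IsFiniteMeasure μ] (hp : 0 < p) {g : α → ℝ}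
    (hg : Measurable g) (hg0 : ∀ x, 0 ≤ g x) {ε δ : ℝ≥0∞}
    (hoc : ∀ A, MeasurableSet A → 0 < μ A → μ A < δ →
      μ A ^ (1 / p - 1) * ∫⁻ x in A, ENNReal.ofReal (g x) ∂μ ≤ ε)
    {t : ℝ} (ht : μ {x | t < |g x|} < δ) :
    scaledTail μ p g t ≤ ε := by
  set A := {x | t < |g x|}
  have hA : MeasurableSet A := measurableSet_lt measurable_const hg.abs
  rcases eq_or_ne (μ A) 0 with h0 | h0
  · simp [scaledTail, A, h0, hp]
  have hcheb : ENNReal.ofReal t * μ A ≤ ∫⁻ x in A, ENNReal.ofReal (g x) ∂μ := by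
    rw [← setLIntegral_const]
    refine setLIntegral_mono' hA fun x hx => ENNReal.ofReal_le_ofReal ?_
    exact (abs_of_nonneg (hg0 x) ▸ hx : t < g x).le
  have hsplit : μ A ^ (1 / p) = μ A ^ (1 / p - 1) * μ A := by
    have h := ENNReal.rpow_add (1 / p - 1) 1 h0 (measure_ne_top μ A)
    rwa [sub_add_cancel, ENNReal.rpow_one] at h
  calc scaledTail μ p g t = μ A ^ (1 / p - 1) * (ENNReal.ofReal t * μ A) := by
        rw [scaledTail, hsplit]; ring
    _ ≤ μ A ^ (1 / p - 1) * ∫⁻ x in A, ENNReal.ofReal (g x) ∂μ := by gcongr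
    _ ≤ ε := hoc A hA (pos_iff_ne_zero.2 h0) ht

lemma scaledTail_mul_le_or (hp : 0 < p) {g h : α → ℝ} {c d : ℝ≥0∞}
    (hgh : ∀ u, scaledTail μ p g u ≤ c ∨ μ (support h) ≤ μ {x | u < |g x|} * d ^ p)
    (a b : ℝ) {t : ℝ} (ht : 0 < t) :
    scaledTail μ p (fun x => a * g x) t ≤ ENNReal.ofReal |a| * c ∨
      scaledTail μ p (fun x => b * h x) t ≤ scaledTail μ p (fun x => a * g x) t * d := by
  rcases eq_or_ne a 0 with rfl | ha
  · simp [scaledTail_zero hp ht]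
  rcases hgh (t / |a|) with hg | hh
  · left
    rw [scaledTail_const_mul ha]
    gcongr
  right
  have hlevel : μ {x | t < |b * h x|} ≤ μ {x | t < |a * g x|} * d ^ p := by
    rw [setOf_lt_abs_const_mul ha]
    refine (measure_mono fun x hx => ?_).trans hh
    intro hx0
    simp only [Set.mem_ofPred_eq, hx0, mul_zero, abs_zero] at hx
    exact ht.not_gt hx
  calc scaledTail μ p (fun x => b * h x) t
      ≤ ENNReal.ofReal t * (μ {x | t < |a * g x|} * d ^ p) ^ (1 / p) := by
        unfold scaledTail; gcongr
    _ = scaledTail μ p (fun x => a * g x) t * d := by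
        rw [ENNReal.mul_rpow_of_nonneg _ _ (by positivity), one_div, ENNReal.rpow_rpow_inv hp.ne',
          scaledTail, one_div, mul_assoc]

end WeakQuasinorm

-- The hypothesis leaves at most one index with `A * c k < x k`.
lemma Finset.sum_le_mul_one_add_sum_of_lt {ι : Type*} [LinearOrder ι] {s : Finset ι}
    {x c : ι → ℝ≥0∞} {A : ℝ≥0∞} (hx : ∀ k ∈ s, x k ≤ A)
    (hxc : ∀ k ∈ s, ∀ j ∈ s, k < j → x k ≤ A * c k ∨ x j ≤ A * c j) :
    ∑ k ∈ s, x k ≤ A * (1 + ∑ k ∈ s, c k) := by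
  classical
  have hbad : (s.filter fun k => ¬ x k ≤ A * c k).card ≤ 1 := by
    refine Finset.card_le_one.2 fun k hk j hj => ?_
    simp only [Finset.mem_filter] at hk hj
    by_contra hne
    rcases lt_or_gt_of_ne hne with h | h
    · exact (hxc k hk.1 j hj.1 h).elim hk.2 hj.2
    · exact (hxc j hj.1 k hk.1 h).elim hj.2 hk.2
  rw [← Finset.sum_filter_add_sum_filter_not s fun k => x k ≤ A * c k]
  calc ∑ k ∈ s with x k ≤ A * c k, x k + ∑ k ∈ s with ¬ x k ≤ A * c k, x k
      ≤ ∑ k ∈ s, A * c k + (s.filter fun k => ¬ x k ≤ A * c k).card • A := by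
        gcongr
        · exact (Finset.sum_le_sum fun k hk => (Finset.mem_filter.1 hk).2).trans
            (Finset.sum_le_sum_of_subset (Finset.filter_subset _ s))
        · exact Finset.sum_le_card_nsmul _ _ _ fun k hk => hx k (Finset.mem_filter.1 hk).1
    _ ≤ ∑ k ∈ s, A * c k + 1 • A := by gcongr
    _ = A * (1 + ∑ k ∈ s, c k) := by rw [← Finset.mul_sum, one_nsmul]; ring

section DisjointSupports

variable {α ι : Type*} [MeasurableSpace α] {μ : Measure α} {p : ℝ} {g : ι → α → ℝ}

lemma ofReal_abs_mul_weakQuasinorm_le_sum (hp : 0 ≤ p)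
    (hdisj : Pairwise (Disjoint on fun k => support (g k))) {s : Finset ι} (a : ι → ℝ)
    {k : ι} (hk : k ∈ s) :
    ENNReal.ofReal |a k| * weakQuasinorm μ p (g k) ≤
      weakQuasinorm μ p (fun x => ∑ j ∈ s, a j * g j x) :=
  (ofReal_abs_mul_weakQuasinorm_le (a k) (g k)).trans
    (weakQuasinorm_mono hp (abs_mul_le_abs_sum_mul hdisj a hk))

lemma scaledTail_sum_mul_le (hp : 1 ≤ p) (hdisj : Pairwise (Disjoint on fun k => support (g k)))
    (s : Finset ι) (a : ι → ℝ) {t : ℝ} (ht : 0 ≤ t) :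
    scaledTail μ p (fun x => ∑ k ∈ s, a k * g k x) t ≤
      ∑ k ∈ s, scaledTail μ p (fun x => a k * g k x) t := by
  have hr : 0 < 1 / p := one_div_pos.2 (zero_lt_one.trans_le hp)
  have hr1 : 1 / p ≤ 1 := (div_le_one (zero_lt_one.trans_le hp)).2 hp
  calc scaledTail μ p (fun x => ∑ k ∈ s, a k * g k x) t
      ≤ ENNReal.ofReal t * (∑ k ∈ s, μ {x | t < |a k * g k x|}) ^ (1 / p) := by
        unfold scaledTail
        gcongr
        exact (measure_mono (setOf_lt_abs_sum_mul_subset hdisj s a ht)).trans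
          (measure_biUnion_finset_le _ _)
    _ ≤ ENNReal.ofReal t * ∑ k ∈ s, μ {x | t < |a k * g k x|} ^ (1 / p) := by
        gcongr
        exact Finset.le_sum_of_subadditive (· ^ (1 / p)) (by simp [zero_lt_one.trans_le hp])
          (fun x y => ENNReal.rpow_add_le_add_rpow x y hr.le hr1) _ _
    _ = ∑ k ∈ s, scaledTail μ p (fun x => a k * g k x) t := Finset.mul_sum _ _ _

lemma weakQuasinorm_sum_mul_le [LinearOrder ι] (hp : 1 ≤ p)
    (hdisj : Pairwise (Disjoint on fun k => support (g k)))
    (hnorm : ∀ k, weakQuasinorm μ p (g k) ≤ 1) {c : ι → ℝ≥0∞}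
    (hgc : ∀ k j, k < j → ∀ u,
      scaledTail μ p (g k) u ≤ c k ∨ μ (support (g j)) ≤ μ {x | u < |g k x|} * c j ^ p)
    (s : Finset ι) (a : ι → ℝ) {A : ℝ} (hA : ∀ k ∈ s, |a k| ≤ A) :
    weakQuasinorm μ p (fun x => ∑ k ∈ s, a k * g k x) ≤
      ENNReal.ofReal A * (1 + ∑ k ∈ s, c k) := by
  have hp0 : 0 < p := zero_lt_one.trans_le hp
  refine weakQuasinorm_le_iff.2 fun t ht => (scaledTail_sum_mul_le hp hdisj s a ht.le).trans ?_
  have hterm : ∀ k ∈ s, scaledTail μ p (fun x => a k * g k x) t ≤ ENNReal.ofReal A :=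
    fun k hk => calc
      _ ≤ ENNReal.ofReal |a k| * weakQuasinorm μ p (g k) := scaledTail_const_mul_le hp0 _ _ ht
      _ ≤ ENNReal.ofReal A * 1 := by gcongr; exacts [hA k hk, hnorm k]
      _ = ENNReal.ofReal A := mul_one _
  refine Finset.sum_le_mul_one_add_sum_of_lt hterm fun k hk j _ hkj => ?_
  refine (scaledTail_mul_le_or hp0 (hgc k j hkj) (a k) (a j) ht).imp
    (fun h => h.trans ?_) fun h => h.trans ?_
  · gcongr
    exact hA k hk
  · gcongr
    exact hterm k hk

end DisjointSupports

section Subsequence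

variable {α : Type*} [MeasurableSpace α] {μ : Measure α} {p : ℝ}

lemma tendsto_measure_support_atTop_zero [IsFiniteMeasure μ] {f : ℕ → α → ℝ}
    (hf : ∀ n, Measurable (f n)) (hdisj : Pairwise (Disjoint on fun n => support (f n))) :
    Tendsto (fun n => μ (support (f n))) atTop (𝓝 0) := by
  refine ENNReal.tendsto_atTop_zero_of_tsum_ne_top ?_
  rw [← measure_iUnion hdisj fun n => measurableSet_support (hf n)]
  exact measure_ne_top μ _

lemma exists_subseq_scaledTail_le_or_measure_support_le {f : ℕ → α → ℝ}
    (hsupp : Tendsto (fun n => μ (support (f n))) atTop (𝓝 0))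
    (htail : ∀ n, ∀ ε > (0 : ℝ), ∃ δ > (0 : ℝ), ∀ t,
      μ {x | t < |f n x|} < ENNReal.ofReal δ → scaledTail μ p (f n) t ≤ ENNReal.ofReal ε) :
    ∃ nk : ℕ → ℕ, StrictMono nk ∧ ∃ c : ℕ → ℝ≥0∞, ∑' k, c k ≤ 2 ∧
      ∀ k j, k < j → ∀ t, scaledTail μ p (f (nk k)) t ≤ c k ∨
        μ (support (f (nk j))) ≤ μ {x | t < |f (nk k) x|} * c j ^ p := by
  set w : ℕ → ℝ≥0∞ := fun i => ENNReal.ofReal ((1 / 2) ^ i)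
  -- Terms are chosen as pairs `(i, n)` giving `f n` the weight `w i`: fixing `i` before `n` lets
  -- the support of `f n` be made small relative to `w i ^ p`.
  let R : ℕ × ℕ → ℕ × ℕ → Prop := fun x y => x.1 < y.1 ∧ x.2 < y.2 ∧
    ∀ t, scaledTail μ p (f x.2) t ≤ w x.1 ∨ μ (support (f y.2)) ≤ μ {z | t < |f x.2 z|} * w y.1 ^ p
  have hstep : ∀ S : Finset (ℕ × ℕ), ∃ y, ∀ x ∈ S, R x y := by
    intro S
    set i := S.sup Prod.fst + 1
    have hwi : 0 < w i ^ p := ENNReal.rpow_pos (ENNReal.ofReal_pos.2 (by positivity))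
      ENNReal.ofReal_ne_top
    have hev : ∀ᶠ n in atTop, ∀ x ∈ S, R x (i, n) := by
      refine (eventually_all_finset S).2 fun x hx => ?_
      obtain ⟨δ, hδ, hδtail⟩ := htail x.2 ((1 / 2) ^ x.1) (by positivity)
      filter_upwards [eventually_gt_atTop x.2,
        hsupp.eventually_lt_const (ENNReal.mul_pos (ENNReal.ofReal_pos.2 hδ).ne' hwi.ne')]
        with n hn hsmall
      refine ⟨Nat.lt_succ_of_le (S.le_sup (f := Prod.fst) hx), hn, fun t => ?_⟩
      by_cases ht : μ {z | t < |f x.2 z|} < ENNReal.ofReal δ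
      · exact .inl (hδtail t ht)
      · exact .inr (hsmall.le.trans (by gcongr; exact not_lt.1 ht))
    obtain ⟨n, hn⟩ := hev.exists
    exact ⟨(i, n), hn⟩
  obtain ⟨y, -, hy⟩ := exists_seq_of_forall_finset_exists (fun _ => True) R
    fun S _ => (hstep S).imp fun _ h => ⟨trivial, h⟩
  refine ⟨fun k => (y k).2, fun k j h => (hy k j h).2.1, fun k => w (y k).1, ?_,
    fun k j h => (hy k j h).2.2⟩
  calc ∑' k, w (y k).1 ≤ ∑' i, w i :=
        ENNReal.tsum_comp_le_tsum_of_injective (StrictMono.injective fun k j h => (hy k j h).1) w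
    _ = 2 := by
        rw [← ENNReal.ofReal_tsum_of_nonneg (fun i => by positivity) summable_geometric_two,
          tsum_geometric_two, ENNReal.ofReal_ofNat]

end Subsequence

instance : IsProbabilityMeasure lebOn01 :=
  ⟨by simp [lebOn01, Real.volume_Icc]⟩

/-- A normalized disjoint positive sequence in the order-continuous
part of weak-`L_p[0,1]` has a subsequence equivalent to the unit vector basis of `c₀`. -/
theorem disjoint_sequence_c0_subsequence
    (p : ℝ) (hp : 1 < p)
    (f : ℕ → ℝ → ℝ) (hmeas : ∀ k, Measurable (f k)) (hpos : ∀ k x, 0 ≤ f k x)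
    (hdisj : ∀ k l, k ≠ l → Disjoint (Function.support (f k)) (Function.support (f l)))
    (hnorm : ∀ k, weakQuasinorm lebOn01 p (f k) = 1)
    (hoc : ∀ k, ∀ ε > (0 : ℝ), ∃ δ > (0 : ℝ), ∀ A : Set ℝ, MeasurableSet A →
      0 < lebOn01 A → lebOn01 A < ENNReal.ofReal δ →
      lebOn01 A ^ (1 / p - 1) * ∫⁻ x in A, ENNReal.ofReal (f k x) ∂lebOn01 ≤
        ENNReal.ofReal ε) :
    ∃ nk : ℕ → ℕ, StrictMono nk ∧ ∃ C : ℝ, 1 ≤ C ∧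
      ∀ (s : Finset ℕ) (hs : s.Nonempty) (a : ℕ → ℝ),
        ENNReal.ofReal (s.sup' hs fun k => |a k|) ≤
            weakQuasinorm lebOn01 p (fun x => ∑ k ∈ s, a k * f (nk k) x) ∧
          weakQuasinorm lebOn01 p (fun x => ∑ k ∈ s, a k * f (nk k) x) ≤
            ENNReal.ofReal (C * s.sup' hs fun k => |a k|) := by
  have hp0 : 0 < p := zero_lt_one.trans hp
  have hdisj' : Pairwise (Disjoint on fun n => support (f n)) := hdisj
  obtain ⟨nk, hnk, c, hc, hgc⟩ := exists_subseq_scaledTail_le_or_measure_support_le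
    (tendsto_measure_support_atTop_zero hmeas hdisj') fun n ε hε =>
      (hoc n ε hε).imp fun _ ⟨hδ, hA⟩ =>
        ⟨hδ, fun _ ht => scaledTail_le_of_setLIntegral_le hp0 (hmeas n) (hpos n) hA ht⟩
  have hdisj_nk := hdisj'.comp_of_injective hnk.injective
  refine ⟨nk, hnk, 3, by norm_num, fun s hs a => ⟨?_, ?_⟩⟩
  · obtain ⟨k, hk, hka⟩ := s.exists_mem_eq_sup' hs fun k => |a k|
    have h := ofReal_abs_mul_weakQuasinorm_le_sum (μ := lebOn01) hp0.le hdisj_nk a hk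
    rwa [hnorm, mul_one, ← hka] at h
  · calc _ ≤ ENNReal.ofReal (s.sup' hs fun k => |a k|) * (1 + ∑ k ∈ s, c k) :=
          weakQuasinorm_sum_mul_le hp.le hdisj_nk (fun k => (hnorm _).le) hgc s a
            fun k hk => s.le_sup' (fun k => |a k|) hk
      _ ≤ ENNReal.ofReal (s.sup' hs fun k => |a k|) * 3 := by
          gcongr
          calc 1 + ∑ k ∈ s, c k ≤ 1 + 2 := by gcongr; exact (ENNReal.sum_le_tsum s).trans hc
            _ = 3 := by norm_num
      _ = _ := by rw [ENNReal.ofReal_mul (by norm_num), mul_comm, ENNReal.ofReal_ofNat]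
end
end

section
/- Let 1 < p < ∞ and p* = p/(p−1), and define α_k = (k+1)^{1/p*} − k^{1/p*} for integers k ≥ 0. Then Σ_{k=0}^{n−1} α_k^p → ∞ as n → ∞; that is, the series Σ_{k=0}^∞ ((k+1)^{1/p*} − k^{1/p*})^p diverges. -/
/-! With `s = 1/p* = 1 - 1/p`, concavity of `t ↦ t ^ s` bounds each increment from below by the
derivative at the right endpoint: `(k+1)^s - k^s ≥ s (k+1)^(s-1)`. Since `(s - 1) p = -1`, the `p`-th
power of this bound is `s^p / (k+1)`, so the series dominates a multiple of the harmonic series. -/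

open Real

-- Bernoulli's inequality `(1 + t)^s ≤ 1 + s t` at `t = x / y - 1`, multiplied by `y ^ s`.
theorem mul_rpow_sub_one_mul_sub_le_rpow_sub_rpow {s x y : ℝ} (hs₀ : 0 ≤ s) (hs₁ : s ≤ 1)
    (hx : 0 ≤ x) (hy : 0 < y) :
    s * y ^ (s - 1) * (y - x) ≤ y ^ s - x ^ s := by
  have bernoulli := rpow_one_add_le_one_add_mul_self (s := x / y - 1)
    (by linarith [div_nonneg hx hy.le]) hs₀ hs₁
  rw [add_sub_cancel, div_rpow hx hy.le, div_le_iff₀ (by positivity)] at bernoulli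
  have : s * y ^ (s - 1) * (y - x) = s * y ^ s * (1 - x / y) := by
    rw [rpow_sub_one hy.ne']
    field_simp
  rw [this]
  nlinarith

theorem one_sub_inv_rpow_div_le_rpow_sub_rpow_rpow {p x : ℝ} (hp : 1 ≤ p) (hx : 0 ≤ x) :
    (1 - p⁻¹) ^ p / (x + 1) ≤ ((x + 1) ^ (1 - p⁻¹) - x ^ (1 - p⁻¹)) ^ p := by
  have hp₀ : 0 < p := by linarith
  have hs₀ : 0 ≤ 1 - p⁻¹ := sub_nonneg.mpr (inv_le_one_of_one_le₀ hp)
  have hx₁ : 0 < x + 1 := by linarith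
  have increment := mul_rpow_sub_one_mul_sub_le_rpow_sub_rpow hs₀
    (sub_le_self _ (inv_nonneg.mpr hp₀.le)) hx hx₁
  rw [add_sub_cancel_left, mul_one] at increment
  calc (1 - p⁻¹) ^ p / (x + 1) = ((1 - p⁻¹) * (x + 1) ^ (1 - p⁻¹ - 1)) ^ p := by
        rw [mul_rpow hs₀ (by positivity), ← rpow_mul hx₁.le, sub_sub_cancel_left, neg_mul,
          inv_mul_cancel₀ hp₀.ne', rpow_neg_one, div_eq_mul_inv]
    _ ≤ _ := rpow_le_rpow (by positivity) increment hp₀.le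

/-- For `1 < p < ∞` and `p* = p/(p−1)`, the series
`∑ ((k+1)^{1/p*} − k^{1/p*})^p` diverges. -/
theorem sum_rpow_alpha_tendsto_atTop (p : ℝ) (hp : 1 < p) :
    Filter.Tendsto
      (fun n : ℕ => ∑ k ∈ Finset.range n,
        (((k : ℝ) + 1) ^ (1 / (p / (p - 1))) - (k : ℝ) ^ (1 / (p / (p - 1)))) ^ p)
      Filter.atTop Filter.atTop := by
  have hq : 1 / (p / (p - 1)) = 1 - p⁻¹ := by
    field_simp
  have hc : 0 < (1 - p⁻¹) ^ p := rpow_pos_of_pos (sub_pos.mpr (inv_lt_one_of_one_lt₀ hp)) p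
  refine Filter.tendsto_atTop_mono (fun n => ?_)
    (tendsto_sum_range_one_div_nat_succ_atTop.const_mul_atTop hc)
  rw [Finset.mul_sum, hq]
  refine Finset.sum_le_sum fun k _ => ?_
  rw [mul_one_div]
  exact one_sub_inv_rpow_div_le_rpow_sub_rpow_rpow hp.le k.cast_nonneg
end

section
/- Let 1 < p < ∞ and p* = p/(p−1). Define N : ℝ³ → ℝ by N(b₁, b₂, b₃) = max{ (|b_i|^{p*} + (|b_j| + |b_k|)^{p*})^{1/p*} : {i, j, k} = {1, 2, 3} }. Then N is a norm on ℝ³ with N(e_i) = 1 for each coordinate unit vector e_i, and N satisfies a lower p*-estimate with constant 1: for every b ∈ ℝ³ and all disjoint nonempty subsets I, J ⊆ {1, 2, 3}, N(b·1_I)^{p*} + N(b·1_J)^{p*} ≤ N(b)^{p*}, where b·1_I denotes the vector whose i-th coordinate is b_i if i ∈ I and 0 otherwise. -/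
noncomputable section

/-- The norm on `ℝ³` from Example `finite dim BL`:
`N(b) = max over {i,j,k} = {1,2,3} of (|b_i|^{p*} + (|b_j| + |b_k|)^{p*})^{1/p*}`. -/
def exNorm (ps : ℝ) (b : Fin 3 → ℝ) : ℝ :=
  max ((|b 0| ^ ps + (|b 1| + |b 2|) ^ ps) ^ (1 / ps))
    (max ((|b 1| ^ ps + (|b 0| + |b 2|) ^ ps) ^ (1 / ps))
      ((|b 2| ^ ps + (|b 0| + |b 1|) ^ ps) ^ (1 / ps)))

namespace ExNormAux

variable {ps : ℝ}

lemma roundtrip (hps : 1 < ps) {S : ℝ} (hS : 0 ≤ S) : (S ^ (1/ps)) ^ ps = S := by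
  rw [← Real.rpow_mul hS, one_div, inv_mul_cancel₀ (by positivity), Real.rpow_one]

lemma roundtrip2 (hps : 1 < ps) {S : ℝ} (hS : 0 ≤ S) : (S ^ ps) ^ (1/ps) = S := by
  rw [← Real.rpow_mul hS, one_div, mul_inv_cancel₀ (by positivity), Real.rpow_one]

lemma superadd (hps : 1 < ps) {x y : ℝ} (hx : 0 ≤ x) (hy : 0 ≤ y) :
    x ^ ps + y ^ ps ≤ (x + y) ^ ps := by
  have := NNReal.add_rpow_le_rpow_add ⟨x, hx⟩ ⟨y, hy⟩ hps.le
  exact_mod_cast this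

lemma croot (hps : 1 < ps) {x y : ℝ} (hx : 0 ≤ x) (hy : 0 ≤ y) :
    (x ^ ps + y ^ ps) ^ (1/ps) ≤ x + y := by
  calc (x ^ ps + y ^ ps) ^ (1/ps) ≤ ((x + y) ^ ps) ^ (1/ps) :=
        Real.rpow_le_rpow (by positivity) (superadd hps hx hy) (by positivity)
    _ = x + y := roundtrip2 hps (by positivity)

lemma exNorm_p01 (hps : 1 < ps) (c : Fin 3 → ℝ) (h2 : c 2 = 0) :
    exNorm ps c = |c 0| + |c 1| := by
  unfold exNorm
  rw [h2, abs_zero, Real.zero_rpow (by positivity), add_zero, add_zero, zero_add]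
  rw [roundtrip2 hps (by positivity : (0:ℝ) ≤ |c 0| + |c 1|)]
  have T1 : (|c 0| ^ ps + |c 1| ^ ps) ^ (1/ps) ≤ |c 0| + |c 1| :=
    croot hps (abs_nonneg _) (abs_nonneg _)
  have T2 : (|c 1| ^ ps + |c 0| ^ ps) ^ (1/ps) ≤ |c 0| + |c 1| := by
    rw [add_comm (|c 1| ^ ps)]; exact T1
  exact le_antisymm (max_le T1 (max_le T2 le_rfl))
    ((le_max_right _ _).trans (le_max_right _ _))

lemma exNorm_p02 (hps : 1 < ps) (c : Fin 3 → ℝ) (h1 : c 1 = 0) :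
    exNorm ps c = |c 0| + |c 2| := by
  unfold exNorm
  rw [h1, abs_zero, Real.zero_rpow (by positivity), add_zero, zero_add, zero_add]
  rw [roundtrip2 hps (by positivity : (0:ℝ) ≤ |c 0| + |c 2|)]
  have T1 : (|c 0| ^ ps + |c 2| ^ ps) ^ (1/ps) ≤ |c 0| + |c 2| :=
    croot hps (abs_nonneg _) (abs_nonneg _)
  have T3 : (|c 2| ^ ps + |c 0| ^ ps) ^ (1/ps) ≤ |c 0| + |c 2| := by
    rw [add_comm (|c 2| ^ ps)]; exact T1
  exact le_antisymm (max_le T1 (max_le le_rfl T3))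
    ((le_max_left _ _).trans (le_max_right _ _))

lemma exNorm_p12 (hps : 1 < ps) (c : Fin 3 → ℝ) (h0 : c 0 = 0) :
    exNorm ps c = |c 1| + |c 2| := by
  unfold exNorm
  rw [h0, abs_zero, Real.zero_rpow (by positivity), zero_add, zero_add, zero_add]
  rw [roundtrip2 hps (by positivity : (0:ℝ) ≤ |c 1| + |c 2|)]
  have T2 : (|c 1| ^ ps + |c 2| ^ ps) ^ (1/ps) ≤ |c 1| + |c 2| :=
    croot hps (abs_nonneg _) (abs_nonneg _)
  have T3 : (|c 2| ^ ps + |c 1| ^ ps) ^ (1/ps) ≤ |c 1| + |c 2| := by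
    rw [add_comm (|c 2| ^ ps)]; exact T2
  exact le_antisymm (max_le le_rfl (max_le T2 T3)) (le_max_left _ _)

lemma hk0 (hps : 1 < ps) (b : Fin 3 → ℝ) :
    |b 0| ^ ps + (|b 1| + |b 2|) ^ ps ≤ exNorm ps b ^ ps := by
  have h : (|b 0| ^ ps + (|b 1| + |b 2|) ^ ps) ^ (1/ps) ≤ exNorm ps b := le_max_left _ _
  calc |b 0| ^ ps + (|b 1| + |b 2|) ^ ps
      = ((|b 0| ^ ps + (|b 1| + |b 2|) ^ ps) ^ (1/ps)) ^ ps :=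
        (roundtrip hps (by positivity)).symm
    _ ≤ exNorm ps b ^ ps := Real.rpow_le_rpow (by positivity) h (by positivity)

lemma hk1 (hps : 1 < ps) (b : Fin 3 → ℝ) :
    |b 1| ^ ps + (|b 0| + |b 2|) ^ ps ≤ exNorm ps b ^ ps := by
  have h : (|b 1| ^ ps + (|b 0| + |b 2|) ^ ps) ^ (1/ps) ≤ exNorm ps b :=
    (le_max_left _ _).trans (le_max_right _ _)
  calc |b 1| ^ ps + (|b 0| + |b 2|) ^ ps
      = ((|b 1| ^ ps + (|b 0| + |b 2|) ^ ps) ^ (1/ps)) ^ ps :=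
        (roundtrip hps (by positivity)).symm
    _ ≤ exNorm ps b ^ ps := Real.rpow_le_rpow (by positivity) h (by positivity)

lemma hk2 (hps : 1 < ps) (b : Fin 3 → ℝ) :
    |b 2| ^ ps + (|b 0| + |b 1|) ^ ps ≤ exNorm ps b ^ ps := by
  have h : (|b 2| ^ ps + (|b 0| + |b 1|) ^ ps) ^ (1/ps) ≤ exNorm ps b :=
    (le_max_right _ _).trans (le_max_right _ _)
  calc |b 2| ^ ps + (|b 0| + |b 1|) ^ ps
      = ((|b 2| ^ ps + (|b 0| + |b 1|) ^ ps) ^ (1/ps)) ^ ps :=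
        (roundtrip hps (by positivity)).symm
    _ ≤ exNorm ps b ^ ps := Real.rpow_le_rpow (by positivity) h (by positivity)

lemma exNorm_nonneg (c : Fin 3 → ℝ) : 0 ≤ exNorm ps c := by
  unfold exNorm
  exact le_trans (Real.rpow_nonneg (by positivity) _) (le_max_left _ _)

lemma exNorm_le_sum (hps : 1 < ps) (c : Fin 3 → ℝ) :
    exNorm ps c ≤ |c 0| + |c 1| + |c 2| := by
  unfold exNorm
  refine max_le ?_ (max_le ?_ ?_)
  · calc (|c 0| ^ ps + (|c 1| + |c 2|) ^ ps) ^ (1/ps) ≤ |c 0| + (|c 1| + |c 2|) :=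
        croot hps (abs_nonneg _) (by positivity)
      _ = |c 0| + |c 1| + |c 2| := by ring
  · calc (|c 1| ^ ps + (|c 0| + |c 2|) ^ ps) ^ (1/ps) ≤ |c 1| + (|c 0| + |c 2|) :=
        croot hps (abs_nonneg _) (by positivity)
      _ = |c 0| + |c 1| + |c 2| := by ring
  · calc (|c 2| ^ ps + (|c 0| + |c 1|) ^ ps) ^ (1/ps) ≤ |c 2| + (|c 0| + |c 1|) :=
        croot hps (abs_nonneg _) (by positivity)
      _ = |c 0| + |c 1| + |c 2| := by ring

lemma exNorm_lower (hps : 1 < ps) (b : Fin 3 → ℝ) (I J : Finset (Fin 3))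
    (hd : Disjoint I J) (hI : I.Nonempty) (hJ : J.Nonempty) :
    exNorm ps (fun i => if i ∈ I then b i else 0) ^ ps +
      exNorm ps (fun i => if i ∈ J then b i else 0) ^ ps ≤ exNorm ps b ^ ps := by
  fin_cases I <;> fin_cases J <;>
  first
    | exact absurd hI (by decide)
    | exact absurd hJ (by decide)
    | exact absurd hd (by decide)
    | (refine le_trans (add_le_add
        (Real.rpow_le_rpow (exNorm_nonneg _) (exNorm_le_sum hps _) (by positivity))
        (Real.rpow_le_rpow (exNorm_nonneg _) (exNorm_le_sum hps _) (by positivity))) ?_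
       norm_num [Fin.ext_iff]
       linarith [hk0 hps b, hk1 hps b, hk2 hps b,
         superadd hps (abs_nonneg (b 0)) (abs_nonneg (b 1)),
         superadd hps (abs_nonneg (b 0)) (abs_nonneg (b 2)),
         superadd hps (abs_nonneg (b 1)) (abs_nonneg (b 2)),
         Real.rpow_nonneg (abs_nonneg (b 0)) ps,
         Real.rpow_nonneg (abs_nonneg (b 1)) ps,
         Real.rpow_nonneg (abs_nonneg (b 2)) ps])

lemma mink (hps : 1 < ps) {a b c d : ℝ} (ha : 0 ≤ a) (hb : 0 ≤ b) (hc : 0 ≤ c) (hd : 0 ≤ d) :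
    ((a + c) ^ ps + (b + d) ^ ps) ^ (1/ps) ≤
      (a ^ ps + b ^ ps) ^ (1/ps) + (c ^ ps + d ^ ps) ^ (1/ps) := by
  have := Real.Lp_add_le_of_nonneg (s := (Finset.univ : Finset (Fin 2)))
    (f := ![a, b]) (g := ![c, d]) hps.le (by intro i _; fin_cases i <;> simpa)
    (by intro i _; fin_cases i <;> simpa)
  simpa [Fin.sum_univ_two] using this

lemma f_mono (hps : 1 < ps) {a a' b b' : ℝ} (ha : 0 ≤ a) (hb : 0 ≤ b)
    (haa : a ≤ a') (hbb : b ≤ b') :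
    (a ^ ps + b ^ ps) ^ (1/ps) ≤ (a' ^ ps + b' ^ ps) ^ (1/ps) :=
  Real.rpow_le_rpow (by positivity)
    (add_le_add (Real.rpow_le_rpow ha haa (by positivity))
      (Real.rpow_le_rpow hb hbb (by positivity))) (by positivity)

lemma comp_tri (hps : 1 < ps) (x y z u v w : ℝ) :
    (|x + u| ^ ps + (|y + v| + |z + w|) ^ ps) ^ (1/ps) ≤
      (|x| ^ ps + (|y| + |z|) ^ ps) ^ (1/ps) + (|u| ^ ps + (|v| + |w|) ^ ps) ^ (1/ps) := by
  calc (|x + u| ^ ps + (|y + v| + |z + w|) ^ ps) ^ (1/ps)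
      ≤ ((|x| + |u|) ^ ps + ((|y| + |z|) + (|v| + |w|)) ^ ps) ^ (1/ps) := by
        apply f_mono hps (abs_nonneg _) (by positivity) (abs_add_le _ _)
        calc |y + v| + |z + w| ≤ (|y| + |v|) + (|z| + |w|) :=
              add_le_add (abs_add_le _ _) (abs_add_le _ _)
          _ = (|y| + |z|) + (|v| + |w|) := by ring
    _ ≤ _ := mink hps (abs_nonneg _) (by positivity) (abs_nonneg _) (by positivity)

lemma exNorm_add (hps : 1 < ps) (b c : Fin 3 → ℝ) :
    exNorm ps (b + c) ≤ exNorm ps b + exNorm ps c := by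
  unfold exNorm
  simp only [Pi.add_apply]
  refine max_le ?_ (max_le ?_ ?_)
  · exact (comp_tri hps _ _ _ _ _ _).trans
      (add_le_add (le_max_left _ _) (le_max_left _ _))
  · exact (comp_tri hps _ _ _ _ _ _).trans
      (add_le_add ((le_max_left _ _).trans (le_max_right _ _))
        ((le_max_left _ _).trans (le_max_right _ _)))
  · exact (comp_tri hps _ _ _ _ _ _).trans
      (add_le_add ((le_max_right _ _).trans (le_max_right _ _))
        ((le_max_right _ _).trans (le_max_right _ _)))

lemma comp_smul (hps : 1 < ps) (t x y z : ℝ) :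
    (|t * x| ^ ps + (|t * y| + |t * z|) ^ ps) ^ (1/ps) =
      |t| * (|x| ^ ps + (|y| + |z|) ^ ps) ^ (1/ps) := by
  rw [abs_mul, abs_mul, abs_mul, ← mul_add,
    Real.mul_rpow (abs_nonneg t) (abs_nonneg x),
    Real.mul_rpow (abs_nonneg t) (by positivity), ← mul_add,
    Real.mul_rpow (by positivity) (by positivity), roundtrip2 hps (abs_nonneg t)]

lemma exNorm_smul (hps : 1 < ps) (t : ℝ) (b : Fin 3 → ℝ) :
    exNorm ps (t • b) = |t| * exNorm ps b := by
  unfold exNorm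
  simp only [Pi.smul_apply, smul_eq_mul, comp_smul hps]
  rw [mul_max_of_nonneg _ _ (abs_nonneg t), mul_max_of_nonneg _ _ (abs_nonneg t)]

lemma exNorm_def (hps : 1 < ps) (b : Fin 3 → ℝ) (hb : exNorm ps b = 0) : b = 0 := by
  have hle : (|b 0| ^ ps + (|b 1| + |b 2|) ^ ps) ^ (1/ps) ≤ 0 := by
    rw [← hb]; unfold exNorm; exact le_max_left _ _
  have h1 : (|b 0| ^ ps + (|b 1| + |b 2|) ^ ps) ^ (1/ps) = 0 :=
    le_antisymm hle (by positivity)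
  rw [Real.rpow_eq_zero (by positivity) (by positivity)] at h1
  have ha : |b 0| ^ ps = 0 := by
    nlinarith [Real.rpow_nonneg (abs_nonneg (b 0)) ps,
      Real.rpow_nonneg (show (0:ℝ) ≤ |b 1| + |b 2| by positivity) ps]
  have hb' : (|b 1| + |b 2|) ^ ps = 0 := by
    nlinarith [Real.rpow_nonneg (abs_nonneg (b 0)) ps,
      Real.rpow_nonneg (show (0:ℝ) ≤ |b 1| + |b 2| by positivity) ps]
  rw [Real.rpow_eq_zero (abs_nonneg _) (by positivity)] at ha
  rw [Real.rpow_eq_zero (by positivity) (by positivity)] at hb'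
  have e0 : b 0 = 0 := abs_eq_zero.mp ha
  have e1 : b 1 = 0 := by
    have := abs_nonneg (b 1); have := abs_nonneg (b 2)
    have : |b 1| = 0 := by linarith
    exact abs_eq_zero.mp this
  have e2 : b 2 = 0 := by
    have := abs_nonneg (b 1); have := abs_nonneg (b 2)
    have : |b 2| = 0 := by linarith
    exact abs_eq_zero.mp this
  funext i
  fin_cases i <;> simpa

lemma exNorm_single (hps : 1 < ps) (i : Fin 3) : exNorm ps (Pi.single i (1:ℝ)) = 1 := by
  fin_cases i
  · rw [exNorm_p01 hps _ (by simp [Pi.single_apply])]; simp [Pi.single_apply]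
  · rw [exNorm_p01 hps _ (by simp [Pi.single_apply])]; simp [Pi.single_apply]
  · rw [exNorm_p12 hps _ (by simp [Pi.single_apply])]; simp [Pi.single_apply]

end ExNormAux

/-- For `1 < p < ∞` and `p* = p/(p−1)`, the function `N = exNorm p*` is
a norm on `ℝ³`, normalized on the coordinate unit vectors, satisfying a lower
`p*`-estimate with constant 1. -/
theorem exNorm_is_norm_with_lower_estimate (p : ℝ) (hp : 1 < p) :
    -- triangle inequality
    (∀ b c : Fin 3 → ℝ, exNorm (p / (p - 1)) (b + c) ≤
      exNorm (p / (p - 1)) b + exNorm (p / (p - 1)) c) ∧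
    -- absolute homogeneity
    (∀ (t : ℝ) (b : Fin 3 → ℝ),
      exNorm (p / (p - 1)) (t • b) = |t| * exNorm (p / (p - 1)) b) ∧
    -- definiteness
    (∀ b : Fin 3 → ℝ, exNorm (p / (p - 1)) b = 0 → b = 0) ∧
    -- normalization on unit vectors
    (∀ i : Fin 3, exNorm (p / (p - 1)) (Pi.single i 1) = 1) ∧
    -- lower `p*`-estimate with constant 1
    (∀ (b : Fin 3 → ℝ) (I J : Finset (Fin 3)), Disjoint I J → I.Nonempty → J.Nonempty →
      exNorm (p / (p - 1)) (fun i => if i ∈ I then b i else 0) ^ (p / (p - 1)) +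
          exNorm (p / (p - 1)) (fun i => if i ∈ J then b i else 0) ^ (p / (p - 1)) ≤
        exNorm (p / (p - 1)) b ^ (p / (p - 1))) := by
  have h0 : (0:ℝ) < p - 1 := by linarith
  have hps : 1 < p / (p - 1) := by rw [lt_div_iff₀ h0]; linarith
  exact ⟨ExNormAux.exNorm_add hps, ExNormAux.exNorm_smul hps,
    ExNormAux.exNorm_def hps, ExNormAux.exNorm_single hps, ExNormAux.exNorm_lower hps⟩

end
end
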